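/- arXiv:1807.08700 — 4 statements merged into one kernel-verified Lean document; each statement's English description precedes it below -/
import Mathlib

section
/- For every n ≥ 1 there exist nonnegative integers γ_{n,i,j}, for 0 ≤ i ≤ ⌊(n−1)/2⌋ and 0 ≤ j ≤ ⌊(n−2i)/4⌋, such that P_n(p,q) = Σ_{i=0}^{⌊(n−1)/2⌋} Σ_{j=0}^{⌊(n−2i)/4⌋} γ_{n,i,j} p^i q^j (1+q)^{⌊n/2⌋−i−2j}, where P_n(p,q) = Σ_{π ∈ S_n} p^{cpk^o(π)} q^{cpk^e(π)}. In particular, for every i ≥ 0 the polynomial Σ_{π ∈ S_n, cpk^o(π)=i} q^{cpk^e(π)} is γ-positive with center (⌊n/2⌋−i)/2. -/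
open Finset MvPolynomial

/-- Number of odd cycle peaks of a permutation of `[n]` (the element `i : Fin n`
represents the value `i+1 ∈ {1,…,n}`). -/
def cpko (n : ℕ) (π : Equiv.Perm (Fin n)) : ℕ :=
  (Finset.univ.filter fun i : Fin n => π.symm i < i ∧ π i < i ∧ Odd ((i : ℕ) + 1)).card

/-- Number of even cycle peaks of a permutation of `[n]`. -/
def cpke (n : ℕ) (π : Equiv.Perm (Fin n)) : ℕ :=
  (Finset.univ.filter fun i : Fin n => π.symm i < i ∧ π i < i ∧ Even ((i : ℕ) + 1)).card

/-- `P n = P_n(p,q) = Σ_{π ∈ S_n} p^{cpk^o(π)} q^{cpk^e(π)}`, with `p = X 0`, `q = X 1`. -/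
noncomputable def P (n : ℕ) : MvPolynomial (Fin 2) ℤ :=
  ∑ π : Equiv.Perm (Fin n), X 0 ^ cpko n π * X 1 ^ cpke n π

def extP (n : ℕ) (σ : Equiv.Perm (Fin n)) : Equiv.Perm (Fin (n+1)) :=
  finSuccEquivLast.trans ((σ.optionCongr).trans finSuccEquivLast.symm)

lemma extP_castSucc (n : ℕ) (σ : Equiv.Perm (Fin n)) (i : Fin n) :
    extP n σ (Fin.castSucc i) = Fin.castSucc (σ i) := by simp [extP]

lemma extP_last (n : ℕ) (σ : Equiv.Perm (Fin n)) : extP n σ (Fin.last n) = Fin.last n := by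
  simp [extP]

lemma extP_symm (n : ℕ) (σ : Equiv.Perm (Fin n)) : (extP n σ).symm = extP n σ.symm := by
  ext x
  induction x using Fin.lastCases with
  | last => simp [extP]
  | cast i => simp [extP]

def ins (n : ℕ) (x : Equiv.Perm (Fin n) × Fin (n+1)) : Equiv.Perm (Fin (n+1)) :=
  extP n x.1 * Equiv.swap x.2 (Fin.last n)

lemma ins_apply_c (n : ℕ) (σ : Equiv.Perm (Fin n)) (c : Fin (n+1)) :
    ins n (σ, c) c = Fin.last n := by
  simp [ins, Equiv.swap_apply_left, extP_last]

lemma ins_symm_last (n : ℕ) (σ : Equiv.Perm (Fin n)) (c : Fin (n+1)) :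
    (ins n (σ, c)).symm (Fin.last n) = c := by
  rw [Equiv.symm_apply_eq, ins_apply_c]

lemma ins_bij (n : ℕ) : Function.Bijective (ins n) := by
  rw [Fintype.bijective_iff_injective_and_card]
  constructor
  · rintro ⟨σ, c⟩ ⟨τ, d⟩ h
    have hc : c = d := by
      have := congrArg (fun π => (Equiv.symm π) (Fin.last n)) h
      simpa [ins_symm_last] using this
    subst hc
    have hσ : σ = τ := by
      ext i
      have := congrArg (fun π : Equiv.Perm (Fin (n+1)) =>
        π (Equiv.swap c (Fin.last n) (Fin.castSucc i))) h
      simp only [ins, Equiv.Perm.mul_apply, Equiv.swap_apply_self, extP_castSucc] at this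
      exact congrArg Fin.val (Fin.castSucc_injective n this) ▸ rfl
    simp [hσ]
  · simp [Fintype.card_perm, Fintype.card_prod, Nat.factorial_succ, mul_comm]

-- apply lemmas for ins with c = castSucc j
lemma ins_apply_castSucc (n : ℕ) (σ : Equiv.Perm (Fin n)) (j i : Fin n) :
    ins n (σ, Fin.castSucc j) (Fin.castSucc i)
      = if i = j then Fin.last n else Fin.castSucc (σ i) := by
  rcases eq_or_ne i j with rfl | hij
  · simpa using ins_apply_c n σ (Fin.castSucc i)
  · rw [if_neg hij]
    have : Equiv.swap (Fin.castSucc j) (Fin.last n) (Fin.castSucc i) = Fin.castSucc i :=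
      Equiv.swap_apply_of_ne_of_ne (by simpa [Fin.castSucc_inj] using hij)
        (Fin.castSucc_lt_last i).ne
    simp [ins, this, extP_castSucc]

lemma ins_apply_last (n : ℕ) (σ : Equiv.Perm (Fin n)) (j : Fin n) :
    ins n (σ, Fin.castSucc j) (Fin.last n) = Fin.castSucc (σ j) := by
  simp [ins, Equiv.swap_apply_right, extP_castSucc]

lemma ins_symm_castSucc (n : ℕ) (σ : Equiv.Perm (Fin n)) (j i : Fin n) :
    (ins n (σ, Fin.castSucc j)).symm (Fin.castSucc i)
      = if σ.symm i = j then Fin.last n else Fin.castSucc (σ.symm i) := by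
  rw [Equiv.symm_apply_eq]
  rcases eq_or_ne (σ.symm i) j with hj | hj
  · rw [if_pos hj, ins_apply_last, ← hj]
    simp
  · rw [if_neg hj, ins_apply_castSucc, if_neg hj]
    simp

lemma ins_c_last (n : ℕ) (σ : Equiv.Perm (Fin n)) : ins n (σ, Fin.last n) = extP n σ := by
  simp [ins, Equiv.swap_self]
  rfl

section cnt
variable (par : ℕ → Prop) [DecidablePred par]

def cnt (m : ℕ) (π : Equiv.Perm (Fin m)) : ℕ :=
  (Finset.univ.filter fun i : Fin m => π.symm i < i ∧ π i < i ∧ par ((i : ℕ) + 1)).card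

lemma cpko_filt (n : ℕ) (σ : Equiv.Perm (Fin n)) :
    (Finset.univ.filter fun i : Fin n => σ.symm i < i ∧ σ i < i ∧ Odd ((i:ℕ)+1)).card
      = cpko n σ := rfl
lemma cpke_filt (n : ℕ) (σ : Equiv.Perm (Fin n)) :
    (Finset.univ.filter fun i : Fin n => σ.symm i < i ∧ σ i < i ∧ Even ((i:ℕ)+1)).card
      = cpke n σ := rfl
lemma cpko_eq_cnt (m : ℕ) (π : Equiv.Perm (Fin m)) : cpko m π = cnt Odd m π := rfl
lemma cpke_eq_cnt (m : ℕ) (π : Equiv.Perm (Fin m)) : cpke m π = cnt Even m π := rfl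

lemma cnt_extP (n : ℕ) (σ : Equiv.Perm (Fin n)) : cnt par (n+1) (extP n σ) = cnt par n σ := by
  unfold cnt
  rw [Finset.card_filter, Finset.card_filter, Fin.sum_univ_castSucc]
  have hlast : ¬ ((extP n σ).symm (Fin.last n) < Fin.last n ∧ extP n σ (Fin.last n) < Fin.last n
      ∧ par ((Fin.last n : ℕ) + 1)) := by
    rw [extP_symm, extP_last]
    simp
  rw [if_neg hlast, add_zero]
  apply Finset.sum_congr rfl
  intro i _
  congr 1
  rw [extP_symm, extP_castSucc, extP_castSucc]
  simp [Fin.castSucc_lt_castSucc_iff]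

lemma cnt_ins (n : ℕ) (σ : Equiv.Perm (Fin n)) (j : Fin n) :
    cnt par (n+1) (ins n (σ, Fin.castSucc j))
      = (Finset.univ.filter fun i : Fin n =>
          (σ.symm i < i ∧ σ i < i ∧ par ((i : ℕ) + 1)) ∧ i ≠ j ∧ i ≠ σ j).card
        + (if par (n+1) then 1 else 0) := by
  unfold cnt
  rw [Finset.card_filter, Finset.card_filter, Fin.sum_univ_castSucc]
  congr 1
  · apply Finset.sum_congr rfl
    intro i _
    congr 1
    rw [ins_symm_castSucc, ins_apply_castSucc]
    rcases eq_or_ne (σ.symm i) j with hj | hj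
    · have hij : i = σ j := by rw [← hj]; simp
      simp only [if_pos hj]
      simp [Fin.not_lt.mpr (Fin.le_last _), hij]
    · rcases eq_or_ne i j with hij | hij
      · simp [if_pos hij, Fin.not_lt.mpr (Fin.le_last _), hij]
      · have hisj : i ≠ σ j := fun h => hj (by rw [h]; simp)
        rw [if_neg hj, if_neg hij]
        simp [Fin.castSucc_lt_castSucc_iff, hij, hisj]
  · have h1 : (ins n (σ, Fin.castSucc j)).symm (Fin.last n) < Fin.last n := by
      rw [ins_symm_last]; exact Fin.castSucc_lt_last j
    have h2 : ins n (σ, Fin.castSucc j) (Fin.last n) < Fin.last n := by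
      rw [ins_apply_last]; exact Fin.castSucc_lt_last _
    simp [h1, h2, Fin.val_last]

end cnt

noncomputable def Lop (n : ℕ) (f : MvPolynomial (Fin 2) ℤ) : MvPolynomial (Fin 2) ℤ :=
  f + (if Odd (n+1) then X 0 else X 1) *
    (n • f + 2 • pderiv 0 f + 2 • pderiv 1 f - 2 • (X 0 * pderiv 0 f) - 2 • (X 1 * pderiv 1 f))

lemma pd0_ne : (pderiv 0 : Derivation ℤ (MvPolynomial (Fin 2) ℤ) _) (X 1) = 0 :=
  pderiv_X_of_ne (by decide)
lemma pd1_ne : (pderiv 1 : Derivation ℤ (MvPolynomial (Fin 2) ℤ) _) (X 0) = 0 :=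
  pderiv_X_of_ne (by decide)

lemma notpk (n : ℕ) (σ : Equiv.Perm (Fin n)) (i : Fin n) (h : σ.symm i < i ∧ σ i < i) :
    ¬ (σ.symm (σ i) < σ i ∧ σ (σ i) < σ i) := by
  rintro ⟨h1, -⟩
  rw [Equiv.symm_apply_apply] at h1
  exact absurd h.2 (Fin.lt_asymm h1)

lemma notpk' (n : ℕ) (σ : Equiv.Perm (Fin n)) (j : Fin n)
    (h : σ.symm (σ j) < σ j ∧ σ (σ j) < σ j) : ¬ (σ.symm j < j ∧ σ j < j) := by
  rintro ⟨-, h2⟩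
  have h1 := h.1
  rw [Equiv.symm_apply_apply] at h1
  exact absurd h2 (Fin.lt_asymm h1)

section Fcard
variable (par : ℕ → Prop) [DecidablePred par]

lemma F_card (n : ℕ) (σ : Equiv.Perm (Fin n)) (j : Fin n) :
    (Finset.univ.filter fun i : Fin n =>
        (σ.symm i < i ∧ σ i < i ∧ par ((i : ℕ) + 1)) ∧ i ≠ j ∧ i ≠ σ j).card =
      (Finset.univ.filter fun i : Fin n => σ.symm i < i ∧ σ i < i ∧ par ((i : ℕ) + 1)).card
        - (if σ.symm j < j ∧ σ j < j ∧ par ((j : ℕ) + 1) then 1 else 0)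
        - (if σ.symm (σ j) < σ j ∧ σ (σ j) < σ j ∧ par ((σ j : ℕ) + 1) then 1 else 0) := by
  set s := Finset.univ.filter fun i : Fin n => σ.symm i < i ∧ σ i < i ∧ par ((i : ℕ) + 1) with hs
  have hF : (Finset.univ.filter fun i : Fin n =>
      (σ.symm i < i ∧ σ i < i ∧ par ((i : ℕ) + 1)) ∧ i ≠ j ∧ i ≠ σ j)
      = (s.erase (σ j)).erase j := by
    ext i
    simp only [hs, Finset.mem_erase, Finset.mem_filter, Finset.mem_univ, true_and]
    tauto
  rw [hF]
  have hjmem : j ∈ s ↔ (σ.symm j < j ∧ σ j < j ∧ par ((j : ℕ) + 1)) := by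
    simp [hs]
  have hsjmem : σ j ∈ s ↔ (σ.symm (σ j) < σ j ∧ σ (σ j) < σ j ∧ par ((σ j : ℕ) + 1)) := by
    simp [hs]
  rw [Finset.card_erase_eq_ite, Finset.card_erase_eq_ite]
  simp only [Equiv.symm_apply_apply] at hsjmem ⊢
  by_cases hj : (σ.symm j < j ∧ σ j < j ∧ par ((j : ℕ) + 1)) <;>
    by_cases hsj : (j < σ j ∧ σ (σ j) < σ j ∧ par ((σ j : ℕ) + 1))
  · exact absurd hsj.1 (Fin.lt_asymm hj.2.1)
  · have hne : j ≠ σ j := (hj.2.1).ne'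
    have h1 : σ j ∉ s := fun hc => hsj (hsjmem.mp hc)
    simp [Finset.mem_erase, hjmem.mpr hj, h1, hne, hj, hsj]
  · have h1 : j ∉ s := fun hc => hj (hjmem.mp hc)
    simp [Finset.mem_erase, h1, hsjmem.mpr hsj, hj, hsj]
  · have h1 : j ∉ s := fun hc => hj (hjmem.mp hc)
    have h2 : σ j ∉ s := fun hc => hsj (hsjmem.mp hc)
    simp [Finset.mem_erase, h1, h2, hj, hsj]

end Fcard

lemma mono_ins (n : ℕ) (σ : Equiv.Perm (Fin n)) (j : Fin n) :
    (X 0 ^ cpko (n+1) (ins n (σ, Fin.castSucc j)) *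
      X 1 ^ cpke (n+1) (ins n (σ, Fin.castSucc j)) : MvPolynomial (Fin 2) ℤ)
    = X 0 ^ ((cpko n σ - (if σ.symm j < j ∧ σ j < j ∧ Odd ((j:ℕ)+1) then 1 else 0)
            - (if σ.symm (σ j) < σ j ∧ σ (σ j) < σ j ∧ Odd (((σ j):ℕ)+1) then 1 else 0))
            + (if Odd (n+1) then 1 else 0))
      * X 1 ^ ((cpke n σ - (if σ.symm j < j ∧ σ j < j ∧ Even ((j:ℕ)+1) then 1 else 0)
            - (if σ.symm (σ j) < σ j ∧ σ (σ j) < σ j ∧ Even (((σ j):ℕ)+1) then 1 else 0))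
            + (if Even (n+1) then 1 else 0)) := by
  rw [cpko_eq_cnt, cpke_eq_cnt, cnt_ins, cnt_ins, F_card, F_card]
  simp only [cpko_filt, cpke_filt]

lemma wfact (n a b : ℕ) : (X 0 ^ (a + if Odd (n+1) then 1 else 0) *
    X 1 ^ (b + if Even (n+1) then 1 else 0) : MvPolynomial (Fin 2) ℤ)
    = (if Odd (n+1) then X 0 else X 1) * (X 0 ^ a * X 1 ^ b) := by
  by_cases hodd : Odd (n+1)
  · have hev : ¬ Even (n+1) := fun h => (Nat.not_odd_iff_even.mpr h) hodd
    rw [if_pos hodd, if_pos hodd, if_neg hev, add_zero, pow_succ]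
    ring
  · have hev : Even (n+1) := Nat.not_odd_iff_even.mp hodd
    rw [if_neg hodd, if_neg hodd, if_pos hev, add_zero, pow_succ]
    ring

lemma sum_c (n : ℕ) (σ : Equiv.Perm (Fin n)) :
    ∑ c : Fin (n+1), (X 0 ^ cpko (n+1) (ins n (σ, c)) *
        X 1 ^ cpke (n+1) (ins n (σ, c)) : MvPolynomial (Fin 2) ℤ)
      = Lop n (X 0 ^ cpko n σ * X 1 ^ cpke n σ) := by
  classical
  set o := cpko n σ with ho
  set e := cpke n σ with he
  set w : MvPolynomial (Fin 2) ℤ := if Odd (n+1) then X 0 else X 1 with hw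
  set Ao : Finset (Fin n) :=
    Finset.univ.filter (fun i => σ.symm i < i ∧ σ i < i ∧ Odd ((i:ℕ)+1)) with hAo
  set Ae : Finset (Fin n) :=
    Finset.univ.filter (fun i => σ.symm i < i ∧ σ i < i ∧ Even ((i:ℕ)+1)) with hAe
  set Bo : Finset (Fin n) :=
    Finset.univ.filter (fun j => σ.symm (σ j) < σ j ∧ σ (σ j) < σ j ∧ Odd (((σ j):ℕ)+1)) with hBo
  set Be : Finset (Fin n) :=
    Finset.univ.filter (fun j => σ.symm (σ j) < σ j ∧ σ (σ j) < σ j ∧ Even (((σ j):ℕ)+1)) with hBe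
  have cardAo : Ao.card = o := rfl
  have cardAe : Ae.card = e := rfl
  have cardBo : Bo.card = o := by
    rw [hAo] at cardAo
    rw [← cardAo, hBo]
    apply Finset.card_bij' (fun j _ => σ j) (fun i _ => σ.symm i)
    · intro a ha
      simp only [Finset.mem_filter, Finset.mem_univ, true_and] at ha ⊢
      exact ha
    · intro a ha
      simp only [Finset.mem_filter, Finset.mem_univ, true_and,
        Equiv.apply_symm_apply] at ha ⊢
      exact ha
    · intro a _; simp
    · intro a _; simp
  have cardBe : Be.card = e := by
    rw [hAe] at cardAe
    rw [← cardAe, hBe]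
    apply Finset.card_bij' (fun j _ => σ j) (fun i _ => σ.symm i)
    · intro a ha
      simp only [Finset.mem_filter, Finset.mem_univ, true_and] at ha ⊢
      exact ha
    · intro a ha
      simp only [Finset.mem_filter, Finset.mem_univ, true_and,
        Equiv.apply_symm_apply] at ha ⊢
      exact ha
    · intro a _; simp
    · intro a _; simp
  have dAoAe : Disjoint Ao Ae := by
    rw [Finset.disjoint_left]
    intro a ha hb
    rw [hAo, Finset.mem_filter] at ha
    rw [hAe, Finset.mem_filter] at hb
    exact (Nat.not_odd_iff_even.mpr hb.2.2.2) ha.2.2.2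
  have dBoBe : Disjoint Bo Be := by
    rw [Finset.disjoint_left]
    intro a ha hb
    rw [hBo, Finset.mem_filter] at ha
    rw [hBe, Finset.mem_filter] at hb
    exact (Nat.not_odd_iff_even.mpr hb.2.2.2) ha.2.2.2
  have dAB : Disjoint (Ao ∪ Ae) (Bo ∪ Be) := by
    rw [Finset.disjoint_left]
    intro a ha hb
    have hpk : σ.symm a < a ∧ σ a < a := by
      rcases Finset.mem_union.mp ha with h | h
      · rw [hAo, Finset.mem_filter] at h; exact ⟨h.2.1, h.2.2.1⟩
      · rw [hAe, Finset.mem_filter] at h; exact ⟨h.2.1, h.2.2.1⟩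
    have hpk' : σ.symm (σ a) < σ a ∧ σ (σ a) < σ a := by
      rcases Finset.mem_union.mp hb with h | h
      · rw [hBo, Finset.mem_filter] at h; exact ⟨h.2.1, h.2.2.1⟩
      · rw [hBe, Finset.mem_filter] at h; exact ⟨h.2.1, h.2.2.1⟩
    exact notpk n σ a hpk hpk'
  set D : Finset (Fin n) := (Ao ∪ Ae) ∪ (Bo ∪ Be) with hD
  have cardD : D.card = (o + e) + (o + e) := by
    rw [hD, Finset.card_union_of_disjoint dAB, Finset.card_union_of_disjoint dAoAe,
      Finset.card_union_of_disjoint dBoBe, cardAo, cardAe, cardBo, cardBe]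
  have hDle : (o + e) + (o + e) ≤ n := by
    rw [← cardD]
    simpa using Finset.card_le_card (Finset.subset_univ D)
  -- split the sum
  rw [Fin.sum_univ_castSucc]
  have hlast : (X 0 ^ cpko (n+1) (ins n (σ, Fin.last n)) *
      X 1 ^ cpke (n+1) (ins n (σ, Fin.last n)) : MvPolynomial (Fin 2) ℤ)
      = X 0 ^ o * X 1 ^ e := by
    rw [ins_c_last, cpko_eq_cnt, cpke_eq_cnt, cnt_extP, cnt_extP, ← cpko_eq_cnt, ← cpke_eq_cnt]
  rw [hlast]
  -- partition the j-sum
  have hsplit : ∑ j : Fin n, (X 0 ^ cpko (n+1) (ins n (σ, Fin.castSucc j)) *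
      X 1 ^ cpke (n+1) (ins n (σ, Fin.castSucc j)) : MvPolynomial (Fin 2) ℤ)
      = (n - ((o+e)+(o+e))) • (w * (X 0 ^ o * X 1 ^ e))
        + (o • (w * (X 0 ^ (o-1) * X 1 ^ e)) + e • (w * (X 0 ^ o * X 1 ^ (e-1)))
          + (o • (w * (X 0 ^ (o-1) * X 1 ^ e)) + e • (w * (X 0 ^ o * X 1 ^ (e-1))))) := by
    rw [← Finset.sum_sdiff (Finset.subset_univ D)]
    congr 1
    · -- complement part
      have : ∀ j ∈ Finset.univ \ D, (X 0 ^ cpko (n+1) (ins n (σ, Fin.castSucc j)) *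
          X 1 ^ cpke (n+1) (ins n (σ, Fin.castSucc j)) : MvPolynomial (Fin 2) ℤ)
          = w * (X 0 ^ o * X 1 ^ e) := by
        intro j hj
        rw [Finset.mem_sdiff, hD] at hj
        have hj2 := hj.2
        simp only [Finset.mem_union, not_or] at hj2
        obtain ⟨⟨hj1, hj2'⟩, hj3, hj4⟩ := hj2
        have hnpk : ¬ (σ.symm j < j ∧ σ j < j) := by
          intro hpk
          rcases Nat.even_or_odd ((j:ℕ)+1) with hpar | hpar
          · exact hj2' (by rw [hAe, Finset.mem_filter]; exact ⟨Finset.mem_univ _, hpk.1, hpk.2, hpar⟩)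
          · exact hj1 (by rw [hAo, Finset.mem_filter]; exact ⟨Finset.mem_univ _, hpk.1, hpk.2, hpar⟩)
        have hnpk' : ¬ (σ.symm (σ j) < σ j ∧ σ (σ j) < σ j) := by
          intro hpk
          rcases Nat.even_or_odd (((σ j):ℕ)+1) with hpar | hpar
          · exact hj4 (by rw [hBe, Finset.mem_filter]; exact ⟨Finset.mem_univ _, hpk.1, hpk.2, hpar⟩)
          · exact hj3 (by rw [hBo, Finset.mem_filter]; exact ⟨Finset.mem_univ _, hpk.1, hpk.2, hpar⟩)
        have i1 : ¬(σ.symm j < j ∧ σ j < j ∧ Odd ((j:ℕ)+1)) := fun h => hnpk ⟨h.1, h.2.1⟩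
        have i2 : ¬(σ.symm (σ j) < σ j ∧ σ (σ j) < σ j ∧ Odd (((σ j):ℕ)+1)) :=
          fun h => hnpk' ⟨h.1, h.2.1⟩
        have i3 : ¬(σ.symm j < j ∧ σ j < j ∧ Even ((j:ℕ)+1)) := fun h => hnpk ⟨h.1, h.2.1⟩
        have i4 : ¬(σ.symm (σ j) < σ j ∧ σ (σ j) < σ j ∧ Even (((σ j):ℕ)+1)) :=
          fun h => hnpk' ⟨h.1, h.2.1⟩
        rw [mono_ins, if_neg i1, if_neg i2, if_neg i3, if_neg i4]
        simp only [Nat.sub_zero]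
        rw [wfact, hw]
      rw [Finset.sum_congr rfl this, Finset.sum_const, Finset.card_sdiff_of_subset (Finset.subset_univ D),
        cardD, Finset.card_univ, Fintype.card_fin]
    · -- D part
      rw [hD, Finset.sum_union dAB, Finset.sum_union dAoAe, Finset.sum_union dBoBe]
      congr 1
      · congr 1
        · -- Ao
          have : ∀ j ∈ Ao, (X 0 ^ cpko (n+1) (ins n (σ, Fin.castSucc j)) *
              X 1 ^ cpke (n+1) (ins n (σ, Fin.castSucc j)) : MvPolynomial (Fin 2) ℤ)
              = w * (X 0 ^ (o-1) * X 1 ^ e) := by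
            intro j hj
            rw [hAo, Finset.mem_filter] at hj
            obtain ⟨-, h1, h2, h3⟩ := hj
            have hnpk' : ¬ (σ.symm (σ j) < σ j ∧ σ (σ j) < σ j) := notpk n σ j ⟨h1, h2⟩
            have hnev : ¬ Even ((j:ℕ)+1) := Nat.not_even_iff_odd.mpr h3
            have i2 : ¬(σ.symm (σ j) < σ j ∧ σ (σ j) < σ j ∧ Odd (((σ j):ℕ)+1)) :=
              fun h => hnpk' ⟨h.1, h.2.1⟩
            have i3 : ¬(σ.symm j < j ∧ σ j < j ∧ Even ((j:ℕ)+1)) := fun h => hnev h.2.2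
            have i4 : ¬(σ.symm (σ j) < σ j ∧ σ (σ j) < σ j ∧ Even (((σ j):ℕ)+1)) :=
              fun h => hnpk' ⟨h.1, h.2.1⟩
            rw [mono_ins, if_pos (⟨h1, h2, h3⟩ : σ.symm j < j ∧ σ j < j ∧ Odd ((j:ℕ)+1)),
              if_neg i2, if_neg i3, if_neg i4]
            simp only [Nat.sub_zero]
            rw [wfact, hw]
          rw [Finset.sum_congr rfl this, Finset.sum_const, cardAo]
        · -- Ae
          have : ∀ j ∈ Ae, (X 0 ^ cpko (n+1) (ins n (σ, Fin.castSucc j)) *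
              X 1 ^ cpke (n+1) (ins n (σ, Fin.castSucc j)) : MvPolynomial (Fin 2) ℤ)
              = w * (X 0 ^ o * X 1 ^ (e-1)) := by
            intro j hj
            rw [hAe, Finset.mem_filter] at hj
            obtain ⟨-, h1, h2, h3⟩ := hj
            have hnpk' : ¬ (σ.symm (σ j) < σ j ∧ σ (σ j) < σ j) := notpk n σ j ⟨h1, h2⟩
            have hnod : ¬ Odd ((j:ℕ)+1) := Nat.not_odd_iff_even.mpr h3
            have i1 : ¬(σ.symm j < j ∧ σ j < j ∧ Odd ((j:ℕ)+1)) := fun h => hnod h.2.2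
            have i2 : ¬(σ.symm (σ j) < σ j ∧ σ (σ j) < σ j ∧ Odd (((σ j):ℕ)+1)) :=
              fun h => hnpk' ⟨h.1, h.2.1⟩
            have i4 : ¬(σ.symm (σ j) < σ j ∧ σ (σ j) < σ j ∧ Even (((σ j):ℕ)+1)) :=
              fun h => hnpk' ⟨h.1, h.2.1⟩
            rw [mono_ins, if_neg i1, if_neg i2,
              if_pos (⟨h1, h2, h3⟩ : σ.symm j < j ∧ σ j < j ∧ Even ((j:ℕ)+1)), if_neg i4]
            simp only [Nat.sub_zero]
            rw [wfact, hw]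
          rw [Finset.sum_congr rfl this, Finset.sum_const, cardAe]
      · congr 1
        · -- Bo
          have : ∀ j ∈ Bo, (X 0 ^ cpko (n+1) (ins n (σ, Fin.castSucc j)) *
              X 1 ^ cpke (n+1) (ins n (σ, Fin.castSucc j)) : MvPolynomial (Fin 2) ℤ)
              = w * (X 0 ^ (o-1) * X 1 ^ e) := by
            intro j hj
            rw [hBo, Finset.mem_filter] at hj
            obtain ⟨-, h1, h2, h3⟩ := hj
            have hnpk : ¬ (σ.symm j < j ∧ σ j < j) := notpk' n σ j ⟨h1, h2⟩
            have hnev : ¬ Even (((σ j):ℕ)+1) := Nat.not_even_iff_odd.mpr h3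
            have i1 : ¬(σ.symm j < j ∧ σ j < j ∧ Odd ((j:ℕ)+1)) := fun h => hnpk ⟨h.1, h.2.1⟩
            have i3 : ¬(σ.symm j < j ∧ σ j < j ∧ Even ((j:ℕ)+1)) := fun h => hnpk ⟨h.1, h.2.1⟩
            have i4 : ¬(σ.symm (σ j) < σ j ∧ σ (σ j) < σ j ∧ Even (((σ j):ℕ)+1)) :=
              fun h => hnev h.2.2
            rw [mono_ins, if_neg i1,
              if_pos (⟨h1, h2, h3⟩ : σ.symm (σ j) < σ j ∧ σ (σ j) < σ j ∧ Odd (((σ j):ℕ)+1)),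
              if_neg i3, if_neg i4]
            simp only [Nat.sub_zero]
            rw [wfact, hw]
          rw [Finset.sum_congr rfl this, Finset.sum_const, cardBo]
        · -- Be
          have : ∀ j ∈ Be, (X 0 ^ cpko (n+1) (ins n (σ, Fin.castSucc j)) *
              X 1 ^ cpke (n+1) (ins n (σ, Fin.castSucc j)) : MvPolynomial (Fin 2) ℤ)
              = w * (X 0 ^ o * X 1 ^ (e-1)) := by
            intro j hj
            rw [hBe, Finset.mem_filter] at hj
            obtain ⟨-, h1, h2, h3⟩ := hj
            have hnpk : ¬ (σ.symm j < j ∧ σ j < j) := notpk' n σ j ⟨h1, h2⟩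
            have hnod : ¬ Odd (((σ j):ℕ)+1) := Nat.not_odd_iff_even.mpr h3
            have i1 : ¬(σ.symm j < j ∧ σ j < j ∧ Odd ((j:ℕ)+1)) := fun h => hnpk ⟨h.1, h.2.1⟩
            have i2 : ¬(σ.symm (σ j) < σ j ∧ σ (σ j) < σ j ∧ Odd (((σ j):ℕ)+1)) :=
              fun h => hnod h.2.2
            have i3 : ¬(σ.symm j < j ∧ σ j < j ∧ Even ((j:ℕ)+1)) := fun h => hnpk ⟨h.1, h.2.1⟩
            rw [mono_ins, if_neg i1, if_neg i2, if_neg i3,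
              if_pos (⟨h1, h2, h3⟩ : σ.symm (σ j) < σ j ∧ σ (σ j) < σ j ∧ Even (((σ j):ℕ)+1))]
            simp only [Nat.sub_zero]
            rw [wfact, hw]
          rw [Finset.sum_congr rfl this, Finset.sum_const, cardBe]
  obtain ⟨d, hd⟩ : ∃ d, n = (o+e)+(o+e) + d := ⟨n - ((o+e)+(o+e)), by omega⟩
  have hsub : n - ((o+e)+(o+e)) = d := by omega
  rw [hsplit, Lop, ← hw, hsub, hd]
  clear hsplit hlast hDle cardD hD dAB dBoBe dAoAe cardBe cardBo cardAe cardAo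
  clear_value o e w D Ao Ae Bo Be
  clear ho he hw hd hsub hAo hAe hBo hBe D Ao Ae Bo Be
  rcases o with _|a <;> rcases e with _|b <;>
    · simp only [Derivation.leibniz, Derivation.leibniz_pow, map_add, Derivation.map_one_eq_zero,
        pderiv_X_self, pd0_ne, pd1_ne, Nat.add_sub_cancel, Nat.zero_sub, Nat.sub_zero, pow_zero,
        smul_eq_mul, nsmul_eq_mul, zero_add, add_zero, mul_one, one_mul, mul_zero, zero_mul,
        smul_zero, zero_smul]
      push_cast
      ring


lemma Lop_add (n : ℕ) (f g : MvPolynomial (Fin 2) ℤ) :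
    Lop n (f + g) = Lop n f + Lop n g := by
  simp only [Lop, map_add, smul_add, mul_add]
  ring

noncomputable def LopHom (n : ℕ) : MvPolynomial (Fin 2) ℤ →+ MvPolynomial (Fin 2) ℤ :=
  AddMonoidHom.mk' (Lop n) (Lop_add n)

lemma Prec (n : ℕ) : P (n+1) = Lop n (P n) := by
  have h1 : P (n+1) = ∑ x : Equiv.Perm (Fin n) × Fin (n+1),
      (X 0 ^ cpko (n+1) (ins n x) * X 1 ^ cpke (n+1) (ins n x) : MvPolynomial (Fin 2) ℤ) :=
    (Fintype.sum_bijective (ins n) (ins_bij n) _ _ (fun x => rfl)).symm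
  rw [h1, Fintype.sum_prod_type]
  have h2 : ∀ σ : Equiv.Perm (Fin n), ∑ c : Fin (n+1),
      (X 0 ^ cpko (n+1) (ins n (σ, c)) * X 1 ^ cpke (n+1) (ins n (σ, c)) : MvPolynomial (Fin 2) ℤ)
      = Lop n (X 0 ^ cpko n σ * X 1 ^ cpke n σ) := fun σ => sum_c n σ
  rw [Finset.sum_congr rfl (fun σ _ => h2 σ)]
  exact (map_sum (LopHom n) _ _).symm

lemma Lop_nsmul (n : ℕ) (c : ℕ) (f : MvPolynomial (Fin 2) ℤ) :
    Lop n (c • f) = c • Lop n f := map_nsmul (LopHom n) c f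

lemma LA' (i j K : ℕ) :
    Lop (2*(i+2*j+K)) (X 0^i * X 1^j * (1+X 1)^K)
      = (2*i+1) • (X 0^i * X 1^j * (1+X 1)^K)
        + (2*j) • (X 0^(i+1) * X 1^(j-1) * (1+X 1)^(K+1))
        + (4*K) • (X 0^(i+1) * X 1^j * (1+X 1)^(K-1)) := by
  have hodd : Odd (2*(i+2*j+K)+1) := ⟨i+2*j+K, by ring⟩
  rw [Lop, if_pos hodd]
  rcases i with _ | a <;> rcases j with _ | b <;> rcases K with _ | c <;>
    · simp only [Derivation.leibniz, Derivation.leibniz_pow, map_add, Derivation.map_one_eq_zero,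
        pderiv_X_self, pd0_ne, pd1_ne, Nat.add_sub_cancel, Nat.zero_sub, Nat.sub_zero, pow_zero,
        smul_eq_mul, nsmul_eq_mul, zero_add, add_zero, mul_one, one_mul, mul_zero, zero_mul,
        smul_zero, zero_smul]
      push_cast
      ring

lemma LB' (i j K : ℕ) :
    Lop (2*(i+2*j+K)+1) (X 0^i * X 1^j * (1+X 1)^K)
      = (2*j+1) • (X 0^i * X 1^j * (1+X 1)^(K+1))
        + (2*i) • (X 0^(i-1) * X 1^(j+1) * (1+X 1)^K)
        + (4*K) • (X 0^i * X 1^(j+1) * (1+X 1)^(K-1)) := by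
  have hev : ¬ Odd (2*(i+2*j+K)+1+1) := by
    simp [Nat.odd_add_one, parity_simps]
  rw [Lop, if_neg hev]
  rcases i with _ | a <;> rcases j with _ | b <;> rcases K with _ | c <;>
    · simp only [Derivation.leibniz, Derivation.leibniz_pow, map_add, Derivation.map_one_eq_zero,
        pderiv_X_self, pd0_ne, pd1_ne, Nat.add_sub_cancel, Nat.zero_sub, Nat.sub_zero, pow_zero,
        smul_eq_mul, nsmul_eq_mul, zero_add, add_zero, mul_one, one_mul, mul_zero, zero_mul,
        smul_zero, zero_smul]
      push_cast
      ring

noncomputable def bb (m i j : ℕ) : MvPolynomial (Fin 2) ℤ :=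
  X 0^i * X 1^j * (1+X 1)^(m - i - 2*j)

lemma shiftsum {M : Type*} [AddCommMonoid M] (f : ℕ → M) (C : ℕ)
    (h0 : f 0 = 0) (hC : f C = 0) :
    ∑ x ∈ Finset.range C, f x = ∑ x ∈ Finset.range C, f (x+1) := by
  have h1 := Finset.sum_range_succ f C
  have h2 := Finset.sum_range_succ' f C
  rw [hC, add_zero] at h1
  rw [h0, add_zero] at h2
  rw [← h1, h2]

lemma Lop_sum {α : Type*} (n : ℕ) (s : Finset α) (f : α → MvPolynomial (Fin 2) ℤ) :
    Lop n (∑ a ∈ s, f a) = ∑ a ∈ s, Lop n (f a) := map_sum (LopHom n) f s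

lemma Lop_bb_A (m i j : ℕ) (h : 2*i + 4*j ≤ 2*m) :
    Lop (2*m) (bb m i j)
      = (2*i+1) • bb m i j + (2*j) • bb m (i+1) (j-1) + (4*(m-i-2*j)) • bb m (i+1) j := by
  set K := m - i - 2*j with hK
  have hn : 2*m = 2*(i+2*j+K) := by omega
  have hb : bb m i j = X 0^i * X 1^j * (1+X 1)^K := by rw [bb]
  have hA : (2*i+1) • bb m i j = (2*i+1) • (X 0^i * X 1^j * (1+X 1)^K) := by rw [hb]
  have hB : (2*j) • bb m (i+1) (j-1) = (2*j) • (X 0^(i+1) * X 1^(j-1) * (1+X 1)^(K+1)) := by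
    rcases j with _|b
    · simp
    · have he : m - (i+1) - 2*((b+1)-1) = K+1 := by omega
      rw [bb, he]
  have hC : (4*K) • bb m (i+1) j = (4*K) • (X 0^(i+1) * X 1^j * (1+X 1)^(K-1)) := by
    rcases Nat.eq_zero_or_pos K with h0|h0
    · rw [h0]; simp
    · have he : m - (i+1) - 2*j = K-1 := by omega
      rw [bb, he]
  rw [hb, hn, LA', hB, hC]

lemma Lop_bb_B (m i j : ℕ) (h : 2*i + 4*j ≤ 2*m+1) :
    Lop (2*m+1) (bb m i j)
      = (2*j+1) • bb (m+1) i j + (2*i) • bb (m+1) (i-1) (j+1) + (4*(m-i-2*j)) • bb (m+1) i (j+1) := by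
  set K := m - i - 2*j with hK
  have hn : 2*m+1 = 2*(i+2*j+K)+1 := by omega
  have hb : bb m i j = X 0^i * X 1^j * (1+X 1)^K := by rw [bb]
  have hA : (2*j+1) • bb (m+1) i j = (2*j+1) • (X 0^i * X 1^j * (1+X 1)^(K+1)) := by
    have he : m + 1 - i - 2*j = K+1 := by omega
    rw [bb, he]
  have hB : (2*i) • bb (m+1) (i-1) (j+1) = (2*i) • (X 0^(i-1) * X 1^(j+1) * (1+X 1)^K) := by
    rcases i with _|a
    · simp
    · have he : m + 1 - ((a+1)-1) - 2*(j+1) = K := by omega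
      rw [bb, he]
  have hC : (4*K) • bb (m+1) i (j+1) = (4*K) • (X 0^i * X 1^(j+1) * (1+X 1)^(K-1)) := by
    rcases Nat.eq_zero_or_pos K with h0|h0
    · rw [h0]; simp
    · have he : m + 1 - i - 2*(j+1) = K-1 := by omega
      rw [bb, he]
  rw [hb, hn, LB', hA, hB, hC]

def Qprop (n : ℕ) : Prop := ∃ γ : ℕ → ℕ → ℕ,
  (∀ i j, γ i j ≠ 0 → 2*i+1 ≤ n ∧ 2*i+4*j ≤ n) ∧
  ∀ C, n+1 ≤ C → P n = ∑ i ∈ Finset.range C, ∑ j ∈ Finset.range C, γ i j • bb (n/2) i j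

lemma stepA (m : ℕ) (h : Qprop (2*m)) : Qprop (2*m+1) := by
  classical
  obtain ⟨γ, hsupp, hsum⟩ := h
  refine ⟨fun I J => γ I J * (2*I+1) +
    (if I = 0 then 0 else γ (I-1) (J+1) * (2*(J+1)) + γ (I-1) J * (4*(m-(I-1)-2*J))), ?_, ?_⟩
  · intro I J hIJ
    rcases eq_or_ne I 0 with rfl|hI
    · simp only [if_pos rfl, add_zero] at hIJ
      have h1 : γ 0 J ≠ 0 := by intro h0; rw [h0] at hIJ; simp at hIJ
      have := hsupp 0 J h1
      omega
    · simp only [if_neg hI] at hIJ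
      by_cases g1 : γ I J = 0
      · by_cases g2 : γ (I-1) (J+1) = 0
        · by_cases g3 : γ (I-1) J = 0
          · rw [g1, g2, g3] at hIJ; simp at hIJ
          · have hb := hsupp (I-1) J g3
            have hco : m - (I-1) - 2*J ≠ 0 := by
              intro h0
              rw [g1, g2, h0] at hIJ; simp at hIJ
            omega
        · have hb := hsupp (I-1) (J+1) g2
          omega
      · have := hsupp I J g1
        omega
  · intro C hC
    have hm2 : (2*m+1)/2 = m := by omega
    have hm2' : (2*m)/2 = m := by omega
    rw [show 2*m+1 = (2*m)+1 from rfl, Prec (2*m), hsum C (by omega), hm2', hm2, Lop_sum]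
    rw [Finset.sum_congr rfl (fun i (_ : i ∈ Finset.range C) => Lop_sum (2*m) _ _)]
    have hterm : ∀ i ∈ Finset.range C, ∀ j ∈ Finset.range C,
        Lop (2*m) (γ i j • bb m i j)
        = (γ i j * (2*i+1)) • bb m i j + (γ i j * (2*j)) • bb m (i+1) (j-1)
          + (γ i j * (4*(m-i-2*j))) • bb m (i+1) j := by
      intro i _ j _
      rw [Lop_nsmul]
      by_cases g : γ i j = 0
      · simp [g]
      · rw [Lop_bb_A m i j (hsupp i j g).2, smul_add, smul_add, smul_smul, smul_smul, smul_smul]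
    rw [Finset.sum_congr rfl (fun i hi => Finset.sum_congr rfl (fun j hj => hterm i hi j hj))]
    rw [Finset.sum_congr rfl (fun i (_ : i ∈ Finset.range C) => by
      rw [Finset.sum_add_distrib, Finset.sum_add_distrib]), Finset.sum_add_distrib,
      Finset.sum_add_distrib]
    -- expand RHS
    have R1 : ∑ I ∈ Finset.range C, ∑ J ∈ Finset.range C,
        (γ I J * (2*I+1) +
          (if I = 0 then 0 else γ (I-1) (J+1) * (2*(J+1)) + γ (I-1) J * (4*(m-(I-1)-2*J))))
          • bb m I J
        = (∑ I ∈ Finset.range C, ∑ J ∈ Finset.range C, (γ I J * (2*I+1)) • bb m I J)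
          + (∑ I ∈ Finset.range C, ∑ J ∈ Finset.range C,
              (if I = 0 then 0 else (γ (I-1) (J+1) * (2*(J+1))) • bb m I J))
          + (∑ I ∈ Finset.range C, ∑ J ∈ Finset.range C,
              (if I = 0 then 0 else (γ (I-1) J * (4*(m-(I-1)-2*J))) • bb m I J)) := by
      have per : ∀ I J, (γ I J * (2*I+1) +
          (if I = 0 then 0 else γ (I-1) (J+1) * (2*(J+1)) + γ (I-1) J * (4*(m-(I-1)-2*J))))
            • bb m I J
          = (γ I J * (2*I+1)) • bb m I J
            + (if I = 0 then 0 else (γ (I-1) (J+1) * (2*(J+1))) • bb m I J)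
            + (if I = 0 then 0 else (γ (I-1) J * (4*(m-(I-1)-2*J))) • bb m I J) := by
        intro I J
        rcases eq_or_ne I 0 with rfl|hI
        · simp
        · rw [if_neg hI, if_neg hI, if_neg hI, add_smul, add_smul, ← add_assoc]
      calc ∑ I ∈ Finset.range C, ∑ J ∈ Finset.range C,
          (γ I J * (2*I+1) +
            (if I = 0 then 0 else γ (I-1) (J+1) * (2*(J+1)) + γ (I-1) J * (4*(m-(I-1)-2*J))))
            • bb m I J
          = ∑ I ∈ Finset.range C, ∑ J ∈ Finset.range C,
            ((γ I J * (2*I+1)) • bb m I J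
              + (if I = 0 then 0 else (γ (I-1) (J+1) * (2*(J+1))) • bb m I J)
              + (if I = 0 then 0 else (γ (I-1) J * (4*(m-(I-1)-2*J))) • bb m I J)) :=
            Finset.sum_congr rfl (fun I _ => Finset.sum_congr rfl (fun J _ => per I J))
        _ = _ := by
            rw [Finset.sum_congr rfl (fun I (_ : I ∈ Finset.range C) => by
              rw [Finset.sum_add_distrib, Finset.sum_add_distrib]), Finset.sum_add_distrib,
              Finset.sum_add_distrib]
    rw [R1]
    have hgz : ∀ i j', 2*i+1 ≤ 2*m → 2*i + 4*j' ≤ 2*m → True := fun _ _ _ _ => trivial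
    have E2 : ∑ i ∈ Finset.range C, ∑ j ∈ Finset.range C,
        (γ i j * (2*j)) • bb m (i+1) (j-1)
        = ∑ I ∈ Finset.range C, ∑ J ∈ Finset.range C,
            (if I = 0 then 0 else (γ (I-1) (J+1) * (2*(J+1))) • bb m I J) := by
      have inner : ∀ i, ∑ j ∈ Finset.range C, (γ i j * (2*j)) • bb m (i+1) (j-1)
          = ∑ j ∈ Finset.range C, (γ i (j+1) * (2*(j+1))) • bb m (i+1) j := by
        intro i
        have hgC : γ i C = 0 := by
          by_contra hg; have := hsupp i C hg; omega
        exact shiftsum (fun j => (γ i j * (2*j)) • bb m (i+1) (j-1)) C (by simp) (by simp [hgC])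
      rw [Finset.sum_congr rfl (fun i (_ : i ∈ Finset.range C) => inner i)]
      have outer : (∑ I ∈ Finset.range C, ∑ J ∈ Finset.range C,
          (if I = 0 then 0 else (γ (I-1) (J+1) * (2*(J+1))) • bb m I J))
          = ∑ i ∈ Finset.range C, ∑ J ∈ Finset.range C,
              (γ i (J+1) * (2*(J+1))) • bb m (i+1) J := by
        have hgC : ∀ J, γ (C-1) (J+1) = 0 := by
          intro J; by_contra hg; have := hsupp (C-1) (J+1) hg; omega
        rw [shiftsum (fun I => ∑ J ∈ Finset.range C,
          (if I = 0 then 0 else (γ (I-1) (J+1) * (2*(J+1))) • bb m I J)) C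
          (by simp) (by simp [hgC])]
        exact Finset.sum_congr rfl (fun i _ => Finset.sum_congr rfl (fun J _ => by simp))
      rw [outer]
    have E3 : ∑ i ∈ Finset.range C, ∑ j ∈ Finset.range C,
        (γ i j * (4*(m-i-2*j))) • bb m (i+1) j
        = ∑ I ∈ Finset.range C, ∑ J ∈ Finset.range C,
            (if I = 0 then 0 else (γ (I-1) J * (4*(m-(I-1)-2*J))) • bb m I J) := by
      have hgC : ∀ J, γ (C-1) J = 0 := by
        intro J; by_contra hg; have := hsupp (C-1) J hg; omega
      rw [shiftsum (fun I => ∑ J ∈ Finset.range C,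
        (if I = 0 then 0 else (γ (I-1) J * (4*(m-(I-1)-2*J))) • bb m I J)) C
        (by simp) (by simp [hgC])]
      exact Finset.sum_congr rfl (fun i _ => Finset.sum_congr rfl (fun J _ => by simp))
    rw [← E2, ← E3]

lemma stepB (m : ℕ) (h : Qprop (2*m+1)) : Qprop (2*m+2) := by
  classical
  obtain ⟨γ, hsupp, hsum⟩ := h
  refine ⟨fun I J => γ I J * (2*J+1) +
    (if J = 0 then 0 else γ (I+1) (J-1) * (2*(I+1)) + γ I (J-1) * (4*(m-I-2*(J-1)))), ?_, ?_⟩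
  · intro I J hIJ
    rcases eq_or_ne J 0 with rfl|hJ
    · simp only [if_pos rfl, add_zero] at hIJ
      have h1 : γ I 0 ≠ 0 := by intro h0; rw [h0] at hIJ; simp at hIJ
      have := hsupp I 0 h1
      omega
    · simp only [if_neg hJ] at hIJ
      by_cases g1 : γ I J = 0
      · by_cases g2 : γ (I+1) (J-1) = 0
        · by_cases g3 : γ I (J-1) = 0
          · rw [g1, g2, g3] at hIJ; simp at hIJ
          · have hb := hsupp I (J-1) g3
            have hco : m - I - 2*(J-1) ≠ 0 := by
              intro h0
              rw [g1, g2, h0] at hIJ; simp at hIJ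
            omega
        · have hb := hsupp (I+1) (J-1) g2
          omega
      · have := hsupp I J g1
        omega
  · intro C hC
    have hm2 : (2*m+2)/2 = m+1 := by omega
    have hm2' : (2*m+1)/2 = m := by omega
    rw [show 2*m+2 = (2*m+1)+1 from rfl, Prec (2*m+1), hsum C (by omega), hm2', hm2, Lop_sum]
    rw [Finset.sum_congr rfl (fun i (_ : i ∈ Finset.range C) => Lop_sum (2*m+1) _ _)]
    have hterm : ∀ i ∈ Finset.range C, ∀ j ∈ Finset.range C,
        Lop (2*m+1) (γ i j • bb m i j)
        = (γ i j * (2*j+1)) • bb (m+1) i j + (γ i j * (2*i)) • bb (m+1) (i-1) (j+1)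
          + (γ i j * (4*(m-i-2*j))) • bb (m+1) i (j+1) := by
      intro i _ j _
      rw [Lop_nsmul]
      by_cases g : γ i j = 0
      · simp [g]
      · rw [Lop_bb_B m i j (le_trans (hsupp i j g).2 (by omega)),
          smul_add, smul_add, smul_smul, smul_smul, smul_smul]
    rw [Finset.sum_congr rfl (fun i hi => Finset.sum_congr rfl (fun j hj => hterm i hi j hj))]
    rw [Finset.sum_congr rfl (fun i (_ : i ∈ Finset.range C) => by
      rw [Finset.sum_add_distrib, Finset.sum_add_distrib]), Finset.sum_add_distrib,
      Finset.sum_add_distrib]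
    have R1 : ∑ I ∈ Finset.range C, ∑ J ∈ Finset.range C,
        (γ I J * (2*J+1) +
          (if J = 0 then 0 else γ (I+1) (J-1) * (2*(I+1)) + γ I (J-1) * (4*(m-I-2*(J-1)))))
          • bb (m+1) I J
        = (∑ I ∈ Finset.range C, ∑ J ∈ Finset.range C, (γ I J * (2*J+1)) • bb (m+1) I J)
          + (∑ I ∈ Finset.range C, ∑ J ∈ Finset.range C,
              (if J = 0 then 0 else (γ (I+1) (J-1) * (2*(I+1))) • bb (m+1) I J))
          + (∑ I ∈ Finset.range C, ∑ J ∈ Finset.range C,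
              (if J = 0 then 0 else (γ I (J-1) * (4*(m-I-2*(J-1)))) • bb (m+1) I J)) := by
      have per : ∀ I J, (γ I J * (2*J+1) +
          (if J = 0 then 0 else γ (I+1) (J-1) * (2*(I+1)) + γ I (J-1) * (4*(m-I-2*(J-1)))))
            • bb (m+1) I J
          = (γ I J * (2*J+1)) • bb (m+1) I J
            + (if J = 0 then 0 else (γ (I+1) (J-1) * (2*(I+1))) • bb (m+1) I J)
            + (if J = 0 then 0 else (γ I (J-1) * (4*(m-I-2*(J-1)))) • bb (m+1) I J) := by
        intro I J
        rcases eq_or_ne J 0 with rfl|hJ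
        · simp
        · rw [if_neg hJ, if_neg hJ, if_neg hJ, add_smul, add_smul, ← add_assoc]
      calc ∑ I ∈ Finset.range C, ∑ J ∈ Finset.range C,
          (γ I J * (2*J+1) +
            (if J = 0 then 0 else γ (I+1) (J-1) * (2*(I+1)) + γ I (J-1) * (4*(m-I-2*(J-1)))))
            • bb (m+1) I J
          = ∑ I ∈ Finset.range C, ∑ J ∈ Finset.range C,
            ((γ I J * (2*J+1)) • bb (m+1) I J
              + (if J = 0 then 0 else (γ (I+1) (J-1) * (2*(I+1))) • bb (m+1) I J)
              + (if J = 0 then 0 else (γ I (J-1) * (4*(m-I-2*(J-1)))) • bb (m+1) I J)) :=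
            Finset.sum_congr rfl (fun I _ => Finset.sum_congr rfl (fun J _ => per I J))
        _ = _ := by
            rw [Finset.sum_congr rfl (fun I (_ : I ∈ Finset.range C) => by
              rw [Finset.sum_add_distrib, Finset.sum_add_distrib]), Finset.sum_add_distrib,
              Finset.sum_add_distrib]
    rw [R1]
    have E2 : ∑ i ∈ Finset.range C, ∑ j ∈ Finset.range C,
        (γ i j * (2*i)) • bb (m+1) (i-1) (j+1)
        = ∑ I ∈ Finset.range C, ∑ J ∈ Finset.range C,
            (if J = 0 then 0 else (γ (I+1) (J-1) * (2*(I+1))) • bb (m+1) I J) := by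
      have houter : ∑ i ∈ Finset.range C, ∑ j ∈ Finset.range C,
          (γ i j * (2*i)) • bb (m+1) (i-1) (j+1)
          = ∑ i ∈ Finset.range C, ∑ j ∈ Finset.range C,
              (γ (i+1) j * (2*(i+1))) • bb (m+1) i (j+1) := by
        have hgC : ∀ j, γ C j = 0 := by
          intro j; by_contra hg; have := hsupp C j hg; omega
        exact shiftsum (fun i => ∑ j ∈ Finset.range C, (γ i j * (2*i)) • bb (m+1) (i-1) (j+1))
          C (by simp) (by simp [hgC])
      rw [houter]
      apply Finset.sum_congr rfl
      intro i _
      have hgC : γ (i+1) (C-1) = 0 := by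
        by_contra hg; have := hsupp (i+1) (C-1) hg; omega
      rw [shiftsum (fun J => (if J = 0 then 0 else (γ (i+1) (J-1) * (2*(i+1))) • bb (m+1) i J))
        C (by simp) (by simp [hgC])]
      exact Finset.sum_congr rfl (fun J _ => by simp)
    have E3 : ∑ i ∈ Finset.range C, ∑ j ∈ Finset.range C,
        (γ i j * (4*(m-i-2*j))) • bb (m+1) i (j+1)
        = ∑ I ∈ Finset.range C, ∑ J ∈ Finset.range C,
            (if J = 0 then 0 else (γ I (J-1) * (4*(m-I-2*(J-1)))) • bb (m+1) I J) := by
      apply Finset.sum_congr rfl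
      intro i _
      have hgC : γ i (C-1) = 0 := by
        by_contra hg; have := hsupp i (C-1) hg; omega
      rw [shiftsum (fun J => (if J = 0 then 0 else (γ i (J-1) * (4*(m-i-2*(J-1)))) • bb (m+1) i J))
        C (by simp) (by simp [hgC])]
      exact Finset.sum_congr rfl (fun J _ => by simp)
    rw [← E2, ← E3]

lemma base1 : Qprop 1 := by
  classical
  refine ⟨fun i j => if i = 0 ∧ j = 0 then 1 else 0, ?_, ?_⟩
  · intro i j h
    rcases eq_or_ne i 0 with rfl|hi
    · rcases eq_or_ne j 0 with rfl|hj
      · omega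
      · simp [hj] at h
    · simp [hi] at h
  · intro C hC
    have hP1 : P 1 = 1 := by
      rw [P]
      have h1 : ∀ π : Equiv.Perm (Fin 1),
          (X 0 ^ cpko 1 π * X 1 ^ cpke 1 π : MvPolynomial (Fin 2) ℤ) = 1 := by
        intro π
        have ho : cpko 1 π = 0 := by
          apply Finset.card_eq_zero.mpr
          rw [Finset.filter_eq_empty_iff]
          intro i _
          rintro ⟨h1, -, -⟩
          rw [Fin.lt_def] at h1
          have := (π.symm i).isLt
          have := i.isLt
          omega
        have he : cpke 1 π = 0 := by
          apply Finset.card_eq_zero.mpr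
          rw [Finset.filter_eq_empty_iff]
          intro i _
          rintro ⟨h1, -, -⟩
          rw [Fin.lt_def] at h1
          have := (π.symm i).isLt
          have := i.isLt
          omega
        rw [ho, he, pow_zero, pow_zero, mul_one]
      rw [Finset.sum_congr rfl (fun π _ => h1 π), Finset.sum_const, Finset.card_univ,
        Fintype.card_perm, Fintype.card_fin]
      simp
    rw [hP1]
    rw [Finset.sum_eq_single 0]
    · rw [Finset.sum_eq_single 0]
      · simp [bb]
      · intro b _ hb
        simp [hb]
      · intro h
        exact absurd (Finset.mem_range.mpr (by omega)) h
    · intro b _ hb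
      apply Finset.sum_eq_zero
      intro j _
      simp [hb]
    · intro h
      exact absurd (Finset.mem_range.mpr (by omega)) h

lemma Qall (n : ℕ) (h : 1 ≤ n) : Qprop n := by
  induction n with
  | zero => omega
  | succ k ih =>
    rcases Nat.eq_zero_or_pos k with rfl|hk
    · exact base1
    · rcases Nat.even_or_odd k with ⟨m, hm⟩ | ⟨m, hm⟩
      · have : k = 2*m := by omega
        subst this
        exact stepA m (ih (by omega))
      · have : k = 2*m+1 := by omega
        subst this
        exact stepB m (ih (by omega))

noncomputable def psi : MvPolynomial (Fin 2) ℤ →ₐ[ℤ] Polynomial (Polynomial ℝ) :=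
  aeval (fun k => if k = (0 : Fin 2) then Polynomial.X else Polynomial.C Polynomial.X)

lemma psiX0 : psi (X 0) = Polynomial.X := by simp [psi]
lemma psiX1 : psi (X 1) = Polynomial.C Polynomial.X := by
  have : ((1 : Fin 2) = 0) = False := by simp
  simp [psi, this]

lemma coeff_psi_mono (o e i : ℕ) :
    (psi (X 0 ^ o * X 1 ^ e)).coeff i
      = if o = i then (Polynomial.X : Polynomial ℝ) ^ e else 0 := by
  rw [map_mul, map_pow, map_pow, psiX0, psiX1, ← Polynomial.C_pow, mul_comm,
    Polynomial.coeff_C_mul, Polynomial.coeff_X_pow]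
  rcases eq_or_ne o i with rfl|ho
  · simp
  · rw [if_neg (Ne.symm ho), if_neg ho, mul_zero]

lemma coeff_psi_bb (I j E i : ℕ) :
    (psi (X 0 ^ I * X 1 ^ j * (1 + X 1) ^ E)).coeff i
      = if I = i then (Polynomial.X : Polynomial ℝ) ^ j * (1 + Polynomial.X) ^ E else 0 := by
  have h1 : ((1 : MvPolynomial (Fin 2) ℤ) + X 1) = (1 + X 1) := rfl
  have h2 : psi (1 + X 1) = Polynomial.C (1 + Polynomial.X) := by
    rw [map_add, map_one, psiX1, map_add, map_one]
  rw [map_mul, map_mul, map_pow, map_pow, map_pow, psiX0, psiX1, h2,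
    ← Polynomial.C_pow, ← Polynomial.C_pow, mul_assoc, ← Polynomial.C_mul, mul_comm,
    Polynomial.coeff_C_mul, Polynomial.coeff_X_pow]
  rcases eq_or_ne I i with rfl|ho
  · rw [if_pos rfl, if_pos rfl, mul_one, mul_comm]
  · rw [if_neg (Ne.symm ho), if_neg ho, mul_zero]


/-- For every `n ≥ 1` there are nonnegative integers `γ_{n,i,j}`,
`0 ≤ i ≤ ⌊(n-1)/2⌋`, `0 ≤ j ≤ ⌊(n-2i)/4⌋`, such that
`P_n(p,q) = Σ_{i,j} γ_{n,i,j} pⁱ qʲ (1+q)^{⌊n/2⌋-i-2j}`. In particular, for every `i ≥ 0`,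
the polynomial `Σ_{π ∈ S_n, cpk^o(π)=i} q^{cpk^e(π)}` is `γ`-positive with center
`(⌊n/2⌋-i)/2`. -/
theorem stmt14 (n : ℕ) (hn : 1 ≤ n) :
    (∃ γ : ℕ → ℕ → ℕ,
      P n = ∑ i ∈ Finset.range ((n - 1) / 2 + 1), ∑ j ∈ Finset.range ((n - 2 * i) / 4 + 1),
        γ i j • (X 0 ^ i * X 1 ^ j * (1 + X 1) ^ (n / 2 - i - 2 * j))) ∧
    (∀ i : ℕ, ∃ μ : ℕ → ℝ, (∀ k, 0 ≤ μ k) ∧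
      (∑ π ∈ Finset.univ.filter (fun π : Equiv.Perm (Fin n) => cpko n π = i),
          (Polynomial.X : Polynomial ℝ) ^ cpke n π) =
        ∑ k ∈ Finset.range ((n / 2 - i) / 2 + 1),
          Polynomial.C (μ k) * Polynomial.X ^ k *
            (1 + Polynomial.X) ^ (n / 2 - i - 2 * k)) := by

  classical
  obtain ⟨γ, hsupp, hsum⟩ := Qall n hn
  have hbig : P n = ∑ i ∈ Finset.range (n+1), ∑ j ∈ Finset.range (n+1), γ i j • bb (n/2) i j :=
    hsum (n+1) le_rfl
  constructor
  · refine ⟨γ, ?_⟩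
    rw [hbig]
    have houter : ∑ i ∈ Finset.range ((n-1)/2+1), ∑ j ∈ Finset.range (n+1),
        γ i j • bb (n/2) i j
        = ∑ i ∈ Finset.range (n+1), ∑ j ∈ Finset.range (n+1), γ i j • bb (n/2) i j := by
      apply Finset.sum_subset
      · exact Finset.range_subset_range.mpr (by omega)
      · intro i hi' hi
        apply Finset.sum_eq_zero
        intro j _
        have hz : γ i j = 0 := by
          by_contra hg; have := hsupp i j hg
          rw [Finset.mem_range] at hi
          omega
        simp [hz]
    rw [← houter]
    apply Finset.sum_congr rfl
    intro i _
    have hinner : ∑ j ∈ Finset.range ((n-2*i)/4+1), γ i j • bb (n/2) i j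
        = ∑ j ∈ Finset.range (n+1), γ i j • bb (n/2) i j := by
      apply Finset.sum_subset
      · exact Finset.range_subset_range.mpr (by omega)
      · intro j _ hj
        have hz : γ i j = 0 := by
          by_contra hg; have := hsupp i j hg
          rw [Finset.mem_range] at hj
          omega
        simp [hz]
    rw [← hinner]
    apply Finset.sum_congr rfl
    intro j _
    rw [bb]
  · intro i
    have hψ := congrArg (fun q => (psi q).coeff i) hbig
    have hL : (psi (P n)).coeff i
        = ∑ π ∈ Finset.univ.filter (fun π : Equiv.Perm (Fin n) => cpko n π = i),
            (Polynomial.X : Polynomial ℝ) ^ cpke n π := by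
      rw [P, map_sum, Polynomial.finset_sum_coeff,
        Finset.sum_congr rfl (fun π _ => coeff_psi_mono (cpko n π) (cpke n π) i),
        Finset.sum_filter]
    have hInner : ∀ I, (psi (∑ j ∈ Finset.range (n+1), γ I j • bb (n/2) I j)).coeff i
        = if I = i then ∑ j ∈ Finset.range (n+1),
            γ I j • ((Polynomial.X : Polynomial ℝ)^j * (1+Polynomial.X)^(n/2 - I - 2*j))
          else 0 := by
      intro I
      rw [map_sum, Polynomial.finset_sum_coeff]
      have hterm : ∀ j, (psi (γ I j • bb (n/2) I j)).coeff i
          = if I = i then γ I j •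
              ((Polynomial.X : Polynomial ℝ)^j * (1+Polynomial.X)^(n/2 - I - 2*j)) else 0 := by
        intro j
        rw [map_nsmul, Polynomial.coeff_smul, bb, coeff_psi_bb]
        rcases eq_or_ne I i with rfl|hI
        · rw [if_pos rfl, if_pos rfl]
        · rw [if_neg hI, if_neg hI, smul_zero]
      rw [Finset.sum_congr rfl (fun j _ => hterm j)]
      rcases eq_or_ne I i with rfl|hI
      · rw [Finset.sum_congr rfl (fun j (_ : j ∈ Finset.range (n+1)) => if_pos rfl), if_pos rfl]
      · rw [Finset.sum_congr rfl (fun j (_ : j ∈ Finset.range (n+1)) => if_neg hI), if_neg hI,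
          Finset.sum_const, smul_zero]
    rw [hL, map_sum, Polynomial.finset_sum_coeff,
      Finset.sum_congr rfl (fun I _ => hInner I), Finset.sum_ite_eq'] at hψ
    by_cases hin : i ∈ Finset.range (n+1)
    · rw [if_pos hin] at hψ
      refine ⟨fun k => (γ i k : ℝ), fun k => Nat.cast_nonneg _, ?_⟩
      rw [hψ]
      have hshrink : ∑ j ∈ Finset.range ((n/2-i)/2+1),
          γ i j • ((Polynomial.X : Polynomial ℝ)^j * (1+Polynomial.X)^(n/2 - i - 2*j))
          = ∑ j ∈ Finset.range (n+1),
              γ i j • ((Polynomial.X : Polynomial ℝ)^j * (1+Polynomial.X)^(n/2 - i - 2*j)) := by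
        apply Finset.sum_subset
        · exact Finset.range_subset_range.mpr (by omega)
        · intro j _ hj
          have hz : γ i j = 0 := by
            by_contra hg; have := hsupp i j hg
            rw [Finset.mem_range] at hj
            omega
          simp [hz]
      rw [← hshrink]
      apply Finset.sum_congr rfl
      intro k _
      rw [nsmul_eq_mul, ← Polynomial.C_eq_natCast, mul_assoc]
    · rw [if_neg hin] at hψ
      refine ⟨fun _ => 0, fun k => le_refl 0, ?_⟩
      rw [hψ]
      symm
      apply Finset.sum_eq_zero
      intro k _
      simp
end

section
/- Let (g_n(x))_{n≥0} be real polynomials such that deg g_n = n and each g_n is γ-positive with center n/2, and let (M_{i,j})_{i,j≥0} be nonnegative reals. Define f_0(x) = 1 and, for n ≥ 0, f_{n+1}(x) = Σ_{i=0}^{n} M_{n,i} · g_{n−i}(x) · (R_i f_i)(x), where R_i f_i denotes x^i f_i(1/x) (the reflection of f_i in degree i; inductively deg f_i ≤ i so this is a polynomial). Then for every n ≥ 0, f_{n+1} is bi-γ-positive with respect to degree n: f_{n+1}(x) = a(x) + x·b(x) where a is γ-positive with center n/2 and satisfies x^n·a(1/x) = a(x), and b is γ-positive with center (n−1)/2 and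 satisfies x^{n−1}·b(1/x) = b(x). In particular, each f_n is unimodal. -/
open Finset Polynomial

/-- `f` is `γ`-positive with center `m/2`: there are nonnegative reals `γ_0,…,γ_{⌊m/2⌋}`
with `f(x) = Σ_k γ_k x^k (1+x)^{m-2k}`. -/
def IsGammaPos (f : Polynomial ℝ) (m : ℕ) : Prop :=
  ∃ γ : ℕ → ℝ, (∀ k, 0 ≤ γ k) ∧
    f = ∑ k ∈ Finset.range (m / 2 + 1), C (γ k) * X ^ k * (1 + X) ^ (m - 2 * k)

/-!
If `a` and `b` are symmetric with respect to degrees `n` and `n - 1`, then reflecting in degree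
`n + 1` turns `a + X * b` into `X * (a + b)`. By strong induction `f_i = a + X * b` is
bi-γ-positive, so for `i ≥ 1` the summand `M_{n,i} g_{n-i} · reflect i f_i` of the recurrence is
`c * X * b + X * (c * a)` with `c = M_{n,i} g_{n-i}` γ-positive; since γ-positivity is closed
under sums and products (centers add), it is again bi-γ-positive with respect to `n`.

Unimodality: the coefficients of `X^k (1 + X)^(m - 2k)` are binomial coefficients, unimodal with
a mode at any `i` with `2i ∈ {m - 1, m, m + 1}`; this is stable under nonnegative combinations,
and `a`, `X * b` share the mode `⌈n/2⌉`.
-/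

namespace Nat

theorem choose_le_succ_of_two_mul_lt {d i : ℕ} (h : 2 * i < d) :
    d.choose i ≤ d.choose (i + 1) :=
  Nat.le_of_mul_le_mul_right (c := i + 1)
    (by rw [choose_succ_right_eq]; exact Nat.mul_le_mul_left _ (by omega)) i.succ_pos

theorem choose_succ_le_of_le_two_mul_add_one {d i : ℕ} (h : d ≤ 2 * i + 1) :
    d.choose (i + 1) ≤ d.choose i :=
  Nat.le_of_mul_le_mul_right (c := i + 1)
    (by rw [choose_succ_right_eq]; exact Nat.mul_le_mul_left _ (by omega)) i.succ_pos

end Nat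

namespace Polynomial

section Reflect

variable {R : Type*} [Semiring R]

theorem natDegree_one_add_X_pow_le (d : ℕ) : ((1 + X : R[X]) ^ d).natDegree ≤ d := by
  simpa using natDegree_pow_le_of_le d (natDegree_add_le_of_degree_le (by simp) natDegree_X_le)

theorem reflect_one_add_X_pow (d : ℕ) : reflect d ((1 + X : R[X]) ^ d) = (1 + X) ^ d := by
  ext i
  rw [coeff_reflect, coeff_one_add_X_pow, coeff_one_add_X_pow]
  rcases le_or_gt i d with h | h
  · rw [revAt_le h, Nat.choose_symm h]
  · rw [revAt_eq_self_of_lt h]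

theorem reflect_succ_of_natDegree_le {p : R[X]} {N : ℕ} (h : p.natDegree ≤ N) :
    reflect (N + 1) p = X * reflect N p := by
  have h1 := reflect_mul (1 : R[X]) p (F := 1) (by simp) h
  rwa [one_mul, add_comm 1 N, reflect_one, pow_one] at h1

theorem reflect_succ_X_mul {p : R[X]} {N : ℕ} (h : p.natDegree ≤ N) :
    reflect (N + 1) (X * p) = reflect N p := by
  simpa [add_comm 1 N] using reflect_mul (X : R[X]) p natDegree_X_le h

end Reflect

section Unimodal

variable {R : Type*} [Semiring R] [PartialOrder R]

def UnimodalAt (p : R[X]) (m : ℕ) : Prop :=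
  (∀ i < m, p.coeff i ≤ p.coeff (i + 1)) ∧ ∀ i, m ≤ i → p.coeff (i + 1) ≤ p.coeff i

theorem unimodalAt_zero (m : ℕ) : UnimodalAt (0 : R[X]) m := by
  simp [UnimodalAt]

theorem UnimodalAt.X_mul {p : R[X]} {m : ℕ} (hp : UnimodalAt p m) (h0 : 0 ≤ p.coeff 0) :
    UnimodalAt (X * p) (m + 1) := by
  refine ⟨fun i hi => ?_, fun i hi => ?_⟩
  · rcases i with _ | i
    · simpa using h0
    · simpa only [coeff_X_mul] using hp.1 i (by omega)
  · obtain ⟨i, rfl⟩ : ∃ j, i = j + 1 := ⟨i - 1, by omega⟩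
    simpa only [coeff_X_mul] using hp.2 i (by omega)

theorem UnimodalAt.X_pow_mul {p : R[X]} {m : ℕ} (hp : UnimodalAt p m) (h0 : 0 ≤ p.coeff 0)
    (k : ℕ) : UnimodalAt (X ^ k * p) (m + k) := by
  induction k with
  | zero => simpa using hp
  | succ k ih =>
    rw [pow_succ', mul_assoc, ← add_assoc]
    refine ih.X_mul ?_
    rcases k with _ | k
    · simpa using h0
    · simp

variable [IsOrderedRing R]

theorem UnimodalAt.add {p q : R[X]} {m : ℕ} (hp : UnimodalAt p m) (hq : UnimodalAt q m) :
    UnimodalAt (p + q) m :=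
  ⟨fun i hi => by simpa only [coeff_add] using add_le_add (hp.1 i hi) (hq.1 i hi),
    fun i hi => by simpa only [coeff_add] using add_le_add (hp.2 i hi) (hq.2 i hi)⟩

theorem UnimodalAt.C_mul {p : R[X]} {m : ℕ} (hp : UnimodalAt p m) {c : R} (hc : 0 ≤ c) :
    UnimodalAt (C c * p) m :=
  ⟨fun i hi => by simpa only [coeff_C_mul] using mul_le_mul_of_nonneg_left (hp.1 i hi) hc,
    fun i hi => by simpa only [coeff_C_mul] using mul_le_mul_of_nonneg_left (hp.2 i hi) hc⟩

theorem unimodalAt_one_add_X_pow {d m : ℕ} (hlo : d ≤ 2 * m + 1) (hhi : 2 * m ≤ d + 1) :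
    UnimodalAt ((1 + X : R[X]) ^ d) m := by
  refine ⟨fun i hi => ?_, fun i hi => ?_⟩ <;> simp only [coeff_one_add_X_pow] <;> gcongr
  · exact Nat.choose_le_succ_of_two_mul_lt (by omega)
  · exact Nat.choose_succ_le_of_le_two_mul_add_one (by omega)

end Unimodal

end Polynomial

theorem isGammaPos_zero (m : ℕ) : IsGammaPos 0 m :=
  ⟨0, fun _ => le_rfl, by simp⟩

theorem IsGammaPos.add {p q : ℝ[X]} {m : ℕ} (hp : IsGammaPos p m) (hq : IsGammaPos q m) :
    IsGammaPos (p + q) m := by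
  obtain ⟨γ, hγ, rfl⟩ := hp
  obtain ⟨δ, hδ, rfl⟩ := hq
  refine ⟨γ + δ, fun k => add_nonneg (hγ k) (hδ k), ?_⟩
  simp only [← Finset.sum_add_distrib, Pi.add_apply, C_add, add_mul]

theorem isGammaPos_C_mul_X_pow_mul {c : ℝ} (hc : 0 ≤ c) {k m : ℕ} (hk : 2 * k ≤ m) :
    IsGammaPos (C c * X ^ k * (1 + X) ^ (m - 2 * k)) m := by
  refine ⟨Pi.single k c, fun j => ?_, ?_⟩
  · rcases eq_or_ne j k with rfl | hj <;> simp [*]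
  · rw [Finset.sum_eq_single_of_mem k (by simp; omega) (fun j _ hj => by simp [hj])]
    simp

@[elab_as_elim]
theorem IsGammaPos.induction {P : ℝ[X] → Prop} {p : ℝ[X]} {m : ℕ} (hp : IsGammaPos p m)
    (zero : P 0) (add : ∀ p q, P p → P q → P (p + q))
    (term : ∀ c k, 0 ≤ c → 2 * k ≤ m → P (C c * X ^ k * (1 + X) ^ (m - 2 * k))) : P p := by
  obtain ⟨γ, hγ, rfl⟩ := hp
  exact Finset.sum_induction _ P add zero fun k hk =>
    term _ k (hγ k) (by have := Finset.mem_range.1 hk; omega)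

theorem IsGammaPos.mul {p q : ℝ[X]} {m l : ℕ} (hp : IsGammaPos p m) (hq : IsGammaPos q l) :
    IsGammaPos (p * q) (m + l) := by
  refine hp.induction (by simpa using isGammaPos_zero _)
    (fun p p' hp hp' => by simpa only [add_mul] using hp.add hp') (fun c k hc hk => ?_)
  refine hq.induction (by simpa using isGammaPos_zero _)
    (fun q q' hq hq' => by simpa only [mul_add] using hq.add hq') (fun d j hd hj => ?_)
  convert isGammaPos_C_mul_X_pow_mul (mul_nonneg hc hd) (show 2 * (k + j) ≤ m + l by omega)
    using 1
  rw [show m + l - 2 * (k + j) = (m - 2 * k) + (l - 2 * j) by omega, C_mul]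
  ring

theorem isGammaPos_C {c : ℝ} (hc : 0 ≤ c) : IsGammaPos (C c) 0 := by
  simpa using isGammaPos_C_mul_X_pow_mul hc (le_refl (2 * 0))

theorem isGammaPos_one : IsGammaPos 1 0 := by
  simpa using isGammaPos_C zero_le_one

theorem isGammaPos_X : IsGammaPos X 2 := by
  simpa using isGammaPos_C_mul_X_pow_mul zero_le_one (le_refl (2 * 1))

namespace IsGammaPos

variable {p : ℝ[X]} {m : ℕ}

theorem natDegree_le (hp : IsGammaPos p m) : p.natDegree ≤ m := by
  refine hp.induction (by simp) (fun p q hp hq => natDegree_add_le_of_degree_le hp hq)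
    (fun c k _ hk => ?_)
  refine natDegree_mul_le_of_le (natDegree_C_mul_le _ _ |>.trans (natDegree_X_pow_le k))
    (natDegree_one_add_X_pow_le _) |>.trans ?_
  omega

theorem reflect_eq (hp : IsGammaPos p m) : reflect m p = p := by
  refine hp.induction (by simp) (fun p q hp hq => by rw [reflect_add, hp, hq])
    (fun c k _ hk => ?_)
  have h := reflect_mul (C c * X ^ k) ((1 + X : ℝ[X]) ^ (m - 2 * k))
    (natDegree_C_mul_le _ _ |>.trans (natDegree_X_pow_le k |>.trans (by omega : k ≤ 2 * k)))
    (natDegree_one_add_X_pow_le _)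
  rwa [show 2 * k + (m - 2 * k) = m by omega, reflect_C_mul_X_pow, revAt_le (by omega),
    show 2 * k - k = k by omega, reflect_one_add_X_pow] at h

theorem coeff_nonneg (hp : IsGammaPos p m) (i : ℕ) : 0 ≤ p.coeff i := by
  refine hp.induction (by simp) (fun p q hp hq => by simpa using add_nonneg hp hq)
    (fun c k hc _ => ?_)
  rw [mul_assoc, coeff_C_mul, coeff_X_pow_mul', coeff_one_add_X_pow]
  split_ifs <;> positivity

theorem unimodalAt {n : ℕ} (hp : IsGammaPos p n) (hlo : n ≤ 2 * m + 1) (hhi : 2 * m ≤ n + 1) :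
    UnimodalAt p m := by
  refine hp.induction (unimodalAt_zero m) (fun p q hp hq => hp.add hq) (fun c k hc hk => ?_)
  have h := (unimodalAt_one_add_X_pow (R := ℝ) (d := n - 2 * k) (m := m - k)
    (by omega) (by omega)).X_pow_mul (by rw [coeff_one_add_X_pow]; positivity) k
  rw [show m - k + k = m by omega] at h
  rw [mul_assoc]
  exact h.C_mul hc

end IsGammaPos

/-- For `n = 0` the center `(n - 1) / 2` of `b` is junk (`0 - 1 = 0` in `ℕ`), so `b` must vanish. -/
def IsBiGammaPos (p : ℝ[X]) (n : ℕ) : Prop :=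
  ∃ a b, p = a + X * b ∧ IsGammaPos a n ∧ IsGammaPos b (n - 1) ∧ (n = 0 → b = 0)

theorem IsGammaPos.isBiGammaPos {p : ℝ[X]} {n : ℕ} (hp : IsGammaPos p n) : IsBiGammaPos p n :=
  ⟨p, 0, by simp, hp, isGammaPos_zero _, fun _ => rfl⟩

theorem IsBiGammaPos.add {p q : ℝ[X]} {n : ℕ} (hp : IsBiGammaPos p n) (hq : IsBiGammaPos q n) :
    IsBiGammaPos (p + q) n := by
  obtain ⟨a, b, rfl, ha, hb, hb0⟩ := hp
  obtain ⟨a', b', rfl, ha', hb', hb0'⟩ := hq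
  exact ⟨a + a', b + b', by ring, ha.add ha', hb.add hb',
    fun hn => by rw [hb0 hn, hb0' hn, add_zero]⟩

theorem isBiGammaPos_sum {ι : Type*} (s : Finset ι) {p : ι → ℝ[X]} {n : ℕ}
    (h : ∀ i ∈ s, IsBiGammaPos (p i) n) : IsBiGammaPos (∑ i ∈ s, p i) n :=
  Finset.sum_induction p (IsBiGammaPos · n) (fun _ _ => IsBiGammaPos.add)
    (isGammaPos_zero n).isBiGammaPos h

theorem reflect_succ_add_X_mul {a b : ℝ[X]} {n : ℕ} (ha : IsGammaPos a n)
    (hb : IsGammaPos b (n - 1)) (hb0 : n = 0 → b = 0) :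
    reflect (n + 1) (a + X * b) = X * (a + b) := by
  have hXb : reflect n b = X * b := by
    rcases n with _ | n
    · simp [hb0 rfl]
    · rw [Nat.add_sub_cancel] at hb
      rw [reflect_succ_of_natDegree_le hb.natDegree_le, hb.reflect_eq]
  rw [reflect_add, reflect_succ_of_natDegree_le ha.natDegree_le, ha.reflect_eq,
    reflect_succ_X_mul (hb.natDegree_le.trans (Nat.sub_le n 1)), hXb, mul_add]

theorem IsGammaPos.mul_reflect_succ {c p : ℝ[X]} {k j : ℕ} (hc : IsGammaPos c k)
    (hp : IsBiGammaPos p j) : IsBiGammaPos (c * reflect (j + 1) p) (k + j + 1) := by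
  obtain ⟨a, b, rfl, ha, hb, hb0⟩ := hp
  refine ⟨c * X * b, c * a, ?_, ?_, ?_, fun h => by omega⟩
  · rw [reflect_succ_add_X_mul ha hb hb0]
    ring
  · rcases j with _ | j
    · simpa [hb0 rfl] using isGammaPos_zero _
    · convert (hc.mul isGammaPos_X).mul hb using 1
      omega
  · simpa using hc.mul ha

theorem IsBiGammaPos.unimodalAt {p : ℝ[X]} {n : ℕ} (hp : IsBiGammaPos p n) :
    UnimodalAt p ((n + 1) / 2) := by
  obtain ⟨a, b, rfl, ha, hb, hb0⟩ := hp
  refine (ha.unimodalAt (by omega) (by omega)).add ?_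
  rcases n with _ | n
  · simpa [hb0 rfl] using unimodalAt_zero _
  · convert (hb.unimodalAt (m := (n + 2) / 2 - 1) (by omega) (by omega)).X_mul
      (hb.coeff_nonneg 0) using 2
    omega

theorem isBiGammaPos_of_recurrence (g : ℕ → ℝ[X]) (hg : ∀ n, IsGammaPos (g n) n)
    (M : ℕ → ℕ → ℝ) (hM : ∀ i j, 0 ≤ M i j) (f : ℕ → ℝ[X]) (hf0 : f 0 = 1)
    (hf : ∀ n, f (n + 1) = ∑ i ∈ Finset.range (n + 1), C (M n i) * g (n - i) * reflect i (f i))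
    (n : ℕ) : IsBiGammaPos (f (n + 1)) n := by
  induction n using Nat.strong_induction_on with
  | _ n ih =>
  rw [hf, Finset.sum_range_succ']
  refine (isBiGammaPos_sum _ fun j hj => ?_).add ?_
  · convert ((isGammaPos_C (hM n (j + 1))).mul (hg (n - (j + 1)))).mul_reflect_succ
      (ih j (Finset.mem_range.1 hj)) using 1
    have := Finset.mem_range.1 hj
    omega
  · simpa [hf0] using ((isGammaPos_C (hM n 0)).mul (hg n)).isBiGammaPos

theorem stmt15_general (g : ℕ → Polynomial ℝ)
    (hgpos : ∀ n, IsGammaPos (g n) n)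
    (M : ℕ → ℕ → ℝ) (hM : ∀ i j, 0 ≤ M i j)
    (f : ℕ → Polynomial ℝ) (hf0 : f 0 = 1)
    (hfrec : ∀ n, f (n + 1) =
      ∑ i ∈ Finset.range (n + 1), C (M n i) * g (n - i) * reflect i (f i)) :
    (∀ n : ℕ, ∃ a b : Polynomial ℝ,
      f (n + 1) = a + X * b ∧
      a.natDegree ≤ n ∧ reflect n a = a ∧ IsGammaPos a n ∧
      b.natDegree ≤ n - 1 ∧ reflect (n - 1) b = b ∧ IsGammaPos b (n - 1)) ∧
    (∀ n : ℕ, ∃ m : ℕ,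
      (∀ i < m, (f n).coeff i ≤ (f n).coeff (i + 1)) ∧
      (∀ i, m ≤ i → (f n).coeff (i + 1) ≤ (f n).coeff i)) := by
  have hbi := isBiGammaPos_of_recurrence g hgpos M hM f hf0 hfrec
  refine ⟨fun n => ?_, fun n => ?_⟩
  · obtain ⟨a, b, hab, ha, hb, -⟩ := hbi n
    exact ⟨a, b, hab, ha.natDegree_le, ha.reflect_eq, ha, hb.natDegree_le, hb.reflect_eq, hb⟩
  · rcases n with _ | n
    · exact ⟨0, hf0 ▸ isGammaPos_one.unimodalAt (by omega) (by omega)⟩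
    · exact ⟨_, (hbi n).unimodalAt⟩

/-- Let `g_n` be real polynomials with `deg g_n = n`, each `γ`-positive with center `n/2`,
and let `M_{i,j} ≥ 0`. Define `f_0 = 1` and
`f_{n+1}(x) = Σ_{i=0}^n M_{n,i} g_{n-i}(x) · xⁱf_i(1/x)` (the reflection `xⁱf_i(1/x)` is
`reflect i (f i)`). Then every `f_{n+1}` is bi-`γ`-positive with respect to degree `n`:
`f_{n+1} = a + x·b` with `a` symmetric w.r.t. degree `n` and `γ`-positive with center `n/2`,
and `b` symmetric w.r.t. degree `n-1` and `γ`-positive with center `(n-1)/2`.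
In particular each `f_n` is unimodal. -/
theorem stmt15 (g : ℕ → Polynomial ℝ) (hgdeg : ∀ n, (g n).degree = (n : ℕ))
    (hgpos : ∀ n, IsGammaPos (g n) n)
    (M : ℕ → ℕ → ℝ) (hM : ∀ i j, 0 ≤ M i j)
    (f : ℕ → Polynomial ℝ) (hf0 : f 0 = 1)
    (hfrec : ∀ n, f (n + 1) =
      ∑ i ∈ Finset.range (n + 1), C (M n i) * g (n - i) * reflect i (f i)) :
    (∀ n : ℕ, ∃ a b : Polynomial ℝ,
      f (n + 1) = a + X * b ∧
      a.natDegree ≤ n ∧ reflect n a = a ∧ IsGammaPos a n ∧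
      b.natDegree ≤ n - 1 ∧ reflect (n - 1) b = b ∧ IsGammaPos b (n - 1)) ∧
    (∀ n : ℕ, ∃ m : ℕ,
      (∀ i < m, (f n).coeff i ≤ (f n).coeff (i + 1)) ∧
      (∀ i, m ≤ i → (f n).coeff (i + 1) ≤ (f n).coeff i)) :=
  stmt15_general g hgpos M hM f hf0 hfrec
end

section
/- Let D be the derivation on the polynomial ring ℤ[x,a,b,c] determined by D(x) = c, D(a) = 2xc, D(b) = 2xc, D(c) = x(a+b). Then for every n ≥ 1, D^n(x) = Σ_{T ∈ T_n} x^{singleton(T)} c^{evenp(T)} a^{des^o(T)} b^{asc^o(T)}. -/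
open Finset

/-- An increasing tree on `[n]₀ = {0,1,…,n}`: each non-root vertex `v ∈ {1,…,n}` has a
parent `< v`. The vertex `k+1` (for `k : Fin n`) has parent `T k ∈ {0,…,k}`. -/
abbrev ITree (n : ℕ) := ∀ k : Fin n, Fin ((k : ℕ) + 1)

/-- The parent of the vertex `v ∈ {1,…,n}` in `T` (junk value `n+1` otherwise). -/
def par (n : ℕ) (T : ITree n) (v : ℕ) : ℕ :=
  if h : 1 ≤ v ∧ v - 1 < n then (T ⟨v - 1, h.2⟩ : ℕ) else n + 1

/-- The set of children of the vertex `u` in `T`. -/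
def childrenF (n : ℕ) (T : ITree n) (u : ℕ) : Finset ℕ :=
  (Finset.Icc 1 n).filter fun v => par n T v = u

/-- The number of children of the vertex `u` in `T`. -/
def childn (n : ℕ) (T : ITree n) (u : ℕ) : ℕ := (childrenF n T u).card

/-- One pass of the tree-matching algorithm: given the set `used` of already matched
vertices, let `U` be the set of unmatched vertices having children; if `U ≠ ∅`, pick
`a = min U`, `b = min Child_T(a)`, record the pair `(a,b)` and continue. -/
def pairsAux (n : ℕ) (T : ITree n) : ℕ → Finset ℕ → Finset (ℕ × ℕ)
  | 0, _ => ∅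
  | fuel + 1, used =>
    let U := (Finset.range (n + 1)).filter fun v => v ∉ used ∧ (childrenF n T v).Nonempty
    if U.Nonempty then
      let a := WithTop.untopD 0 U.min
      let b := WithTop.untopD 0 ((childrenF n T a).min)
      insert (a, b) (pairsAux n T fuel (insert a (insert b used)))
    else ∅

/-- The tree-matching `M_T` of `T` (the algorithm stops after at most `n+1` steps). -/
def MT (n : ℕ) (T : ITree n) : Finset (ℕ × ℕ) := pairsAux n T (n + 1) ∅

/-- The number of tree-singletons: vertices of `[n]₀` occurring in no pair of `M_T`. -/
def singletonT (n : ℕ) (T : ITree n) : ℕ :=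
  ((Finset.range (n + 1)).filter fun v => ∀ ab ∈ MT n T, v ≠ ab.1 ∧ v ≠ ab.2).card

/-- The number of even tree-pairs: pairs `(a,b) ∈ M_T` with
`child_T(a) + child_T(b) - 1` even. -/
def evenpT (n : ℕ) (T : ITree n) : ℕ :=
  ((MT n T).filter fun ab => Even (childn n T ab.1 + childn n T ab.2 - 1)).card

/-- `max ((Child_T(a) ∪ Child_T(b)) \ {b})` for a pair `(a,b)` (junk value `0` if empty). -/
def maxOther (n : ℕ) (T : ITree n) (ab : ℕ × ℕ) : ℕ :=
  WithBot.unbotD 0 (((childrenF n T ab.1 ∪ childrenF n T ab.2).erase ab.2).max)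

/-- The number of odd descent tree-pairs: odd pairs `(a,b) ∈ M_T` whose maximal
child `v = max ((Child_T(a) ∪ Child_T(b)) \ {b})` satisfies `p_T(v) = a`. -/
def desoT (n : ℕ) (T : ITree n) : ℕ :=
  ((MT n T).filter fun ab => Odd (childn n T ab.1 + childn n T ab.2 - 1) ∧
    maxOther n T ab ∈ childrenF n T ab.1).card

/-- The number of odd ascent tree-pairs: odd pairs `(a,b) ∈ M_T` whose maximal
child `v = max ((Child_T(a) ∪ Child_T(b)) \ {b})` satisfies `p_T(v) = b`. -/
def ascoT (n : ℕ) (T : ITree n) : ℕ :=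
  ((MT n T).filter fun ab => Odd (childn n T ab.1 + childn n T ab.2 - 1) ∧
    maxOther n T ab ∈ childrenF n T ab.2).card

open MvPolynomial

/-- The derivation `D` on `ℤ[x,a,b,c]` with `D(x) = c`, `D(a) = 2xc`, `D(b) = 2xc`,
`D(c) = x(a+b)` (variables `x = X 0`, `a = X 1`, `b = X 2`, `c = X 3`). -/
noncomputable def DG : Derivation ℤ (MvPolynomial (Fin 4) ℤ) (MvPolynomial (Fin 4) ℤ) :=
  MvPolynomial.mkDerivation ℤ
    ![X 3, 2 * X 0 * X 3, 2 * X 0 * X 3, X 0 * (X 1 + X 2)]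

namespace Stmt17

def pA (V : Finset ℕ) (C : ℕ → Finset ℕ) : ℕ → Finset ℕ → Finset (ℕ × ℕ)
  | 0, _ => ∅
  | fuel + 1, used =>
    let U := V.filter fun v => v ∉ used ∧ (C v).Nonempty
    if U.Nonempty then
      let a := U.min.untopD 0
      let b := ((C a).min).untopD 0
      insert (a, b) (pA V C fuel (insert a (insert b used)))
    else ∅

lemma min_untop'_eq {s : Finset ℕ} (h : s.Nonempty) : s.min.untopD 0 = s.min' h := by
  rw [← Finset.coe_min' h]; rfl

lemma min_untop'_mem {s : Finset ℕ} (h : s.Nonempty) : s.min.untopD 0 ∈ s := by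
  rw [min_untop'_eq h]; exact s.min'_mem h

lemma min_untop'_le {s : Finset ℕ} (h : s.Nonempty) {x : ℕ} (hx : x ∈ s) :
    s.min.untopD 0 ≤ x := by
  rw [min_untop'_eq h]; exact s.min'_le x hx

def UU (V : Finset ℕ) (C : ℕ → Finset ℕ) (used : Finset ℕ) : Finset ℕ :=
  V.filter fun v => v ∉ used ∧ (C v).Nonempty

def aA (V : Finset ℕ) (C : ℕ → Finset ℕ) (used : Finset ℕ) : ℕ :=
  (UU V C used).min.untopD 0

def bB (V : Finset ℕ) (C : ℕ → Finset ℕ) (used : Finset ℕ) : ℕ :=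
  (C (aA V C used)).min.untopD 0

lemma pA_succ (V : Finset ℕ) (C : ℕ → Finset ℕ) (fuel : ℕ) (used : Finset ℕ) :
    pA V C (fuel + 1) used =
      if (UU V C used).Nonempty then
        insert (aA V C used, bB V C used)
          (pA V C fuel (insert (aA V C used) (insert (bB V C used) used)))
      else ∅ := by
  rw [pA]; rfl

lemma mem_UU {V : Finset ℕ} {C : ℕ → Finset ℕ} {used : Finset ℕ} {v : ℕ} :
    v ∈ UU V C used ↔ v ∈ V ∧ v ∉ used ∧ (C v).Nonempty := by
  simp [UU]

lemma aA_mem {V : Finset ℕ} {C : ℕ → Finset ℕ} {used : Finset ℕ}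
    (h : (UU V C used).Nonempty) : aA V C used ∈ UU V C used := min_untop'_mem h

lemma bB_mem {V : Finset ℕ} {C : ℕ → Finset ℕ} {used : Finset ℕ}
    (h : (UU V C used).Nonempty) : bB V C used ∈ C (aA V C used) :=
  min_untop'_mem ((mem_UU.1 (aA_mem h)).2.2)

/-- Adding a childless vertex to `used` does not change the run. -/
lemma pA_insert_childless {V : Finset ℕ} {C : ℕ → Finset ℕ} {w : ℕ} (hw : C w = ∅) :
    ∀ fuel used, pA V C fuel (insert w used) = pA V C fuel used := by
  intro fuel
  induction fuel with
  | zero => intro used; rfl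
  | succ fuel ih =>
    intro used
    have hU : UU V C (insert w used) = UU V C used := by
      ext v
      simp only [mem_UU, mem_insert]
      constructor
      · rintro ⟨h1, h2, h3⟩; exact ⟨h1, fun h => h2 (Or.inr h), h3⟩
      · rintro ⟨h1, h2, h3⟩
        refine ⟨h1, ?_, h3⟩
        rintro (rfl | h)
        · exact absurd hw (by simpa [hw] using h3.ne_empty)
        · exact h2 h
    have ha : aA V C (insert w used) = aA V C used := by simp only [aA, hU]
    have hb : bB V C (insert w used) = bB V C used := by simp only [bB, aA, hU]
    rw [pA_succ, pA_succ, hU, ha, hb]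
    split
    · rw [Finset.insert_comm (bB V C used) w used, Finset.insert_comm (aA V C used) w _, ih]
    · rfl

lemma UU_step_subset {V : Finset ℕ} {C : ℕ → Finset ℕ} {used : Finset ℕ} :
    UU V C (insert (aA V C used) (insert (bB V C used) used)) ⊆
      (UU V C used).erase (aA V C used) := by
  intro v hv
  rw [mem_UU] at hv
  rw [mem_erase, mem_UU]
  simp only [mem_insert, not_or] at hv
  exact ⟨hv.2.1.1, hv.1, hv.2.1.2.2, hv.2.2⟩

lemma UU_card_step {V : Finset ℕ} {C : ℕ → Finset ℕ} {used : Finset ℕ}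
    (h : (UU V C used).Nonempty) :
    (UU V C (insert (aA V C used) (insert (bB V C used) used))).card + 1 ≤
      (UU V C used).card := by
  have h1 : (UU V C (insert (aA V C used) (insert (bB V C used) used))).card ≤
      ((UU V C used).erase (aA V C used)).card := Finset.card_le_card UU_step_subset
  have h2 : ((UU V C used).erase (aA V C used)).card + 1 = (UU V C used).card :=
    Finset.card_erase_add_one (aA_mem h)
  omega

/-- Stabilization: once the fuel is at least the number of available vertices, the run
has terminated. -/
lemma pA_stab {V : Finset ℕ} {C : ℕ → Finset ℕ} :
    ∀ fuel used, (UU V C used).card ≤ fuel → pA V C (fuel + 1) used = pA V C fuel used := by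
  intro fuel
  induction fuel with
  | zero =>
    intro used h
    have hne : ¬ (UU V C used).Nonempty := by
      intro hne; have := Finset.card_pos.2 hne; omega
    rw [pA_succ, if_neg hne]; rfl
  | succ fuel ih =>
    intro used h
    by_cases hne : (UU V C used).Nonempty
    · rw [pA_succ V C (fuel + 1) used, pA_succ V C fuel used, if_pos hne, if_pos hne]
      congr 1
      refine ih _ ?_
      have h2 := UU_card_step (V := V) (C := C) (used := used) hne
      omega
    · rw [pA_succ V C (fuel + 1) used, pA_succ V C fuel used, if_neg hne, if_neg hne]

lemma pA_stab' {V : Finset ℕ} {C : ℕ → Finset ℕ} {used : Finset ℕ} {f1 f2 : ℕ}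
    (h1 : (UU V C used).card ≤ f1) (h12 : f1 ≤ f2) :
    pA V C f2 used = pA V C f1 used := by
  induction f2 with
  | zero => have : f1 = 0 := by omega
            rw [this]
  | succ f2 ih =>
    rcases Nat.lt_or_ge f1 (f2 + 1) with h | h
    · rw [pA_stab f2 used (by omega), ih (by omega)]
    · have : f1 = f2 + 1 := by omega
      rw [this]

/-- Membership facts for pairs produced by the run. -/
lemma mem_pA {V : Finset ℕ} {C : ℕ → Finset ℕ} :
    ∀ {fuel used p}, p ∈ pA V C fuel used →
      p.1 ∈ V ∧ p.1 ∉ used ∧ (C p.1).Nonempty ∧ p.2 = (C p.1).min.untopD 0 ∧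
        p.2 ∈ C p.1 := by
  intro fuel
  induction fuel with
  | zero => intro used p hp; simp [pA] at hp
  | succ fuel ih =>
    intro used p hp
    rw [pA_succ] at hp
    split at hp
    · rename_i hne
      rcases Finset.mem_insert.1 hp with rfl | hp
      · have h1 := aA_mem hne
        rw [mem_UU] at h1
        exact ⟨h1.1, h1.2.1, h1.2.2, rfl, bB_mem hne⟩
      · have := ih hp
        refine ⟨this.1, ?_, this.2.2⟩
        have := this.2.1
        simp only [mem_insert, not_or] at this
        exact this.2.2
    · simp at hp

section Invariant

variable {V : Finset ℕ} {C : ℕ → Finset ℕ}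

/-- Invariant: children of unused vertices are unused. -/
def InvP (C : ℕ → Finset ℕ) (used : Finset ℕ) : Prop :=
  ∀ v, v ∉ used → ∀ w ∈ C v, w ∉ used

variable (Hlt : ∀ v w, w ∈ C v → v < w) (Hup : ∀ v v' w, w ∈ C v → w ∈ C v' → v = v')
  (HCV : ∀ v, (C v).Nonempty → v ∈ V)

include Hlt Hup HCV

lemma InvP_step {used : Finset ℕ} (hI : InvP C used) (hne : (UU V C used).Nonempty) :
    InvP C (insert (aA V C used) (insert (bB V C used) used)) := by
  intro v hv w hw
  simp only [mem_insert, not_or] at hv ⊢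
  refine ⟨?_, ?_, hI v hv.2.2 w hw⟩
  · rintro rfl
    have hvU : v ∈ UU V C used := mem_UU.2 ⟨HCV v ⟨_, hw⟩, hv.2.2, ⟨_, hw⟩⟩
    have h1 : aA V C used ≤ v := min_untop'_le hne hvU
    have h2 := Hlt v _ hw
    omega
  · rintro rfl
    exact hv.1 (Hup v (aA V C used) _ hw (bB_mem hne))

lemma pA_avoid : ∀ {fuel used p}, InvP C used → p ∈ pA V C fuel used →
    p.1 ∉ used ∧ p.2 ∉ used := by
  intro fuel
  induction fuel with
  | zero => intro used p _ hp; simp [pA] at hp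
  | succ fuel ih =>
    intro used p hI hp
    rw [pA_succ] at hp
    split at hp
    · rename_i hne
      rcases Finset.mem_insert.1 hp with rfl | hp
      · refine ⟨(mem_UU.1 (aA_mem hne)).2.1, ?_⟩
        exact hI _ (mem_UU.1 (aA_mem hne)).2.1 _ (bB_mem hne)
      · have h2 := ih (InvP_step Hlt Hup HCV hI hne) hp
        simp only [mem_insert, not_or] at h2
        exact ⟨h2.1.2.2, h2.2.2.2⟩
    · simp at hp

lemma pA_fst_ne_snd : ∀ {fuel used p q}, InvP C used → p ∈ pA V C fuel used →
    q ∈ pA V C fuel used → p.1 ≠ q.2 := by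
  intro fuel
  induction fuel with
  | zero => intro used p q _ hp; simp [pA] at hp
  | succ fuel ih =>
    intro used p q hI hp hq
    rw [pA_succ] at hp hq
    split at hp
    · rename_i hne
      rw [if_pos hne] at hq
      have hI2 := InvP_step Hlt Hup HCV hI hne
      rcases Finset.mem_insert.1 hp with rfl | hp <;>
        rcases Finset.mem_insert.1 hq with rfl | hq
      · have := Hlt _ _ (bB_mem hne); omega
      · have h2 := pA_avoid Hlt Hup HCV hI2 hq
        simp only [mem_insert, not_or] at h2
        exact fun h => h2.2.1 h.symm
      · have h2 := pA_avoid Hlt Hup HCV hI2 hp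
        simp only [mem_insert, not_or] at h2
        exact fun h => h2.1.2.1 h
      · exact ih hI2 hp hq
    · simp at hp

omit Hlt Hup HCV in
/-- every unused vertex with children gets matched, given enough fuel. -/
lemma pA_matched : ∀ {fuel used v}, (UU V C used).card ≤ fuel → v ∈ UU V C used →
    ∃ p ∈ pA V C fuel used, v = p.1 ∨ v = p.2 := by
  intro fuel
  induction fuel with
  | zero =>
    intro used v h hv
    have := Finset.card_pos.2 ⟨v, hv⟩; omega
  | succ fuel ih =>
    intro used v h hv
    have hne : (UU V C used).Nonempty := ⟨v, hv⟩
    rw [pA_succ, if_pos hne]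
    by_cases hva : v = aA V C used
    · exact ⟨_, Finset.mem_insert_self _ _, Or.inl hva⟩
    by_cases hvb : v = bB V C used
    · exact ⟨_, Finset.mem_insert_self _ _, Or.inr hvb⟩
    have hv2 : v ∈ UU V C (insert (aA V C used) (insert (bB V C used) used)) := by
      rw [mem_UU] at hv ⊢
      simp only [mem_insert, not_or]
      exact ⟨hv.1, ⟨hva, hvb, hv.2.1⟩, hv.2.2⟩
    have hcard := UU_card_step (V := V) (C := C) (used := used) hne
    obtain ⟨p, hp, hvp⟩ := ih (by omega) hv2
    exact ⟨p, Finset.mem_insert_of_mem hp, hvp⟩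

end Invariant

section Compare

variable {V : Finset ℕ} {C C' : ℕ → Finset ℕ} {u₀ m : ℕ}

lemma min_insert_big {m : ℕ} {s : Finset ℕ} (hs : s.Nonempty) (hm : ∀ w ∈ s, w < m) :
    (insert m s).min.untopD 0 = s.min.untopD 0 := by
  rw [min_untop'_eq (insert_nonempty m s), min_untop'_eq hs]
  refine le_antisymm (Finset.min'_le _ _ (mem_insert_of_mem (s.min'_mem hs))) ?_
  rcases Finset.mem_insert.1 ((insert m s).min'_mem (insert_nonempty m s)) with h | h
  · rw [h]; exact le_of_lt (hm _ (s.min'_mem hs))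
  · exact Finset.min'_le _ _ h

lemma min_insert_notmin {u : ℕ} {s : Finset ℕ} (hs : s.Nonempty)
    (h : ∃ w ∈ s, w < u) : (insert u s).min.untopD 0 = s.min.untopD 0 := by
  rw [min_untop'_eq (insert_nonempty u s), min_untop'_eq hs]
  obtain ⟨w, hw, hwu⟩ := h
  refine le_antisymm (Finset.min'_le _ _ (mem_insert_of_mem (s.min'_mem hs))) ?_
  rcases Finset.mem_insert.1 ((insert u s).min'_mem (insert_nonempty u s)) with h | h
  · rw [h]
    calc s.min' hs ≤ w := s.min'_le _ hw
    _ ≤ u := le_of_lt hwu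
  · exact Finset.min'_le _ _ h

lemma min_insert_least {u : ℕ} {s : Finset ℕ} (h : ∀ w ∈ s, u ≤ w) :
    (insert u s).min.untopD 0 = u := by
  have hne : (insert u s).Nonempty := insert_nonempty u s
  rw [min_untop'_eq hne]
  refine le_antisymm (Finset.min'_le _ _ (mem_insert_self _ _)) ?_
  rcases Finset.mem_insert.1 ((insert u s).min'_mem hne) with hh | hh
  · rw [hh]
  · rw [Finset.le_min'_iff]
    intro y hy
    rcases Finset.mem_insert.1 hy with rfl | hy
    · exact le_refl _
    · exact h _ hy

variable (Hform : ∀ v, C' v = if v = u₀ then insert m (C v) else C v)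
  (Hm : ∀ v w, w ∈ C v → w < m)
  (Hlt : ∀ v w, w ∈ C v → v < w)
  (HCm : C m = ∅) (HmV : m ∉ V) (Hu₀V : u₀ ∈ V)

include Hform Hm HCm HmV Hu₀V

omit Hform Hm HCm in
lemma Hu₀m : u₀ ≠ m := fun h => HmV (h ▸ Hu₀V)

lemma UU'_eq {used : Finset ℕ} (h : (C u₀).Nonempty ∨ u₀ ∈ used) :
    UU (insert m V) C' used = UU V C used := by
  ext v
  simp only [mem_UU, mem_insert]
  by_cases hvm : v = m
  · subst hvm
    have hC'm : C' v = ∅ := by rw [Hform v, if_neg (Ne.symm (Hu₀m HmV Hu₀V)), HCm]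
    simp [hC'm, HmV, HCm]
  · by_cases hvu : v = u₀
    · subst hvu
      rcases h with h | h
      · have : C' v = insert m (C v) := by rw [Hform v, if_pos rfl]
        simp [this, hvm, h]
      · simp [h]
    · have : C' v = C v := by rw [Hform v, if_neg hvu]
      simp [this, hvm]

lemma UU'_insert {used : Finset ℕ} (hC : C u₀ = ∅) (hu : u₀ ∉ used) :
    UU (insert m V) C' used = insert u₀ (UU V C used) := by
  ext v
  simp only [mem_UU, mem_insert]
  by_cases hvm : v = m
  · subst hvm
    have hC'm : C' v = ∅ := by rw [Hform v, if_neg (Ne.symm (Hu₀m HmV Hu₀V)), HCm]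
    have : v ≠ u₀ := Ne.symm (Hu₀m HmV Hu₀V)
    simp [hC'm, HmV, this]
  · by_cases hvu : v = u₀
    · subst hvu
      have : C' v = insert m (C v) := by rw [Hform v, if_pos rfl]
      simp [this, Hu₀V, hu]
    · have : C' v = C v := by rw [Hform v, if_neg hvu]
      simp [this, hvm, hvu]

include Hlt in
/-- Case 1/2: if `u₀` has children, is used, or occurs as the second member of some pair,
then the extended run produces the same pairs. -/
lemma pA_ext_eq : ∀ fuel used,
    ((C u₀).Nonempty ∨ u₀ ∈ used ∨ ∃ p ∈ pA V C fuel used, p.2 = u₀) →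
    pA (insert m V) C' fuel used = pA V C fuel used := by
  intro fuel
  induction fuel with
  | zero => intro used _; rfl
  | succ fuel ih =>
    intro used hyp
    by_cases h1 : (C u₀).Nonempty ∨ u₀ ∈ used
    · have hUU := UU'_eq Hform Hm HCm HmV Hu₀V (used := used) h1
      by_cases hne : (UU V C used).Nonempty
      · have ha : aA (insert m V) C' used = aA V C used := by rw [aA, aA, hUU]
        have haU : aA V C used ∈ UU V C used := aA_mem hne
        have hb : bB (insert m V) C' used = bB V C used := by
          rw [bB, bB, ha]
          by_cases hau : aA V C used = u₀
          · rw [Hform, if_pos hau]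
            have hCu : (C u₀).Nonempty := by
              rcases h1 with h | h
              · exact h
              · exact absurd ((mem_UU.1 haU).2.1) (fun hn => hn (hau ▸ h))
            rw [hau]
            exact min_insert_big hCu (fun w hw => Hm _ _ hw)
          · rw [Hform, if_neg hau]
        rw [pA_succ, pA_succ, hUU, if_pos hne, if_pos hne, ha, hb]
        congr 1
        refine ih _ ?_
        rcases h1 with h | h
        · exact Or.inl h
        · exact Or.inr (Or.inl (by simp [h]))
      · rw [pA_succ, pA_succ, hUU, if_neg hne, if_neg hne]
    · push_neg at h1
      obtain ⟨hCu, hu⟩ := h1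
      have hyp2 : ∃ p ∈ pA V C (fuel + 1) used, p.2 = u₀ := by
        rcases hyp with h | h | h
        · exact absurd h (by simp [hCu])
        · exact absurd h hu
        · exact h
      obtain ⟨p, hp, hpu⟩ := hyp2
      have hne : (UU V C used).Nonempty := by
        by_contra hne
        rw [pA_succ, if_neg hne] at hp
        simp at hp
      have hmem := mem_pA hp
      have ha₀U : p.1 ∈ UU V C used := mem_UU.2 ⟨hmem.1, hmem.2.1, hmem.2.2.1⟩
      have ha₀u : p.1 < u₀ := hpu ▸ Hlt _ _ hmem.2.2.2.2
      have hUU := UU'_insert Hform Hm HCm HmV Hu₀V (used := used) hCu hu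
      have hne' : (UU (insert m V) C' used).Nonempty := by
        rw [hUU]; exact insert_nonempty _ _
      have ha : aA (insert m V) C' used = aA V C used := by
        rw [aA, aA, hUU]
        exact min_insert_notmin hne ⟨p.1, ha₀U, ha₀u⟩
      have hanu : aA V C used ≠ u₀ := by
        intro h
        exact (mem_UU.1 (aA_mem hne)).2.2.ne_empty (h ▸ hCu)
      have hb : bB (insert m V) C' used = bB V C used := by
        rw [bB, bB, ha, Hform, if_neg hanu]
      rw [pA_succ, pA_succ, if_pos hne', if_pos hne, ha, hb]
      congr 1
      refine ih _ ?_
      rw [pA_succ, if_pos hne] at hp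
      rcases Finset.mem_insert.1 hp with heq | hp
      · refine Or.inr (Or.inl ?_)
        have : p.2 = bB V C used := by rw [heq]
        rw [← hpu, this]
        simp
      · exact Or.inr (Or.inr ⟨p, hp, hpu⟩)

include Hlt in
/-- Case 3: if `u₀` is childless and never matched, the extended run produces exactly one
additional pair `(u₀, m)`. -/
lemma pA_ext_insert : ∀ fuel used, C u₀ = ∅ → u₀ ∉ used →
    (∀ p ∈ pA V C fuel used, p.2 ≠ u₀) → (UU V C used).card + 1 ≤ fuel →
    pA (insert m V) C' fuel used = insert (u₀, m) (pA V C fuel used) := by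
  intro fuel
  induction fuel with
  | zero => intro used _ _ _ h; omega
  | succ fuel ih =>
    intro used hCu hu H hfuel
    have hUU := UU'_insert Hform Hm HCm HmV Hu₀V (used := used) hCu hu
    have hne' : (UU (insert m V) C' used).Nonempty := by
      rw [hUU]; exact insert_nonempty _ _
    by_cases hlt : ∃ w ∈ UU V C used, w < u₀
    · -- the extended run does the same step
      obtain ⟨w, hw, hwu⟩ := hlt
      have hne : (UU V C used).Nonempty := ⟨w, hw⟩
      have ha : aA (insert m V) C' used = aA V C used := by
        rw [aA, aA, hUU]; exact min_insert_notmin hne ⟨w, hw, hwu⟩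
      have hanu : aA V C used ≠ u₀ := by
        intro h
        exact (mem_UU.1 (aA_mem hne)).2.2.ne_empty (h ▸ hCu)
      have hb : bB (insert m V) C' used = bB V C used := by
        rw [bB, bB, ha, Hform, if_neg hanu]
      have habmem : (aA V C used, bB V C used) ∈ pA V C (fuel + 1) used := by
        rw [pA_succ, if_pos hne]; exact mem_insert_self _ _
      have hbnu : bB V C used ≠ u₀ := H _ habmem
      have hu₂ : u₀ ∉ insert (aA V C used) (insert (bB V C used) used) := by
        simp only [mem_insert, not_or]
        exact ⟨fun h => hanu h.symm, fun h => hbnu h.symm, hu⟩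
      have hH₂ : ∀ p ∈ pA V C fuel (insert (aA V C used) (insert (bB V C used) used)),
          p.2 ≠ u₀ := by
        intro p hp
        refine H p ?_
        rw [pA_succ, if_pos hne]
        exact mem_insert_of_mem hp
      have hcard := UU_card_step (V := V) (C := C) (used := used) hne
      rw [pA_succ, pA_succ, if_pos hne', if_pos hne, hUU, ha, hb] at *
      rw [ih _ hCu hu₂ hH₂ (by omega)]
      rw [Finset.insert_comm]
    · -- the extended run matches (u₀, m) now
      push_neg at hlt
      have ha : aA (insert m V) C' used = u₀ := by
        rw [aA, hUU]; exact min_insert_least hlt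
      have hb : bB (insert m V) C' used = m := by
        rw [bB, ha, Hform, if_pos rfl, hCu]
        rfl
      rw [pA_succ, if_pos hne', ha, hb]
      have e1 : pA (insert m V) C' fuel (insert u₀ (insert m used)) =
          pA V C fuel (insert u₀ (insert m used)) := by
        refine pA_ext_eq Hform Hm Hlt HCm HmV Hu₀V _ _ (Or.inr (Or.inl ?_))
        exact mem_insert_self _ _
      have e2 : pA V C fuel (insert u₀ (insert m used)) = pA V C fuel used := by
        rw [pA_insert_childless hCu, pA_insert_childless HCm]
      have e3 : pA V C fuel used = pA V C (fuel + 1) used :=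
        (pA_stab fuel used (by omega)).symm
      rw [e1, e2, e3]

end Compare


section Tree

lemma pairsAux_eq_pA (n : ℕ) (T : ITree n) : ∀ fuel used,
    pairsAux n T fuel used = pA (range (n + 1)) (childrenF n T) fuel used := by
  intro fuel
  induction fuel with
  | zero => intro used; rfl
  | succ fuel ih =>
    intro used
    rw [pairsAux, pA]
    simp only []
    split
    · rw [ih]
    · rfl

lemma mem_children {n : ℕ} {T : ITree n} {v w : ℕ} :
    w ∈ childrenF n T v ↔ (1 ≤ w ∧ w ≤ n) ∧ par n T w = v := by
  simp [childrenF, Finset.mem_filter, Finset.mem_Icc, and_comm]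

lemma par_lt {n : ℕ} {T : ITree n} {w : ℕ} (h1 : 1 ≤ w) (h2 : w ≤ n) :
    par n T w < w := by
  have h : 1 ≤ w ∧ w - 1 < n := ⟨h1, by omega⟩
  rw [par, dif_pos h]
  exact lt_of_lt_of_le (T ⟨w - 1, h.2⟩).isLt (show w - 1 + 1 ≤ w by omega)

lemma children_lt {n : ℕ} {T : ITree n} {v w : ℕ} (h : w ∈ childrenF n T v) : v < w := by
  rw [mem_children] at h
  have := par_lt (T := T) h.1.1 h.1.2
  omega

lemma children_le {n : ℕ} {T : ITree n} {v w : ℕ} (h : w ∈ childrenF n T v) : w ≤ n :=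
  (mem_children.1 h).1.2

lemma children_up {n : ℕ} {T : ITree n} {v v' w : ℕ} (h : w ∈ childrenF n T v)
    (h' : w ∈ childrenF n T v') : v = v' := by
  rw [mem_children] at h h'
  rw [← h.2, h'.2]

lemma children_nonempty_mem {n : ℕ} {T : ITree n} {v : ℕ}
    (h : (childrenF n T v).Nonempty) : v ∈ range (n + 1) := by
  obtain ⟨w, hw⟩ := h
  have h1 := children_lt hw
  have h2 := children_le hw
  rw [Finset.mem_range]
  omega

lemma children_top {n : ℕ} {T : ITree n} : childrenF n T (n + 1) = ∅ := by
  rw [Finset.eq_empty_iff_forall_notMem]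
  intro w hw
  have := children_lt hw
  have := children_le hw
  omega

/-- Extend `T` by a new maximal vertex `n+1` whose parent is `u`. -/
def extT (n : ℕ) (T : ITree n) (u : Fin (n + 1)) : ITree (n + 1) := fun k =>
  if h : (k : ℕ) < n then Fin.castLE (Nat.le_refl _) (T ⟨k, h⟩)
  else Fin.cast (by have := k.isLt; omega) u

lemma par_extT_low {n : ℕ} {T : ITree n} {u : Fin (n + 1)} {v : ℕ} (h1 : 1 ≤ v)
    (h2 : v ≤ n) : par (n + 1) (extT n T u) v = par n T v := by
  have hc : 1 ≤ v ∧ v - 1 < n + 1 := ⟨h1, by omega⟩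
  have hc' : 1 ≤ v ∧ v - 1 < n := ⟨h1, by omega⟩
  rw [par, par, dif_pos hc, dif_pos hc']
  have hlt : ((⟨v - 1, hc.2⟩ : Fin (n + 1)) : ℕ) < n := show v - 1 < n by omega
  simp only [extT]
  rw [dif_pos hlt]
  rfl

lemma par_extT_top {n : ℕ} {T : ITree n} {u : Fin (n + 1)} :
    par (n + 1) (extT n T u) (n + 1) = (u : ℕ) := by
  have hc : 1 ≤ n + 1 ∧ n + 1 - 1 < n + 1 := ⟨by omega, by omega⟩
  rw [par, dif_pos hc]
  have hlt : ¬ ((⟨n + 1 - 1, hc.2⟩ : Fin (n + 1)) : ℕ) < n := show ¬ n + 1 - 1 < n by omega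
  simp only [extT]
  rw [dif_neg hlt]
  rfl

lemma children_extT {n : ℕ} (T : ITree n) (u : Fin (n + 1)) (v : ℕ) :
    childrenF (n + 1) (extT n T u) v =
      if v = (u : ℕ) then insert (n + 1) (childrenF n T v) else childrenF n T v := by
  ext w
  rw [mem_children]
  by_cases hw : w = n + 1
  · subst hw
    rw [par_extT_top]
    have hnot : n + 1 ∉ childrenF n T v := fun h => by
      have := children_le h; omega
    split
    · rename_i h
      subst h
      constructor
      · intro; exact Finset.mem_insert_self _ _
      · intro; exact ⟨⟨by omega, le_refl _⟩, rfl⟩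
    · rename_i h
      constructor
      · rintro ⟨-, h2⟩; exact absurd h2.symm h
      · intro h2; exact absurd h2 hnot
  · have hrange : ((1 ≤ w ∧ w ≤ n + 1)) ↔ (1 ≤ w ∧ w ≤ n) := by omega
    constructor
    · rintro ⟨hr, hp⟩
      rw [hrange] at hr
      rw [par_extT_low hr.1 hr.2] at hp
      have : w ∈ childrenF n T v := mem_children.2 ⟨hr, hp⟩
      split
      · exact Finset.mem_insert_of_mem this
      · exact this
    · intro h
      have h2 : w ∈ childrenF n T v := by
        split at h
        · rcases Finset.mem_insert.1 h with h | h
          · exact absurd h hw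
          · exact h
        · exact h
      rw [mem_children] at h2
      refine ⟨by rw [hrange]; exact h2.1, ?_⟩
      rw [par_extT_low h2.1.1 h2.1.2]
      exact h2.2

lemma MT_eq_pA (n : ℕ) (T : ITree n) :
    MT n T = pA (range (n + 1)) (childrenF n T) (n + 1) ∅ := by
  rw [MT, pairsAux_eq_pA]

lemma UU_card_le (n : ℕ) (T : ITree n) (used : Finset ℕ) :
    (UU (range (n + 1)) (childrenF n T) used).card ≤ n + 1 := by
  calc (UU (range (n + 1)) (childrenF n T) used).card
      ≤ (range (n + 1)).card := Finset.card_le_card (Finset.filter_subset _ _)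
    _ = n + 1 := Finset.card_range _

lemma pA_eq_MT (n : ℕ) (T : ITree n) {fuel : ℕ} (h : n + 1 ≤ fuel) :
    pA (range (n + 1)) (childrenF n T) fuel ∅ = MT n T := by
  rw [MT_eq_pA]
  exact pA_stab' (UU_card_le n T ∅) h

lemma mem_MT {n : ℕ} {T : ITree n} {p : ℕ × ℕ} (hp : p ∈ MT n T) :
    p.1 ∈ range (n + 1) ∧ (childrenF n T p.1).Nonempty ∧
      p.2 = (childrenF n T p.1).min.untopD 0 ∧ p.2 ∈ childrenF n T p.1 := by
  rw [MT_eq_pA] at hp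
  have := mem_pA hp
  exact ⟨this.1, this.2.2.1, this.2.2.2.1, this.2.2.2.2⟩

lemma InvP_empty {C : ℕ → Finset ℕ} : InvP C ∅ := by
  intro v _ w _
  simp

lemma MT_fst_ne_snd {n : ℕ} {T : ITree n} {p q : ℕ × ℕ} (hp : p ∈ MT n T)
    (hq : q ∈ MT n T) : p.1 ≠ q.2 := by
  rw [MT_eq_pA] at hp hq
  exact pA_fst_ne_snd (fun v w h => children_lt h) (fun v v' w h h' => children_up h h')
    (fun v h => children_nonempty_mem h) InvP_empty hp hq

lemma MT_matched {n : ℕ} {T : ITree n} {v : ℕ} (hv : v ∈ range (n + 1))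
    (hc : (childrenF n T v).Nonempty) : ∃ p ∈ MT n T, v = p.1 ∨ v = p.2 := by
  rw [MT_eq_pA]
  exact pA_matched (UU_card_le n T ∅) (mem_UU.2 ⟨hv, by simp, hc⟩)

lemma MT_snd_le {n : ℕ} {T : ITree n} {p : ℕ × ℕ} (hp : p ∈ MT n T) : p.2 ≤ n :=
  children_le (mem_MT hp).2.2.2

lemma MT_fst_lt_snd {n : ℕ} {T : ITree n} {p : ℕ × ℕ} (hp : p ∈ MT n T) : p.1 < p.2 :=
  children_lt (mem_MT hp).2.2.2

/-- Case 1/2: extending at a matched-or-parent vertex leaves the matching unchanged. -/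
lemma MT_ext_eq {n : ℕ} {T : ITree n} {u : Fin (n + 1)}
    (h : (childrenF n T (u : ℕ)).Nonempty ∨ ∃ p ∈ MT n T, p.2 = (u : ℕ)) :
    MT (n + 1) (extT n T u) = MT n T := by
  rw [MT, pairsAux_eq_pA, Finset.range_add_one]
  rw [pA_ext_eq (children_extT T u) (fun v w h => by have := children_le h; omega)
    (fun v w h => children_lt h) children_top (by simp) (by simp [Fin.is_le])]
  · exact pA_eq_MT n T (by omega)
  · rcases h with h | h
    · exact Or.inl h
    · refine Or.inr (Or.inr ?_)
      rw [pA_eq_MT n T (by omega)]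
      exact h

/-- Case 3: extending at a singleton vertex adds the pair `(u, n+1)`. -/
lemma MT_ext_insert {n : ℕ} {T : ITree n} {u : Fin (n + 1)}
    (hc : childrenF n T (u : ℕ) = ∅) (h : ∀ p ∈ MT n T, p.2 ≠ (u : ℕ)) :
    MT (n + 1) (extT n T u) = insert ((u : ℕ), n + 1) (MT n T) := by
  rw [MT, pairsAux_eq_pA, Finset.range_add_one]
  rw [pA_ext_insert (children_extT T u) (fun v w h => by have := children_le h; omega)
    (fun v w h => children_lt h) children_top (by simp) (by simp [Fin.is_le])
    _ _ hc (by simp) ?_ ?_]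
  · rw [pA_eq_MT n T (by omega)]
  · intro p hp
    rw [pA_eq_MT n T (by omega)] at hp
    exact h p hp
  · have := UU_card_le n T ∅
    omega

end Tree

section Stats

/-- Even pair predicate. -/
def PE (n : ℕ) (T : ITree n) (ab : ℕ × ℕ) : Prop :=
  Even (childn n T ab.1 + childn n T ab.2 - 1)

/-- Odd descent pair predicate. -/
def PD (n : ℕ) (T : ITree n) (ab : ℕ × ℕ) : Prop :=
  Odd (childn n T ab.1 + childn n T ab.2 - 1) ∧ maxOther n T ab ∈ childrenF n T ab.1

/-- Odd ascent pair predicate. -/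
def PAsc (n : ℕ) (T : ITree n) (ab : ℕ × ℕ) : Prop :=
  Odd (childn n T ab.1 + childn n T ab.2 - 1) ∧ maxOther n T ab ∈ childrenF n T ab.2

instance (n : ℕ) (T : ITree n) : DecidablePred (PE n T) := fun ab =>
  inferInstanceAs (Decidable (Even _))

instance (n : ℕ) (T : ITree n) : DecidablePred (PD n T) := fun ab =>
  inferInstanceAs (Decidable (_ ∧ _))

instance (n : ℕ) (T : ITree n) : DecidablePred (PAsc n T) := fun ab =>
  inferInstanceAs (Decidable (_ ∧ _))

lemma evenpT_eq (n : ℕ) (T : ITree n) :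
    evenpT n T = ((MT n T).filter (PE n T)).card := by
  rw [evenpT]
  congr 1

lemma desoT_eq (n : ℕ) (T : ITree n) :
    desoT n T = ((MT n T).filter (PD n T)).card := by
  rw [desoT]
  congr 1

lemma ascoT_eq (n : ℕ) (T : ITree n) :
    ascoT n T = ((MT n T).filter (PAsc n T)).card := by
  rw [ascoT]
  congr 1

lemma card_filter_insert {α : Type*} [DecidableEq α] {s : Finset α} {P : α → Prop}
    [DecidablePred P] {x : α} (hx : x ∉ s) :
    ((insert x s).filter P).card = (s.filter P).card + (if P x then 1 else 0) := by
  rw [Finset.filter_insert]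
  split
  · rw [Finset.card_insert_of_notMem (fun h => hx (Finset.mem_of_mem_filter _ h))]
  · rw [Nat.add_zero]

lemma card_filter_erase {α : Type*} [DecidableEq α] {s : Finset α} {P : α → Prop}
    [DecidablePred P] {x : α} (hx : x ∈ s) :
    (s.filter P).card = ((s.erase x).filter P).card + (if P x then 1 else 0) := by
  conv_lhs => rw [← Finset.insert_erase hx]
  exact card_filter_insert (Finset.notMem_erase x s)

lemma filter_congr_erase {α : Type*} [DecidableEq α] {s : Finset α} {P Q : α → Prop}
    [DecidablePred P] [DecidablePred Q] {x : α}
    (h : ∀ y ∈ s, y ≠ x → (P y ↔ Q y)) :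
    (s.erase x).filter P = (s.erase x).filter Q := by
  apply Finset.filter_congr
  intro y hy
  rw [Finset.mem_erase] at hy
  exact h y hy.2 hy.1

lemma max_unbot'_eq {s : Finset ℕ} {x : ℕ} (hx : x ∈ s) (hub : ∀ y ∈ s, y ≤ x) :
    s.max.unbotD 0 = x := by
  have hne : s.Nonempty := ⟨x, hx⟩
  rw [← Finset.coe_max' hne]
  have : s.max' hne = x :=
    le_antisymm (Finset.max'_le _ _ _ hub) (Finset.le_max' _ _ hx)
  rw [this]
  rfl

lemma max_unbot'_mem {s : Finset ℕ} (hne : s.Nonempty) : s.max.unbotD 0 ∈ s := by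
  rw [← Finset.coe_max' hne, WithBot.unbotD_coe]
  exact s.max'_mem hne

variable {n : ℕ} {T : ITree n} {u : Fin (n + 1)}

lemma np1_not_mem_children {v : ℕ} : n + 1 ∉ childrenF n T v := fun h => by
  have := children_le h; omega

lemma children_extT_ne {v : ℕ} (h : v ≠ (u : ℕ)) :
    childrenF (n + 1) (extT n T u) v = childrenF n T v := by
  rw [children_extT, if_neg h]

lemma children_extT_u :
    childrenF (n + 1) (extT n T u) (u : ℕ) = insert (n + 1) (childrenF n T (u : ℕ)) := by
  rw [children_extT, if_pos rfl]

lemma childn_extT_ne {v : ℕ} (h : v ≠ (u : ℕ)) :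
    childn (n + 1) (extT n T u) v = childn n T v := by
  rw [childn, childn, children_extT_ne h]

lemma childn_extT_u :
    childn (n + 1) (extT n T u) (u : ℕ) = childn n T (u : ℕ) + 1 := by
  rw [childn, childn, children_extT_u, Finset.card_insert_of_notMem np1_not_mem_children]

lemma np1_mem_children_extT {v : ℕ} :
    n + 1 ∈ childrenF (n + 1) (extT n T u) v ↔ v = (u : ℕ) := by
  rw [children_extT]
  split
  · rename_i h; simp [h]
  · rename_i h
    simp only [iff_false, h]
    exact fun hc => np1_not_mem_children hc

lemma maxOther_extT_ne {p : ℕ × ℕ} (h1 : p.1 ≠ (u : ℕ)) (h2 : p.2 ≠ (u : ℕ)) :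
    maxOther (n + 1) (extT n T u) p = maxOther n T p := by
  rw [maxOther, maxOther, children_extT_ne h1, children_extT_ne h2]

lemma maxOther_extT_pair {p : ℕ × ℕ} (hp : p ∈ MT n T)
    (hu : (u : ℕ) = p.1 ∨ (u : ℕ) = p.2) :
    maxOther (n + 1) (extT n T u) p = n + 1 := by
  rw [maxOther]
  apply max_unbot'_eq
  · rw [Finset.mem_erase]
    refine ⟨by have := MT_snd_le hp; omega, ?_⟩
    rcases hu with hu | hu
    · apply Finset.mem_union_left
      rw [← hu, children_extT_u]
      exact Finset.mem_insert_self _ _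
    · apply Finset.mem_union_right
      rw [← hu, children_extT_u]
      exact Finset.mem_insert_self _ _
  · intro y hy
    have hy2 := Finset.mem_of_mem_erase hy
    rcases Finset.mem_union.1 hy2 with h | h
    · exact children_le h
    · exact children_le h

lemma MT_fst_inj {p q : ℕ × ℕ} (hp : p ∈ MT n T) (hq : q ∈ MT n T) (h : p.1 = q.1) :
    p = q :=
  Prod.ext h (by rw [(mem_MT hp).2.2.1, (mem_MT hq).2.2.1, h])

lemma MT_snd_inj {p q : ℕ × ℕ} (hp : p ∈ MT n T) (hq : q ∈ MT n T) (h : p.2 = q.2) :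
    p = q := by
  have h1 : p.1 = q.1 := children_up (mem_MT hp).2.2.2 (h ▸ (mem_MT hq).2.2.2)
  exact MT_fst_inj hp hq h1

/-- For a pair of the matching, the transferred predicates agree for untouched pairs. -/
lemma preds_extT_ne {p : ℕ × ℕ} (h1 : p.1 ≠ (u : ℕ)) (h2 : p.2 ≠ (u : ℕ)) :
    (PE (n + 1) (extT n T u) p ↔ PE n T p) ∧
    (PD (n + 1) (extT n T u) p ↔ PD n T p) ∧
    (PAsc (n + 1) (extT n T u) p ↔ PAsc n T p) := by
  rw [PE, PE, PD, PD, PAsc, PAsc, childn_extT_ne h1, childn_extT_ne h2,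
    maxOther_extT_ne h1 h2, children_extT_ne h1, children_extT_ne h2]
  exact ⟨Iff.rfl, Iff.rfl, Iff.rfl⟩

/-- The "sum of child counts minus one" for the touched pair grows by one. -/
lemma count_extT_pair {p : ℕ × ℕ} (hp : p ∈ MT n T)
    (hu : (u : ℕ) = p.1 ∨ (u : ℕ) = p.2) :
    childn (n + 1) (extT n T u) p.1 + childn (n + 1) (extT n T u) p.2 - 1 =
      (childn n T p.1 + childn n T p.2 - 1) + 1 := by
  obtain ⟨a, b⟩ := p
  dsimp only
  have hc1 : 1 ≤ childn n T a := Finset.card_pos.2 (mem_MT hp).2.1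
  have hne : a ≠ b := Nat.ne_of_lt (MT_fst_lt_snd hp)
  rcases hu with hu | hu
  · subst hu
    rw [childn_extT_u, childn_extT_ne (Ne.symm hne)]
    omega
  · subst hu
    rw [childn_extT_ne hne, childn_extT_u]
    omega

end Stats

section CaseLemmas

variable {n : ℕ} {T : ITree n} {u : Fin (n + 1)}

lemma u_lt : (u : ℕ) < n + 1 := u.isLt

lemma MT_fst_lt {p : ℕ × ℕ} (hp : p ∈ MT n T) : p.1 < n + 1 :=
  Finset.mem_range.1 (mem_MT hp).1

/-- Case "singleton": all four statistics after extension. -/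
lemma stats_ext_sing (hsing : ∀ p ∈ MT n T, (u : ℕ) ≠ p.1 ∧ (u : ℕ) ≠ p.2) :
    singletonT (n + 1) (extT n T u) + 1 = singletonT n T ∧
    evenpT (n + 1) (extT n T u) = evenpT n T + 1 ∧
    desoT (n + 1) (extT n T u) = desoT n T ∧
    ascoT (n + 1) (extT n T u) = ascoT n T := by
  have hun : (u : ℕ) < n + 1 := u.isLt
  have hCu : childrenF n T (u : ℕ) = ∅ := by
    rcases Finset.eq_empty_or_nonempty (childrenF n T (u : ℕ)) with h | h
    · exact h
    · obtain ⟨p, hp, hv⟩ := MT_matched (Finset.mem_range.2 hun) h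
      rcases hv with hv | hv
      · exact absurd hv (hsing p hp).1
      · exact absurd hv (hsing p hp).2
  have hM : MT (n + 1) (extT n T u) = insert ((u : ℕ), n + 1) (MT n T) :=
    MT_ext_insert hCu (fun p hp he => (hsing p hp).2 he.symm)
  have hnotin : ((u : ℕ), n + 1) ∉ MT n T := fun h => by
    have := MT_snd_le h; simp at this
  have hpreds : ∀ p ∈ MT n T,
      (PE (n + 1) (extT n T u) p ↔ PE n T p) ∧
      (PD (n + 1) (extT n T u) p ↔ PD n T p) ∧
      (PAsc (n + 1) (extT n T u) p ↔ PAsc n T p) := fun p hp =>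
    preds_extT_ne (Ne.symm (hsing p hp).1) (Ne.symm (hsing p hp).2)
  have hcnt : childn (n + 1) (extT n T u) ((u : ℕ), n + 1).1 +
      childn (n + 1) (extT n T u) ((u : ℕ), n + 1).2 - 1 = 0 := by
    dsimp only
    rw [childn_extT_u, childn_extT_ne (by omega : n + 1 ≠ (u : ℕ))]
    rw [childn, hCu, childn, children_top]
    simp
  refine ⟨?_, ?_, ?_, ?_⟩
  · -- singleton
    rw [singletonT, singletonT]
    have hset : ((Finset.range (n + 1 + 1)).filter fun v =>
        ∀ ab ∈ MT (n + 1) (extT n T u), v ≠ ab.1 ∧ v ≠ ab.2) =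
        ((Finset.range (n + 1)).filter fun v =>
          ∀ ab ∈ MT n T, v ≠ ab.1 ∧ v ≠ ab.2).erase (u : ℕ) := by
      ext v
      rw [hM]
      simp only [Finset.mem_filter, Finset.mem_erase, Finset.mem_range,
        Finset.forall_mem_insert]
      constructor
      · rintro ⟨hv, ⟨h1, h2⟩, h3⟩
        exact ⟨h1, by omega, h3⟩
      · rintro ⟨h1, hv, h3⟩
        exact ⟨by omega, ⟨h1, by omega⟩, h3⟩
    rw [hset]
    refine Finset.card_erase_add_one ?_
    rw [Finset.mem_filter]
    refine ⟨Finset.mem_range.2 hun, ?_⟩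
    intro ab hab
    exact hsing ab hab
  · rw [evenpT_eq, evenpT_eq, hM, card_filter_insert hnotin,
      Finset.filter_congr (fun p hp => (hpreds p hp).1), if_pos ?_]
    rw [PE, hcnt]
    exact Even.zero
  · rw [desoT_eq, desoT_eq, hM, card_filter_insert hnotin,
      Finset.filter_congr (fun p hp => (hpreds p hp).2.1), if_neg ?_, Nat.add_zero]
    rw [PD, hcnt]
    rintro ⟨h, -⟩
    simp at h
  · rw [ascoT_eq, ascoT_eq, hM, card_filter_insert hnotin,
      Finset.filter_congr (fun p hp => (hpreds p hp).2.2), if_neg ?_, Nat.add_zero]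
    rw [PAsc, hcnt]
    rintro ⟨h, -⟩
    simp at h

/-- Case "matched": extension at a vertex of the pair `p₀` of the matching. -/
lemma stats_ext_pair {p₀ : ℕ × ℕ} (hp₀ : p₀ ∈ MT n T)
    (hu : (u : ℕ) = p₀.1 ∨ (u : ℕ) = p₀.2) :
    singletonT (n + 1) (extT n T u) = singletonT n T + 1 ∧
    (∃ B, evenpT n T = B + (if PE n T p₀ then 1 else 0) ∧
      evenpT (n + 1) (extT n T u) = B + (if PE n T p₀ then 0 else 1)) ∧
    (∃ D, desoT n T = D + (if PD n T p₀ then 1 else 0) ∧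
      desoT (n + 1) (extT n T u) = D + (if PE n T p₀ ∧ (u : ℕ) = p₀.1 then 1 else 0)) ∧
    (∃ A, ascoT n T = A + (if PAsc n T p₀ then 1 else 0) ∧
      ascoT (n + 1) (extT n T u) = A + (if PE n T p₀ ∧ (u : ℕ) = p₀.2 then 1 else 0)) := by
  have hM : MT (n + 1) (extT n T u) = MT n T := by
    refine MT_ext_eq ?_
    rcases hu with hu | hu
    · rw [hu]; exact Or.inl (mem_MT hp₀).2.1
    · exact Or.inr ⟨p₀, hp₀, hu.symm⟩
  have hne_pair : ∀ p ∈ MT n T, p ≠ p₀ → p.1 ≠ (u : ℕ) ∧ p.2 ≠ (u : ℕ) := by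
    intro p hp hne
    rcases hu with hu | hu
    · exact ⟨fun h => hne (MT_fst_inj hp hp₀ (h.trans hu)),
        fun h => (MT_fst_ne_snd hp₀ hp) (hu.symm.trans h.symm)⟩
    · exact ⟨fun h => (MT_fst_ne_snd hp hp₀) (h.trans hu),
        fun h => hne (MT_snd_inj hp hp₀ (h.trans hu))⟩
  have hcount := count_extT_pair hp₀ hu
  have hmax := maxOther_extT_pair hp₀ hu
  have hfs : p₀.1 ≠ p₀.2 := Nat.ne_of_lt (MT_fst_lt_snd hp₀)
  have hPE' : PE (n + 1) (extT n T u) p₀ ↔ ¬ PE n T p₀ := by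
    rw [PE, PE, hcount, Nat.even_add_one]
  have hPD' : PD (n + 1) (extT n T u) p₀ ↔ (PE n T p₀ ∧ (u : ℕ) = p₀.1) := by
    rw [PD, hcount, hmax, np1_mem_children_extT, PE]
    rw [Nat.odd_add_one, Nat.not_odd_iff_even]
    constructor
    · rintro ⟨h1, h2⟩; exact ⟨h1, h2.symm⟩
    · rintro ⟨h1, h2⟩; exact ⟨h1, h2.symm⟩
  have hPA' : PAsc (n + 1) (extT n T u) p₀ ↔ (PE n T p₀ ∧ (u : ℕ) = p₀.2) := by
    rw [PAsc, hcount, hmax, np1_mem_children_extT, PE]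
    rw [Nat.odd_add_one, Nat.not_odd_iff_even]
    constructor
    · rintro ⟨h1, h2⟩; exact ⟨h1, h2.symm⟩
    · rintro ⟨h1, h2⟩; exact ⟨h1, h2.symm⟩
  refine ⟨?_, ?_, ?_, ?_⟩
  · -- singleton
    rw [singletonT, singletonT]
    have hset : ((Finset.range (n + 1 + 1)).filter fun v =>
        ∀ ab ∈ MT (n + 1) (extT n T u), v ≠ ab.1 ∧ v ≠ ab.2) =
        insert (n + 1) ((Finset.range (n + 1)).filter fun v =>
          ∀ ab ∈ MT n T, v ≠ ab.1 ∧ v ≠ ab.2) := by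
      ext v
      rw [hM]
      simp only [Finset.mem_filter, Finset.mem_insert, Finset.mem_range]
      constructor
      · rintro ⟨hv, h3⟩
        by_cases hveq : v = n + 1
        · exact Or.inl hveq
        · exact Or.inr ⟨by omega, h3⟩
      · rintro (rfl | ⟨hv, h3⟩)
        · refine ⟨by omega, ?_⟩
          intro ab hab
          have h1 := MT_fst_lt hab
          have h2 := MT_snd_le hab
          omega
        · exact ⟨by omega, h3⟩
    rw [hset, Finset.card_insert_of_notMem]
    intro h
    have := Finset.mem_range.1 (Finset.mem_of_mem_filter _ h)
    omega
  · refine ⟨(((MT n T).erase p₀).filter (PE n T)).card, ?_, ?_⟩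
    · rw [evenpT_eq, card_filter_erase hp₀]
    · rw [evenpT_eq, hM, card_filter_erase hp₀,
        filter_congr_erase (fun p hp hne => ((preds_extT_ne (hne_pair p hp hne).1
          (hne_pair p hp hne).2).1))]
      congr 1
      rw [if_congr hPE' rfl rfl]
      by_cases h : PE n T p₀ <;> simp [h]
  · refine ⟨(((MT n T).erase p₀).filter (PD n T)).card, ?_, ?_⟩
    · rw [desoT_eq, card_filter_erase hp₀]
    · rw [desoT_eq, hM, card_filter_erase hp₀,
        filter_congr_erase (fun p hp hne => ((preds_extT_ne (hne_pair p hp hne).1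
          (hne_pair p hp hne).2).2.1))]
      congr 1
      rw [if_congr hPD' rfl rfl]
  · refine ⟨(((MT n T).erase p₀).filter (PAsc n T)).card, ?_, ?_⟩
    · rw [ascoT_eq, card_filter_erase hp₀]
    · rw [ascoT_eq, hM, card_filter_erase hp₀,
        filter_congr_erase (fun p hp hne => ((preds_extT_ne (hne_pair p hp hne).1
          (hne_pair p hp hne).2).2.2))]
      congr 1
      rw [if_congr hPA' rfl rfl]

/-- Trichotomy for pairs of the matching. -/
lemma MT_trichotomy {p : ℕ × ℕ} (hp : p ∈ MT n T) :
    (PE n T p ∧ ¬PD n T p ∧ ¬PAsc n T p) ∨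
    (PD n T p ∧ ¬PE n T p ∧ ¬PAsc n T p) ∨
    (PAsc n T p ∧ ¬PE n T p ∧ ¬PD n T p) := by
  have hfs : p.1 ≠ p.2 := Nat.ne_of_lt (MT_fst_lt_snd hp)
  have hdisj : Disjoint (childrenF n T p.1) (childrenF n T p.2) := by
    rw [Finset.disjoint_left]
    intro w h1 h2
    exact hfs (children_up h1 h2)
  by_cases he : Even (childn n T p.1 + childn n T p.2 - 1)
  · refine Or.inl ⟨he, ?_, ?_⟩
    · rintro ⟨h, -⟩; exact (Nat.not_odd_iff_even.2 he) h
    · rintro ⟨h, -⟩; exact (Nat.not_odd_iff_even.2 he) h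
  · have hodd : Odd (childn n T p.1 + childn n T p.2 - 1) := Nat.not_even_iff_odd.1 he
    have hc1 : 1 ≤ childn n T p.1 := Finset.card_pos.2 (mem_MT hp).2.1
    have hk : 1 ≤ childn n T p.1 + childn n T p.2 - 1 := by
      rcases hodd with ⟨k, hk⟩
      omega
    have hcard : 2 ≤ (childrenF n T p.1 ∪ childrenF n T p.2).card := by
      rw [Finset.card_union_of_disjoint hdisj]
      rw [childn, childn] at hk
      omega
    have hne : ((childrenF n T p.1 ∪ childrenF n T p.2).erase p.2).Nonempty := by
      rw [← Finset.card_pos]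
      by_cases hmem : p.2 ∈ childrenF n T p.1 ∪ childrenF n T p.2
      · rw [Finset.card_erase_of_mem hmem]; omega
      · rw [Finset.erase_eq_of_notMem hmem]; omega
    have hmem0 : maxOther n T p ∈ (childrenF n T p.1 ∪ childrenF n T p.2).erase p.2 := by
      rw [maxOther]; exact max_unbot'_mem hne
    have hmem : maxOther n T p ∈ childrenF n T p.1 ∪ childrenF n T p.2 :=
      Finset.mem_of_mem_erase hmem0
    rcases Finset.mem_union.1 hmem with h | h
    · refine Or.inr (Or.inl ⟨⟨hodd, h⟩, fun hPE => he hPE, ?_⟩)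
      rintro ⟨-, h2⟩
      exact (Finset.disjoint_left.1 hdisj) h h2
    · refine Or.inr (Or.inr ⟨⟨hodd, h⟩, fun hPE => he hPE, ?_⟩)
      rintro ⟨-, h2⟩
      exact (Finset.disjoint_left.1 hdisj) h2 h

end CaseLemmas

section Mono

open MvPolynomial

/-- The monomial weight of a tree. -/
noncomputable def WT (n : ℕ) (T : ITree n) : MvPolynomial (Fin 4) ℤ :=
  X 0 ^ singletonT n T * X 3 ^ evenpT n T * X 1 ^ desoT n T * X 2 ^ ascoT n T

variable {n : ℕ} {T : ITree n} {u : Fin (n + 1)}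

lemma WT_ext_sing (hsing : ∀ p ∈ MT n T, (u : ℕ) ≠ p.1 ∧ (u : ℕ) ≠ p.2) :
    WT (n + 1) (extT n T u) =
      X 0 ^ (singletonT n T - 1) * X 3 ^ (evenpT n T + 1) *
        X 1 ^ desoT n T * X 2 ^ ascoT n T := by
  obtain ⟨h1, h2, h3, h4⟩ := stats_ext_sing hsing
  rw [WT, h2, h3, h4, show singletonT (n + 1) (extT n T u) = singletonT n T - 1 by omega]

lemma WT_ext_even_fst {p₀ : ℕ × ℕ} (hp₀ : p₀ ∈ MT n T) (hPE : PE n T p₀)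
    (hu : (u : ℕ) = p₀.1) :
    WT (n + 1) (extT n T u) =
      X 0 ^ (singletonT n T + 1) * X 3 ^ (evenpT n T - 1) *
        X 1 ^ (desoT n T + 1) * X 2 ^ ascoT n T := by
  obtain ⟨h1, ⟨B, hB1, hB2⟩, ⟨D, hD1, hD2⟩, ⟨A, hA1, hA2⟩⟩ :=
    stats_ext_pair hp₀ (Or.inl hu)
  have hfs : p₀.1 ≠ p₀.2 := Nat.ne_of_lt (MT_fst_lt_snd hp₀)
  have hnPD : ¬ PD n T p₀ := fun h => (Nat.not_odd_iff_even.2 hPE) h.1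
  have hnPA : ¬ PAsc n T p₀ := fun h => (Nat.not_odd_iff_even.2 hPE) h.1
  rw [if_pos hPE] at hB1 hB2
  rw [if_neg hnPD] at hD1
  rw [if_pos ⟨hPE, hu⟩] at hD2
  rw [if_neg hnPA] at hA1
  rw [if_neg (show ¬(PE n T p₀ ∧ (u : ℕ) = p₀.2) from fun h => hfs (hu.symm.trans h.2))] at hA2
  rw [WT, h1, hB2, hD2, hA2, show B = evenpT n T - 1 by omega,
    show D + 1 = desoT n T + 1 by omega, show A = ascoT n T by omega]
  ring

lemma WT_ext_even_snd {p₀ : ℕ × ℕ} (hp₀ : p₀ ∈ MT n T) (hPE : PE n T p₀)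
    (hu : (u : ℕ) = p₀.2) :
    WT (n + 1) (extT n T u) =
      X 0 ^ (singletonT n T + 1) * X 3 ^ (evenpT n T - 1) *
        X 1 ^ desoT n T * X 2 ^ (ascoT n T + 1) := by
  obtain ⟨h1, ⟨B, hB1, hB2⟩, ⟨D, hD1, hD2⟩, ⟨A, hA1, hA2⟩⟩ :=
    stats_ext_pair hp₀ (Or.inr hu)
  have hfs : p₀.1 ≠ p₀.2 := Nat.ne_of_lt (MT_fst_lt_snd hp₀)
  have hnPD : ¬ PD n T p₀ := fun h => (Nat.not_odd_iff_even.2 hPE) h.1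
  have hnPA : ¬ PAsc n T p₀ := fun h => (Nat.not_odd_iff_even.2 hPE) h.1
  rw [if_pos hPE] at hB1 hB2
  rw [if_neg hnPD] at hD1
  rw [if_neg (show ¬(PE n T p₀ ∧ (u : ℕ) = p₀.1) from fun h => hfs (h.2.symm.trans hu))] at hD2
  rw [if_neg hnPA] at hA1
  rw [if_pos ⟨hPE, hu⟩] at hA2
  rw [WT, h1, hB2, hD2, hA2, show B = evenpT n T - 1 by omega,
    show D = desoT n T by omega, show A + 1 = ascoT n T + 1 by omega]
  ring

lemma WT_ext_des {p₀ : ℕ × ℕ} (hp₀ : p₀ ∈ MT n T) (hPD : PD n T p₀)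
    (hnPE : ¬ PE n T p₀) (hnPA : ¬ PAsc n T p₀)
    (hu : (u : ℕ) = p₀.1 ∨ (u : ℕ) = p₀.2) :
    WT (n + 1) (extT n T u) =
      X 0 ^ (singletonT n T + 1) * X 3 ^ (evenpT n T + 1) *
        X 1 ^ (desoT n T - 1) * X 2 ^ ascoT n T := by
  obtain ⟨h1, ⟨B, hB1, hB2⟩, ⟨D, hD1, hD2⟩, ⟨A, hA1, hA2⟩⟩ := stats_ext_pair hp₀ hu
  rw [if_neg hnPE] at hB1 hB2
  rw [if_pos hPD] at hD1
  rw [if_neg (fun h : _ ∧ _ => hnPE h.1)] at hD2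
  rw [if_neg hnPA] at hA1
  rw [if_neg (fun h : _ ∧ _ => hnPE h.1)] at hA2
  rw [WT, h1, hB2, hD2, hA2, show B + 1 = evenpT n T + 1 by omega,
    show D = desoT n T - 1 by omega, show A = ascoT n T by omega]
  ring

lemma WT_ext_asc {p₀ : ℕ × ℕ} (hp₀ : p₀ ∈ MT n T) (hPA : PAsc n T p₀)
    (hnPE : ¬ PE n T p₀) (hnPD : ¬ PD n T p₀)
    (hu : (u : ℕ) = p₀.1 ∨ (u : ℕ) = p₀.2) :
    WT (n + 1) (extT n T u) =
      X 0 ^ (singletonT n T + 1) * X 3 ^ (evenpT n T + 1) *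
        X 1 ^ desoT n T * X 2 ^ (ascoT n T - 1) := by
  obtain ⟨h1, ⟨B, hB1, hB2⟩, ⟨D, hD1, hD2⟩, ⟨A, hA1, hA2⟩⟩ := stats_ext_pair hp₀ hu
  rw [if_neg hnPE] at hB1 hB2
  rw [if_neg hnPD] at hD1
  rw [if_neg (fun h : _ ∧ _ => hnPE h.1)] at hD2
  rw [if_pos hPA] at hA1
  rw [if_neg (fun h : _ ∧ _ => hnPE h.1)] at hA2
  rw [WT, h1, hB2, hD2, hA2, show B + 1 = evenpT n T + 1 by omega,
    show D = desoT n T by omega, show A = ascoT n T - 1 by omega]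
  ring

end Mono

section SumExt

open MvPolynomial

lemma sum_classify {β : Type*} [AddCommMonoid β] (n : ℕ) (T : ITree n) (CE CD CA : β) :
    (∑ p ∈ MT n T, (if PE n T p then CE else if PD n T p then CD else CA)) =
      evenpT n T • CE + desoT n T • CD + ascoT n T • CA := by
  classical
  rw [← Finset.sum_filter_add_sum_filter_not (MT n T) (PE n T)]
  have h1 : (∑ p ∈ (MT n T).filter (PE n T),
      (if PE n T p then CE else if PD n T p then CD else CA)) = evenpT n T • CE := by
    rw [Finset.sum_congr rfl (fun p hp => if_pos (Finset.mem_filter.1 hp).2),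
      Finset.sum_const, evenpT_eq]
  have h2 : (∑ p ∈ (MT n T).filter (fun p => ¬ PE n T p),
      (if PE n T p then CE else if PD n T p then CD else CA)) =
      desoT n T • CD + ascoT n T • CA := by
    rw [Finset.sum_congr rfl (fun p hp => if_neg (Finset.mem_filter.1 hp).2)]
    rw [← Finset.sum_filter_add_sum_filter_not ((MT n T).filter (fun p => ¬ PE n T p))
      (PD n T)]
    have hD : ((MT n T).filter (fun p => ¬ PE n T p)).filter (PD n T) =
        (MT n T).filter (PD n T) := by
      ext p
      simp only [Finset.mem_filter, and_assoc]
      constructor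
      · rintro ⟨h1, -, h3⟩; exact ⟨h1, h3⟩
      · rintro ⟨h1, h3⟩
        exact ⟨h1, fun hPE => (Nat.not_odd_iff_even.2 hPE) h3.1, h3⟩
    have hA : ((MT n T).filter (fun p => ¬ PE n T p)).filter (fun p => ¬ PD n T p) =
        (MT n T).filter (PAsc n T) := by
      ext p
      simp only [Finset.mem_filter, and_assoc]
      constructor
      · rintro ⟨h1, h2, h3⟩
        rcases MT_trichotomy h1 with ⟨hh, -⟩ | ⟨hh, -⟩ | ⟨hh, -⟩
        · exact absurd hh h2
        · exact absurd hh h3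
        · exact ⟨h1, hh⟩
      · rintro ⟨h1, h3⟩
        rcases MT_trichotomy h1 with ⟨-, -, hh⟩ | ⟨-, -, hh⟩ | ⟨hh1, hh2, hh3⟩
        · exact absurd h3 hh
        · exact absurd h3 hh
        · exact ⟨h1, hh2, hh3⟩
    rw [hD, hA]
    congr 1
    · rw [Finset.sum_congr rfl (fun p hp => if_pos (Finset.mem_filter.1 hp).2),
        Finset.sum_const, desoT_eq]
    · refine (Finset.sum_congr rfl (fun p hp => if_neg ?_)).trans ?_
      · have hmem := Finset.mem_filter.1 hp
        intro hPD
        rcases MT_trichotomy hmem.1 with ⟨-, hh, -⟩ | ⟨-, -, hh⟩ | ⟨-, -, hh⟩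
        · exact hh hPD
        · exact hh hmem.2
        · exact hh hPD
      · rw [Finset.sum_const, ascoT_eq]
  rw [h1, h2, add_assoc]

lemma sum_ext (n : ℕ) (T : ITree n) :
    ∑ u : Fin (n + 1), WT (n + 1) (extT n T u) = DG (WT n T) := by
  classical
  have h0 : DG (X 0) = X 3 := by simp [DG, MvPolynomial.mkDerivation_X]
  have h1 : DG (X 1) = 2 * X 0 * X 3 := by simp [DG, MvPolynomial.mkDerivation_X]
  have h2 : DG (X 2) = 2 * X 0 * X 3 := by simp [DG, MvPolynomial.mkDerivation_X]
  have h3 : DG (X 3) = X 0 * (X 1 + X 2) := by simp [DG, MvPolynomial.mkDerivation_X]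
  set s := singletonT n T with hs
  set e := evenpT n T with he
  set d := desoT n T with hd
  set t := ascoT n T with ht
  set CS : MvPolynomial (Fin 4) ℤ := X 0 ^ (s - 1) * X 3 ^ (e + 1) * X 1 ^ d * X 2 ^ t
    with hCS
  set CE1 : MvPolynomial (Fin 4) ℤ := X 0 ^ (s + 1) * X 3 ^ (e - 1) * X 1 ^ (d + 1) * X 2 ^ t
    with hCE1
  set CE2 : MvPolynomial (Fin 4) ℤ := X 0 ^ (s + 1) * X 3 ^ (e - 1) * X 1 ^ d * X 2 ^ (t + 1)
    with hCE2
  set CD : MvPolynomial (Fin 4) ℤ := X 0 ^ (s + 1) * X 3 ^ (e + 1) * X 1 ^ (d - 1) * X 2 ^ t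
    with hCD
  set CA : MvPolynomial (Fin 4) ℤ := X 0 ^ (s + 1) * X 3 ^ (e + 1) * X 1 ^ d * X 2 ^ (t - 1)
    with hCA
  set G : ℕ → MvPolynomial (Fin 4) ℤ :=
    fun v => if h : v < n + 1 then WT (n + 1) (extT n T ⟨v, h⟩) else 0 with hG
  have hstep1 : ∑ u : Fin (n + 1), WT (n + 1) (extT n T u) =
      ∑ v ∈ Finset.range (n + 1), G v := by
    rw [← Fin.sum_univ_eq_sum_range G]
    refine Finset.sum_congr rfl fun u _ => ?_
    simp only [hG]
    rw [dif_pos u.isLt]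
  -- split off the singletons
  have hstep2 : ∑ v ∈ Finset.range (n + 1), G v =
      (∑ v ∈ (Finset.range (n + 1)).filter
        (fun v => ∀ ab ∈ MT n T, v ≠ ab.1 ∧ v ≠ ab.2), G v)
      + ∑ v ∈ (Finset.range (n + 1)).filter
        (fun v => ¬ ∀ ab ∈ MT n T, v ≠ ab.1 ∧ v ≠ ab.2), G v :=
    (Finset.sum_filter_add_sum_filter_not _ _ _).symm
  -- the singleton part
  have hsing : (∑ v ∈ (Finset.range (n + 1)).filter
      (fun v => ∀ ab ∈ MT n T, v ≠ ab.1 ∧ v ≠ ab.2), G v) = s • CS := by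
    rw [Finset.sum_congr rfl (fun v hv => ?_), Finset.sum_const]
    · rw [hs, singletonT]
    · have hmem := Finset.mem_filter.1 hv
      have hlt := Finset.mem_range.1 hmem.1
      simp only [hG]
      rw [dif_pos hlt]
      exact WT_ext_sing hmem.2
  -- split the non-singleton part into firsts and seconds
  have hstep3 : (∑ v ∈ (Finset.range (n + 1)).filter
      (fun v => ¬ ∀ ab ∈ MT n T, v ≠ ab.1 ∧ v ≠ ab.2), G v) =
      (∑ v ∈ ((Finset.range (n + 1)).filter
        (fun v => ¬ ∀ ab ∈ MT n T, v ≠ ab.1 ∧ v ≠ ab.2)).filter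
          (fun v => ∃ p ∈ MT n T, v = p.1), G v)
      + ∑ v ∈ ((Finset.range (n + 1)).filter
        (fun v => ¬ ∀ ab ∈ MT n T, v ≠ ab.1 ∧ v ≠ ab.2)).filter
          (fun v => ¬ ∃ p ∈ MT n T, v = p.1), G v :=
    (Finset.sum_filter_add_sum_filter_not _ _ _).symm
  have himgf : ((Finset.range (n + 1)).filter
      (fun v => ¬ ∀ ab ∈ MT n T, v ≠ ab.1 ∧ v ≠ ab.2)).filter
        (fun v => ∃ p ∈ MT n T, v = p.1) = (MT n T).image Prod.fst := by
    ext v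
    simp only [Finset.mem_filter, Finset.mem_image, Finset.mem_range]
    constructor
    · rintro ⟨⟨-, -⟩, p, hp, hv⟩
      exact ⟨p, hp, hv.symm⟩
    · rintro ⟨p, hp, hv⟩
      subst hv
      refine ⟨⟨MT_fst_lt hp, fun h => (h p hp).1 rfl⟩, p, hp, rfl⟩
  have himgs : ((Finset.range (n + 1)).filter
      (fun v => ¬ ∀ ab ∈ MT n T, v ≠ ab.1 ∧ v ≠ ab.2)).filter
        (fun v => ¬ ∃ p ∈ MT n T, v = p.1) = (MT n T).image Prod.snd := by
    ext v
    simp only [Finset.mem_filter, Finset.mem_image, Finset.mem_range]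
    constructor
    · rintro ⟨⟨-, hnPs⟩, hnfst⟩
      push_neg at hnPs
      obtain ⟨ab, hab, hor⟩ := hnPs
      rcases em (v = ab.1) with h | h
      · exact absurd ⟨ab, hab, h⟩ hnfst
      · exact ⟨ab, hab, (hor h).symm⟩
    · rintro ⟨p, hp, hv⟩
      subst hv
      have hle := MT_snd_le hp
      refine ⟨⟨by omega, fun h => (h p hp).2 rfl⟩, ?_⟩
      rintro ⟨q, hq, heq⟩
      exact (MT_fst_ne_snd hq hp) heq.symm
  -- the firsts
  have hfst : (∑ v ∈ (MT n T).image Prod.fst, G v) = e • CE1 + d • CD + t • CA := by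
    rw [Finset.sum_image (fun p hp q hq h => MT_fst_inj hp hq h)]
    rw [Finset.sum_congr rfl (fun p hp => ?_), sum_classify n T CE1 CD CA]
    show G p.1 = if PE n T p then CE1 else if PD n T p then CD else CA
    have hlt := MT_fst_lt hp
    simp only [hG]
    rw [dif_pos hlt]
    rcases MT_trichotomy hp with ⟨ha, hb, hc⟩ | ⟨ha, hb, hc⟩ | ⟨ha, hb, hc⟩
    · rw [if_pos ha]
      exact WT_ext_even_fst hp ha rfl
    · rw [if_neg hb, if_pos ha]
      exact WT_ext_des hp ha hb hc (Or.inl rfl)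
    · rw [if_neg hb, if_neg hc]
      exact WT_ext_asc hp ha hb hc (Or.inl rfl)
  -- the seconds
  have hsnd : (∑ v ∈ (MT n T).image Prod.snd, G v) = e • CE2 + d • CD + t • CA := by
    rw [Finset.sum_image (fun p hp q hq h => MT_snd_inj hp hq h)]
    rw [Finset.sum_congr rfl (fun p hp => ?_), sum_classify n T CE2 CD CA]
    show G p.2 = if PE n T p then CE2 else if PD n T p then CD else CA
    have hlt : p.2 < n + 1 := by have := MT_snd_le hp; omega
    simp only [hG]
    rw [dif_pos hlt]
    rcases MT_trichotomy hp with ⟨ha, hb, hc⟩ | ⟨ha, hb, hc⟩ | ⟨ha, hb, hc⟩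
    · rw [if_pos ha]
      exact WT_ext_even_snd hp ha rfl
    · rw [if_neg hb, if_pos ha]
      exact WT_ext_des hp ha hb hc (Or.inr rfl)
    · rw [if_neg hb, if_neg hc]
      exact WT_ext_asc hp ha hb hc (Or.inr rfl)
  rw [hstep1, hstep2, hstep3, himgf, himgs, hsing, hfst, hsnd]
  rw [WT]
  simp only [Derivation.leibniz, Derivation.leibniz_pow, h0, h1, h2, h3, smul_eq_mul,
    nsmul_eq_mul, ← hs, ← he, ← hd, ← ht]
  rw [hCS, hCE1, hCE2, hCD, hCA]
  ring

end SumExt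

section Final

open MvPolynomial

/-- Extension as an equivalence. -/
def extEquiv (n : ℕ) : ITree n × Fin (n + 1) ≃ ITree (n + 1) where
  toFun p := extT n p.1 p.2
  invFun T' := ⟨fun k => T' ⟨(k : ℕ), Nat.lt_succ_of_lt k.isLt⟩, T' ⟨n, Nat.lt_succ_self n⟩⟩
  left_inv p := by
    obtain ⟨T, u⟩ := p
    refine Prod.ext (funext fun k => ?_) ?_
    · show extT n T u ⟨(k : ℕ), _⟩ = T k
      simp only [extT]
      rw [dif_pos (show ((⟨(k : ℕ), Nat.lt_succ_of_lt k.isLt⟩ : Fin (n + 1)) : ℕ) < n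
        from k.isLt)]
      rfl
    · show extT n T u ⟨n, _⟩ = u
      simp only [extT]
      rw [dif_neg (show ¬ ((⟨n, Nat.lt_succ_self n⟩ : Fin (n + 1)) : ℕ) < n
        from lt_irrefl n)]
      rfl
  right_inv T' := by
    funext k
    by_cases h : (k : ℕ) < n
    · show extT n _ _ k = T' k
      simp only [extT]
      rw [dif_pos h]
      rfl
    · show extT n _ _ k = T' k
      simp only [extT]
      rw [dif_neg h]
      have hk : k = ⟨n, Nat.lt_succ_self n⟩ := Fin.ext (show (k : ℕ) = n by have := k.isLt; omega)
      subst hk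
      rfl

lemma key_step (n : ℕ) :
    (∑ T : ITree n, DG (WT n T)) = ∑ T' : ITree (n + 1), WT (n + 1) T' := by
  rw [← Equiv.sum_comp (extEquiv n) (WT (n + 1)), Fintype.sum_prod_type]
  exact Finset.sum_congr rfl fun T _ => (sum_ext n T).symm

end Final

/-- The canonical increasing tree on `{0,1}`. -/
def T0 : ITree 1 := fun k => ⟨0, Nat.zero_lt_succ _⟩

lemma ITree1_eq (T : ITree 1) : T = T0 := by
  funext k
  have h1 := (T k).isLt
  have h2 := k.isLt
  exact Fin.ext (show ((T k : ℕ)) = 0 by omega)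

end Stmt17

/-- For every `n ≥ 1`,
`Dⁿ(x) = Σ_{T ∈ T_n} x^{singleton(T)} c^{evenp(T)} a^{des^o(T)} b^{asc^o(T)}`. -/
theorem stmt17 (n : ℕ) (hn : 1 ≤ n) :
    (fun p => DG p)^[n] (X 0) =
      ∑ T : ITree n,
        X 0 ^ singletonT n T * X 3 ^ evenpT n T * X 1 ^ desoT n T *
          X 2 ^ ascoT n T := by
    induction n with
  | zero => omega
  | succ n ih =>
    by_cases h0 : n = 0
    · subst h0
      rw [Function.iterate_one]
      have huniv : (Finset.univ : Finset (ITree 1)) = {Stmt17.T0} := by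
        ext a
        simp [Stmt17.ITree1_eq a]
      show DG (X 0) = _
      rw [huniv, Finset.sum_singleton]
      have e1 : singletonT 1 Stmt17.T0 = 0 := by decide
      have e2 : evenpT 1 Stmt17.T0 = 1 := by decide
      have e3 : desoT 1 Stmt17.T0 = 0 := by decide
      have e4 : ascoT 1 Stmt17.T0 = 0 := by decide
      rw [e1, e2, e3, e4]
      simp [DG, MvPolynomial.mkDerivation_X]
    · have hn' : 1 ≤ n := by omega
      rw [Function.iterate_succ_apply', ih hn']
      show DG (∑ T : ITree n, Stmt17.WT n T) = ∑ T' : ITree (n + 1), Stmt17.WT (n + 1) T'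
      rw [map_sum]
      exact Stmt17.key_step n
end

section
/- For every n ≥ 0, the following identity holds in the polynomial ring ℤ[x,a,b,c]: Σ_{T ∈ T_n} x^{singleton(T)} c^{evenp(T)} a^{des^o(T)} b^{asc^o(T)} = Σ_{i,j ≥ 0} θ_{n,i,j} x^{n+1−2(i+j)} c^{i} (a+b)^{j}, where θ_{n,i,j} = #{T ∈ T_n : evenp(T) = i, des^o(T) = j, asc^o(T) = 0}. -/
open Finset

open MvPolynomial

/-- `θ n i j = #{T ∈ T_n : evenp(T) = i, des^o(T) = j, asc^o(T) = 0}`. -/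
def theta (n i j : ℕ) : ℕ :=
  (Finset.univ.filter fun T : ITree n =>
    evenpT n T = i ∧ desoT n T = j ∧ ascoT n T = 0).card

/-!
For an odd pair `(a, b)` of the tree-matching, moving the vertex `v = maxOther (a, b)` from `a`
to `b` or back changes neither the matching (`b` stays the smallest child of `a`, and `b` is
matched together with `a` before its own children matter), nor the parity of any pair, nor any
`maxOther`: it only swaps the descent/ascent type of that pair. Doing this simultaneously for a
set `S` of odd pairs is an involution, so every tree arises exactly once from a tree without odd
ascent pairs by choosing the set `S` of its odd pairs that become ascents. Summing
`a ^ #(odd \ S) * b ^ #S` over `S` gives `(a + b) ^ des^o`, and `singleton = n + 1 - 2 #M_T`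
with `#M_T = evenp + des^o + asc^o`.
-/

namespace IncreasingTree

variable {n : ℕ}

section Order

variable {α : Type*} [LinearOrder α]

lemma min_eq_of_isLeast {s : Finset α} {a : α} (h : IsLeast (s : Set α) a) :
    s.min = a := by
  rw [← coe_min' ⟨a, h.1⟩, (isLeast_min' s ⟨a, h.1⟩).unique h]

lemma isLeast_of_min_eq {s : Finset α} {a : α} (h : s.min = a) : IsLeast (s : Set α) a :=
  ⟨mem_of_min h, fun _ hz => WithTop.coe_le_coe.1 (h ▸ min_le hz)⟩

lemma nonempty_iff_of_min_eq {s t : Finset α} (h : s.min = t.min) : s.Nonempty ↔ t.Nonempty := by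
  simp only [nonempty_iff_ne_empty, ne_eq, ← Finset.min_eq_top, h]

lemma unbotD_max_eq_max' {s : Finset α} (h : s.Nonempty) (d : α) :
    WithBot.unbotD d s.max = s.max' h := by
  rw [← coe_max' h, WithBot.unbotD_coe]

end Order

section Children

variable {T : ITree n} {u u' v : ℕ}

lemma par_succ (k : Fin n) : par n T (k + 1) = T k := by
  rw [par, dif_pos ⟨by omega, by simp⟩]
  rfl

lemma par_lt (h1 : 1 ≤ v) (h2 : v ≤ n) : par n T v < v := by
  obtain ⟨k, rfl⟩ : ∃ k : Fin n, v = k + 1 := ⟨⟨v - 1, by omega⟩, by simp; omega⟩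
  rw [par_succ]
  exact (T k).isLt

lemma mem_childrenF : v ∈ childrenF n T u ↔ (1 ≤ v ∧ v ≤ n) ∧ par n T v = u := by
  simp [childrenF]

lemma par_of_mem_childrenF (h : v ∈ childrenF n T u) : par n T v = u :=
  (mem_childrenF.1 h).2

lemma le_of_mem_childrenF (h : v ∈ childrenF n T u) : v ≤ n :=
  (mem_childrenF.1 h).1.2

lemma lt_of_mem_childrenF (h : v ∈ childrenF n T u) : u < v := by
  obtain ⟨⟨h1, h2⟩, rfl⟩ := mem_childrenF.1 h
  exact par_lt h1 h2

lemma eq_of_mem_childrenF (h : v ∈ childrenF n T u) (h' : v ∈ childrenF n T u') : u = u' :=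
  (par_of_mem_childrenF h).symm.trans (par_of_mem_childrenF h')

lemma disjoint_childrenF (h : u ≠ u') : Disjoint (childrenF n T u) (childrenF n T u') :=
  disjoint_left.2 fun _ hv hv' => h (eq_of_mem_childrenF hv hv')

end Children

section Matching

variable {T T' : ITree n} {fuel : ℕ} {used : Finset ℕ}

/-- The set `U_k` of the tree-matching algorithm, `used` being the vertices matched so far. -/
def availableParents (n : ℕ) (T : ITree n) (used : Finset ℕ) : Finset ℕ :=
  (range (n + 1)).filter fun v => v ∉ used ∧ (childrenF n T v).Nonempty

lemma mem_availableParents {v : ℕ} :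
    v ∈ availableParents n T used ↔ v ≤ n ∧ v ∉ used ∧ (childrenF n T v).Nonempty := by
  simp [availableParents]

lemma pairsAux_succ_of_eq_empty (h : availableParents n T used = ∅) :
    pairsAux n T (fuel + 1) used = ∅ := by
  rw [pairsAux, ← availableParents, h, if_neg Finset.not_nonempty_empty]

lemma pairsAux_succ_of_isLeast {a b : ℕ} (ha : IsLeast ↑(availableParents n T used) a)
    (hb : IsLeast ↑(childrenF n T a) b) :
    pairsAux n T (fuel + 1) used =
      insert (a, b) (pairsAux n T fuel (insert a (insert b used))) := by
  rw [pairsAux, ← availableParents, if_pos ⟨a, ha.1⟩, min_eq_of_isLeast ha,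
    WithTop.untopD_coe]
  simp only [min_eq_of_isLeast hb, WithTop.untopD_coe]

lemma pairsAux_succ_cases (fuel : ℕ) (used : Finset ℕ) :
    (availableParents n T used = ∅ ∧ pairsAux n T (fuel + 1) used = ∅) ∨
      ∃ a b, IsLeast ↑(availableParents n T used) a ∧ IsLeast ↑(childrenF n T a) b ∧
        pairsAux n T (fuel + 1) used =
          insert (a, b) (pairsAux n T fuel (insert a (insert b used))) := by
  rcases (availableParents n T used).eq_empty_or_nonempty with h | h
  · exact .inl ⟨h, pairsAux_succ_of_eq_empty h⟩
  · have hc : (childrenF n T ((availableParents n T used).min' h)).Nonempty :=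
      (mem_availableParents.1 (min'_mem _ h)).2.2
    exact .inr ⟨_, _, isLeast_min' _ h, isLeast_min' _ hc,
      pairsAux_succ_of_isLeast (isLeast_min' _ h) (isLeast_min' _ hc)⟩

lemma mem_pairsAux {p : ℕ × ℕ} (h : p ∈ pairsAux n T fuel used) :
    p.1 ∉ used ∧ IsLeast ↑(childrenF n T p.1) p.2 := by
  induction fuel generalizing used with
  | zero => simp [pairsAux] at h
  | succ fuel ih =>
    rcases pairsAux_succ_cases (T := T) fuel used with ⟨-, he⟩ | ⟨a, b, ha, hb, he⟩
    · simp [he] at h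
    rw [he, mem_insert] at h
    rcases h with rfl | h
    · exact ⟨(mem_availableParents.1 ha.1).2.1, hb⟩
    · obtain ⟨h1, h2⟩ := ih h
      exact ⟨fun h => h1 (mem_insert_of_mem (mem_insert_of_mem h)), h2⟩

def ParentClosed (T : ITree n) (used : Finset ℕ) : Prop :=
  ∀ ⦃u w : ℕ⦄, w ∈ childrenF n T u → w ∈ used → u ∈ used

lemma parentClosed_empty : ParentClosed T ∅ := fun _ _ _ h => absurd h (notMem_empty _)

lemma ParentClosed.insert_insert (hI : ParentClosed T used) {a b : ℕ}
    (ha : IsLeast ↑(availableParents n T used) a) (hb : b ∈ childrenF n T a) :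
    ParentClosed T (insert a (insert b used)) := by
  intro u w hw hwu
  rcases mem_insert.1 hwu with rfl | hwu
  · by_contra hu
    have hu' : u ∉ used := fun h => hu (mem_insert_of_mem (mem_insert_of_mem h))
    have huw := lt_of_mem_childrenF hw
    have hwn := le_of_mem_childrenF hw
    have := ha.2 (mem_availableParents.2 ⟨by omega, hu', w, hw⟩)
    omega
  rcases mem_insert.1 hwu with rfl | hwu
  · rw [eq_of_mem_childrenF hw hb]
    exact mem_insert_self _ _
  · exact mem_insert_of_mem (mem_insert_of_mem (hI hw hwu))

lemma notMem_of_mem_pairsAux (hI : ParentClosed T used) {p : ℕ × ℕ}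
    (h : p ∈ pairsAux n T fuel used) : p.1 ∉ used ∧ p.2 ∉ used :=
  ⟨(mem_pairsAux h).1, fun h2 => (mem_pairsAux h).1 (hI (mem_pairsAux h).2.1 h2)⟩

lemma eq_of_mem_pairsAux (hI : ParentClosed T used) {p q : ℕ × ℕ}
    (hp : p ∈ pairsAux n T fuel used) (hq : q ∈ pairsAux n T fuel used) {v : ℕ}
    (hvp : v = p.1 ∨ v = p.2) (hvq : v = q.1 ∨ v = q.2) : p = q := by
  induction fuel generalizing used with
  | zero => simp [pairsAux] at hp
  | succ fuel ih =>
    rcases pairsAux_succ_cases (T := T) fuel used with ⟨-, he⟩ | ⟨a, b, ha, hb, he⟩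
    · simp [he] at hp
    have hI' := hI.insert_insert ha hb.1
    have fresh : ∀ r ∈ pairsAux n T fuel (insert a (insert b used)),
        (v = r.1 ∨ v = r.2) → v = a ∨ v = b → False := by
      intro r hr hvr hv
      have := notMem_of_mem_pairsAux hI' hr
      rcases hv with rfl | rfl <;> rcases hvr with h | h <;> simp_all
    rw [he, mem_insert] at hp hq
    rcases hp with rfl | hp <;> rcases hq with rfl | hq
    · rfl
    · exact (fresh q hq hvq hvp).elim
    · exact (fresh p hp hvp hvq).elim
    · exact ih hI' hp hq

lemma pairsAux_congr (h : ∀ u ∉ used, (∀ p ∈ pairsAux n T fuel used, p.2 ≠ u) →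
      (childrenF n T' u).min = (childrenF n T u).min) :
    pairsAux n T' fuel used = pairsAux n T fuel used := by
  induction fuel generalizing used with
  | zero => rfl
  | succ fuel ih =>
    rcases pairsAux_succ_cases (T := T) fuel used with ⟨hU, he⟩ | ⟨a, b, ha, hb, he⟩
    · rw [he, pairsAux_succ_of_eq_empty]
      rw [eq_empty_iff_forall_notMem] at hU ⊢
      intro v hv
      obtain ⟨hvn, hvu, hvc⟩ := mem_availableParents.1 hv
      refine hU v (mem_availableParents.2 ⟨hvn, hvu, ?_⟩)
      rwa [← nonempty_iff_of_min_eq (h v hvu (by simp [he]))]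
    -- below `a` no vertex is the second coordinate of a pair, since its partner would precede `a`
    have below : ∀ v ∉ used, v ≤ a → (childrenF n T' v).min = (childrenF n T v).min := by
      refine fun v hvu hva => h v hvu fun p hp hpv => ?_
      obtain ⟨hp1, hp2⟩ := mem_pairsAux hp
      have := ha.2 (mem_availableParents.2
        ⟨(lt_of_mem_childrenF hp2.1).le.trans (le_of_mem_childrenF hp2.1), hp1, p.2, hp2.1⟩)
      have := lt_of_mem_childrenF hp2.1
      omega
    obtain ⟨han, hau, hac⟩ := mem_availableParents.1 ha.1
    have ha' : IsLeast ↑(availableParents n T' used) a := by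
      refine ⟨mem_availableParents.2 ⟨han, hau, ?_⟩, fun v hv => ?_⟩
      · rwa [nonempty_iff_of_min_eq (below a hau le_rfl)]
      obtain ⟨hvn, hvu, hvc⟩ := mem_availableParents.1 hv
      by_contra! hva
      rw [nonempty_iff_of_min_eq (below v hvu hva.le)] at hvc
      exact absurd (ha.2 (mem_availableParents.2 ⟨hvn, hvu, hvc⟩)) (not_le.2 hva)
    have hb' : IsLeast ↑(childrenF n T' a) b :=
      isLeast_of_min_eq ((below a hau le_rfl).trans (min_eq_of_isLeast hb))
    rw [he, pairsAux_succ_of_isLeast ha' hb', ih]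
    intro u hu hpu
    refine h u (fun h' => hu (mem_insert_of_mem (mem_insert_of_mem h'))) fun p hp => ?_
    rw [he, mem_insert] at hp
    rcases hp with rfl | hp
    · exact fun hbu => hu (hbu ▸ mem_insert_of_mem (mem_insert_self _ _))
    · exact hpu p hp

lemma isLeast_of_mem_MT {p : ℕ × ℕ} (h : p ∈ MT n T) : IsLeast ↑(childrenF n T p.1) p.2 :=
  (mem_pairsAux h).2

lemma lt_of_mem_MT {p : ℕ × ℕ} (h : p ∈ MT n T) : p.1 < p.2 ∧ p.2 ≤ n :=
  ⟨lt_of_mem_childrenF (isLeast_of_mem_MT h).1, le_of_mem_childrenF (isLeast_of_mem_MT h).1⟩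

lemma eq_of_mem_MT {p q : ℕ × ℕ} (hp : p ∈ MT n T) (hq : q ∈ MT n T) {v : ℕ}
    (hvp : v = p.1 ∨ v = p.2) (hvq : v = q.1 ∨ v = q.2) : p = q :=
  eq_of_mem_pairsAux parentClosed_empty hp hq hvp hvq

lemma MT_congr (h : ∀ u, (∀ p ∈ MT n T, p.2 ≠ u) →
      (childrenF n T' u).min = (childrenF n T u).min) :
    MT n T' = MT n T :=
  pairsAux_congr fun u _ => h u

lemma singletonT_add_two_mul_card_MT : singletonT n T + 2 * (MT n T).card = n + 1 := by
  set B := (MT n T).biUnion fun p => ({p.1, p.2} : Finset ℕ)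
  have hB : B.card = 2 * (MT n T).card := by
    rw [card_biUnion, mul_comm, ← smul_eq_mul, ← sum_const]
    · refine sum_congr rfl fun p hp => card_pair (lt_of_mem_MT hp).1.ne
    · intro p hp q hq hpq
      simp only [disjoint_left, mem_insert, mem_singleton]
      exact fun v hvp hvq => hpq (eq_of_mem_MT hp hq hvp hvq)
  have hBsub : B ⊆ range (n + 1) := by
    simp only [B, biUnion_subset, insert_subset_iff, singleton_subset_iff, mem_range]
    exact fun p hp => by have := lt_of_mem_MT hp; omega
  have hS : (range (n + 1)).filter (fun v => ∀ ab ∈ MT n T, v ≠ ab.1 ∧ v ≠ ab.2) =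
      range (n + 1) \ B := by
    ext v
    simp [B, not_or]
  rw [singletonT, hS, card_sdiff_of_subset hBsub, card_range, ← hB,
    Nat.sub_add_cancel (by simpa using card_le_card hBsub)]

end Matching

section OddPairs

variable {T : ITree n} {p : ℕ × ℕ}

def oddPairs (n : ℕ) (T : ITree n) : Finset (ℕ × ℕ) :=
  (MT n T).filter fun ab => Odd (childn n T ab.1 + childn n T ab.2 - 1)

def descentPairs (n : ℕ) (T : ITree n) : Finset (ℕ × ℕ) :=
  (oddPairs n T).filter fun ab => maxOther n T ab ∈ childrenF n T ab.1

def ascentPairs (n : ℕ) (T : ITree n) : Finset (ℕ × ℕ) :=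
  (oddPairs n T).filter fun ab => maxOther n T ab ∈ childrenF n T ab.2

lemma desoT_eq_card_descentPairs : desoT n T = (descentPairs n T).card := by
  rw [desoT, descentPairs, oddPairs, filter_filter]

lemma ascoT_eq_card_ascentPairs : ascoT n T = (ascentPairs n T).card := by
  rw [ascoT, ascentPairs, oddPairs, filter_filter]

lemma mem_MT_of_mem_oddPairs (h : p ∈ oddPairs n T) : p ∈ MT n T := (mem_filter.1 h).1

lemma maxOther_spec (h : p ∈ oddPairs n T) :
    p.2 < maxOther n T p ∧
      (maxOther n T p ∈ childrenF n T p.1 ∨ maxOther n T p ∈ childrenF n T p.2) := by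
  obtain ⟨hp, hodd⟩ := mem_filter.1 h
  have hb := isLeast_of_mem_MT hp
  have hdisj := disjoint_childrenF (T := T) (lt_of_mem_MT hp).1.ne
  have hne : ((childrenF n T p.1 ∪ childrenF n T p.2).erase p.2).Nonempty := by
    rw [← card_pos]
    have := pred_card_le_card_erase (s := childrenF n T p.1 ∪ childrenF n T p.2) (a := p.2)
    rw [card_union_of_disjoint hdisj] at this
    obtain ⟨k, hk⟩ := hodd
    simp only [childn] at hk
    omega
  have hmem := max'_mem _ hne
  rw [← unbotD_max_eq_max' hne 0, ← maxOther, mem_erase, mem_union] at hmem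
  obtain ⟨hne, h1 | h2⟩ := hmem
  · exact ⟨lt_of_le_of_ne (hb.2 h1) (Ne.symm hne), .inl h1⟩
  · exact ⟨lt_of_mem_childrenF h2, .inr h2⟩

lemma maxOther_mem_childrenF_snd_iff (h : p ∈ oddPairs n T) :
    maxOther n T p ∈ childrenF n T p.2 ↔ maxOther n T p ∉ childrenF n T p.1 := by
  have hne := (lt_of_mem_MT (mem_MT_of_mem_oddPairs h)).1.ne
  rcases (maxOther_spec h).2 with h1 | h2
  · exact ⟨fun h2 => (hne (eq_of_mem_childrenF h1 h2)).elim, fun h1' => (h1' h1).elim⟩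
  · exact ⟨fun _ h1 => hne (eq_of_mem_childrenF h1 h2), fun _ => h2⟩

lemma card_oddPairs : (oddPairs n T).card = desoT n T + ascoT n T := by
  rw [desoT_eq_card_descentPairs, ascoT_eq_card_ascentPairs, descentPairs, ascentPairs,
    filter_congr fun _ h => maxOther_mem_childrenF_snd_iff h, card_filter_add_card_filter_not]

lemma card_MT : (MT n T).card = evenpT n T + (oddPairs n T).card := by
  simp only [evenpT, oddPairs, ← Nat.not_even_iff_odd, card_filter_add_card_filter_not]

lemma singletonT_add_two_mul_evenpT_add_desoT_add_ascoT :
    singletonT n T + 2 * (evenpT n T + desoT n T + ascoT n T) = n + 1 := by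
  rw [add_assoc, ← card_oddPairs, ← card_MT, singletonT_add_two_mul_card_MT]

end OddPairs

section Toggle

/-- For each `p ∈ S`, the vertex `maxOther n T p` is moved from whichever of `p.1`, `p.2` is
its parent to the other one; the `min … k` only keeps the definition total. -/
noncomputable def toggle (n : ℕ) (T : ITree n) (S : Finset (ℕ × ℕ)) : ITree n := fun k =>
  if h : ∃ p ∈ S, maxOther n T p = (k : ℕ) + 1 then
    ⟨min (h.choose.1 + h.choose.2 - T k) k, Nat.lt_succ_of_le (min_le_right _ _)⟩
  else T k

variable {T : ITree n} {S : Finset (ℕ × ℕ)} {p q : ℕ × ℕ} {u w : ℕ}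

lemma par_toggle_of_forall_ne (hw : ∀ p ∈ S, maxOther n T p ≠ w) :
    par n (toggle n T S) w = par n T w := by
  by_cases hb : 1 ≤ w ∧ w - 1 < n
  · obtain ⟨k, rfl⟩ : ∃ k : Fin n, w = k + 1 := ⟨⟨w - 1, hb.2⟩, by simp; omega⟩
    rw [par_succ, par_succ, toggle, dif_neg]
    exact fun ⟨p, hp, he⟩ => hw p hp he
  · rw [par, par, dif_neg hb, dif_neg hb]

lemma mem_childrenF_toggle_of_forall_ne (hw : ∀ p ∈ S, maxOther n T p ≠ w) :
    w ∈ childrenF n (toggle n T S) u ↔ w ∈ childrenF n T u := by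
  simp only [mem_childrenF, par_toggle_of_forall_ne hw]

variable (hS : S ⊆ oddPairs n T)
include hS

lemma par_maxOther_eq_or_eq (hp : p ∈ S) :
    par n T (maxOther n T p) = p.1 ∨ par n T (maxOther n T p) = p.2 :=
  (maxOther_spec (hS hp)).2.imp par_of_mem_childrenF par_of_mem_childrenF

lemma maxOther_injOn : Set.InjOn (maxOther n T) S := fun _ ha _ hb he =>
  eq_of_mem_MT (mem_MT_of_mem_oddPairs (hS ha)) (mem_MT_of_mem_oddPairs (hS hb))
    (par_maxOther_eq_or_eq hS ha) (he ▸ par_maxOther_eq_or_eq hS hb)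

lemma maxOther_le (hp : p ∈ S) : maxOther n T p ≤ n := by
  rcases (maxOther_spec (hS hp)).2 with h | h <;> exact le_of_mem_childrenF h

lemma par_toggle_maxOther (hp : p ∈ S) :
    par n (toggle n T S) (maxOther n T p) = p.1 + p.2 - par n T (maxOther n T p) := by
  have hpar := par_maxOther_eq_or_eq hS hp
  have hlt := (maxOther_spec (hS hp)).1
  have hm := maxOther_le hS hp
  obtain ⟨k, hk⟩ : ∃ k : Fin n, maxOther n T p = k + 1 :=
    ⟨⟨maxOther n T p - 1, by omega⟩, by simp; omega⟩
  have hex : ∃ q ∈ S, maxOther n T q = (k : ℕ) + 1 := ⟨p, hp, hk⟩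
  have hchoose : hex.choose = p :=
    maxOther_injOn hS hex.choose_spec.1 hp (hex.choose_spec.2.trans hk.symm)
  rw [hk, par_succ, par_succ, toggle, dif_pos hex]
  simp only [hchoose]
  rw [hk, par_succ] at hpar
  have := (lt_of_mem_MT (mem_MT_of_mem_oddPairs (hS hp))).1
  omega

lemma maxOther_mem_childrenF_toggle_iff (hq : q ∈ S) (hu : u = q.1 ∨ u = q.2) :
    maxOther n T q ∈ childrenF n (toggle n T S) u ↔ maxOther n T q ∉ childrenF n T u := by
  have hlt := (maxOther_spec (hS hq)).1
  have hm := maxOther_le hS hq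
  have hpar := par_maxOther_eq_or_eq hS hq
  have hq12 := (lt_of_mem_MT (mem_MT_of_mem_oddPairs (hS hq))).1
  simp only [mem_childrenF, par_toggle_maxOther hS hq]
  omega

lemma mem_pair_of_maxOther_mem_childrenF (hq : q ∈ S)
    (h : maxOther n T q ∈ childrenF n T u ∨ maxOther n T q ∈ childrenF n (toggle n T S) u) :
    u = q.1 ∨ u = q.2 := by
  have hpar := par_maxOther_eq_or_eq hS hq
  rcases h with h | h <;> have := par_of_mem_childrenF h
  · omega
  · rw [par_toggle_maxOther hS hq] at this
    omega

lemma eq_of_maxOther_mem_childrenF (hq : q ∈ S) (hp : p ∈ MT n T) (hu : u = p.1 ∨ u = p.2)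
    (h : maxOther n T q ∈ childrenF n T u ∨ maxOther n T q ∈ childrenF n (toggle n T S) u) :
    q = p :=
  eq_of_mem_MT (mem_MT_of_mem_oddPairs (hS hq)) hp (mem_pair_of_maxOther_mem_childrenF hS hq h) hu

lemma childrenF_toggle_of_forall_ne (hu : ∀ q ∈ S, u ≠ q.1 ∧ u ≠ q.2) :
    childrenF n (toggle n T S) u = childrenF n T u := by
  ext w
  by_cases hw : ∃ q ∈ S, maxOther n T q = w
  · obtain ⟨q, hq, rfl⟩ := hw
    have key := fun h =>
      (mem_pair_of_maxOther_mem_childrenF hS hq h).elim (hu q hq).1 (hu q hq).2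
    exact iff_of_false (fun h => key (.inr h)) (fun h => key (.inl h))
  · push Not at hw
    exact mem_childrenF_toggle_of_forall_ne hw

lemma childrenF_toggle_union (hp : p ∈ S) :
    childrenF n (toggle n T S) p.1 ∪ childrenF n (toggle n T S) p.2 =
      childrenF n T p.1 ∪ childrenF n T p.2 := by
  ext w
  simp only [mem_union]
  by_cases hw : ∃ q ∈ S, maxOther n T q = w
  · obtain ⟨q, hq, rfl⟩ := hw
    by_cases hqp : q = p
    · subst hqp
      rw [maxOther_mem_childrenF_toggle_iff hS hq (.inl rfl),
        maxOther_mem_childrenF_toggle_iff hS hq (.inr rfl),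
        maxOther_mem_childrenF_snd_iff (hS hq)]
      tauto
    have hpMT := mem_MT_of_mem_oddPairs (hS hp)
    constructor <;> rintro (h | h) <;>
      first
      | exact (hqp (eq_of_maxOther_mem_childrenF hS hq hpMT (.inl rfl) (by tauto))).elim
      | exact (hqp (eq_of_maxOther_mem_childrenF hS hq hpMT (.inr rfl) (by tauto))).elim
  · push Not at hw
    rw [mem_childrenF_toggle_of_forall_ne hw, mem_childrenF_toggle_of_forall_ne hw]

lemma isLeast_childrenF_toggle (hp : p ∈ S) :
    IsLeast ↑(childrenF n (toggle n T S) p.1) p.2 := by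
  have hpMT := mem_MT_of_mem_oddPairs (hS hp)
  have hb := isLeast_of_mem_MT hpMT
  have hlt := (maxOther_spec (hS hp)).1
  refine ⟨(mem_childrenF_toggle_of_forall_ne fun q hq he => ?_).2 hb.1, fun z hz => ?_⟩
  · rw [eq_of_maxOther_mem_childrenF hS hq hpMT (.inl rfl) (.inl (he ▸ hb.1))] at he
    omega
  by_cases hz' : ∃ q ∈ S, maxOther n T q = z
  · obtain ⟨q, hq, rfl⟩ := hz'
    rw [eq_of_maxOther_mem_childrenF hS hq hpMT (.inl rfl) (.inr hz)]
    exact hlt.le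
  · push Not at hz'
    exact hb.2 ((mem_childrenF_toggle_of_forall_ne hz').1 hz)

lemma childrenF_toggle_of_mem_MT_of_notMem (hq : q ∈ MT n T) (hqS : q ∉ S)
    (hu : u = q.1 ∨ u = q.2) :
    childrenF n (toggle n T S) u = childrenF n T u :=
  childrenF_toggle_of_forall_ne hS fun p hp => by
    have := fun hpu => hqS (eq_of_mem_MT hq (mem_MT_of_mem_oddPairs (hS hp)) hu hpu ▸ hp)
    tauto

lemma childrenF_toggle_union_of_mem_MT (hq : q ∈ MT n T) :
    childrenF n (toggle n T S) q.1 ∪ childrenF n (toggle n T S) q.2 =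
      childrenF n T q.1 ∪ childrenF n T q.2 := by
  by_cases hqS : q ∈ S
  · exact childrenF_toggle_union hS hqS
  · rw [childrenF_toggle_of_mem_MT_of_notMem hS hq hqS (.inl rfl),
      childrenF_toggle_of_mem_MT_of_notMem hS hq hqS (.inr rfl)]

lemma childn_add_childn_toggle (hq : q ∈ MT n T) :
    childn n (toggle n T S) q.1 + childn n (toggle n T S) q.2 =
      childn n T q.1 + childn n T q.2 := by
  have hne := (lt_of_mem_MT hq).1.ne
  simp only [childn, ← card_union_of_disjoint (disjoint_childrenF hne),
    childrenF_toggle_union_of_mem_MT hS hq]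

lemma maxOther_toggle (hq : q ∈ MT n T) : maxOther n (toggle n T S) q = maxOther n T q := by
  rw [maxOther, maxOther, childrenF_toggle_union_of_mem_MT hS hq]

lemma MT_toggle : MT n (toggle n T S) = MT n T := by
  refine MT_congr fun u hu => ?_
  by_cases hu1 : ∃ p ∈ S, u = p.1
  · obtain ⟨p, hp, rfl⟩ := hu1
    rw [min_eq_of_isLeast (isLeast_childrenF_toggle hS hp),
      min_eq_of_isLeast (isLeast_of_mem_MT (mem_MT_of_mem_oddPairs (hS hp)))]
  · refine congrArg _ (childrenF_toggle_of_forall_ne hS fun p hp => ⟨?_, ?_⟩)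
    · exact fun h => hu1 ⟨p, hp, h⟩
    · exact fun h => hu p (mem_MT_of_mem_oddPairs (hS hp)) h.symm

lemma oddPairs_toggle : oddPairs n (toggle n T S) = oddPairs n T := by
  rw [oddPairs, oddPairs, MT_toggle hS]
  exact filter_congr fun q hq => by rw [childn_add_childn_toggle hS hq]

lemma evenpT_toggle : evenpT n (toggle n T S) = evenpT n T := by
  rw [evenpT, evenpT, MT_toggle hS]
  exact congrArg card (filter_congr fun q hq => by rw [childn_add_childn_toggle hS hq])

lemma singletonT_toggle : singletonT n (toggle n T S) = singletonT n T := by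
  rw [singletonT, singletonT, MT_toggle hS]

lemma ascentPairs_toggle :
    ascentPairs n (toggle n T S) = S ∩ descentPairs n T ∪ ascentPairs n T \ S := by
  ext q
  simp only [ascentPairs, descentPairs, oddPairs_toggle hS, mem_union, mem_inter, mem_sdiff,
    mem_filter]
  by_cases hq : q ∈ oddPairs n T
  · rw [maxOther_toggle hS (mem_MT_of_mem_oddPairs hq)]
    by_cases hqS : q ∈ S
    · rw [maxOther_mem_childrenF_toggle_iff hS hqS (.inr rfl), maxOther_mem_childrenF_snd_iff hq]
      tauto
    · rw [childrenF_toggle_of_mem_MT_of_notMem hS (mem_MT_of_mem_oddPairs hq) hqS (.inr rfl)]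
      tauto
  · tauto

lemma toggle_toggle : toggle n (toggle n T S) S = T := by
  have hS' : S ⊆ oddPairs n (toggle n T S) := oddPairs_toggle hS ▸ hS
  funext k
  ext
  rw [← par_succ, ← par_succ]
  by_cases hw : ∃ p ∈ S, maxOther n T p = k + 1
  · obtain ⟨p, hp, hk⟩ := hw
    have hm := maxOther_toggle hS (mem_MT_of_mem_oddPairs (hS hp))
    have h1 := par_toggle_maxOther hS' hp
    rw [hm, par_toggle_maxOther hS hp] at h1
    have := par_maxOther_eq_or_eq hS hp
    rw [← hk]
    omega
  · push Not at hw
    have hw' : ∀ p ∈ S, maxOther n (toggle n T S) p ≠ k + 1 := fun p hp => by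
      rw [maxOther_toggle hS (mem_MT_of_mem_oddPairs (hS hp))]
      exact hw p hp
    rw [par_toggle_of_forall_ne hw', par_toggle_of_forall_ne hw]

end Toggle

section Sums

variable {T : ITree n} {S : Finset (ℕ × ℕ)}

lemma ascentPairs_eq_empty_iff : ascentPairs n T = ∅ ↔ ascoT n T = 0 := by
  rw [ascoT_eq_card_ascentPairs, card_eq_zero]

lemma ascentPairs_toggle_of_eq_empty (hT : ascentPairs n T = ∅) (hS : S ⊆ oddPairs n T) :
    ascentPairs n (toggle n T S) = S := by
  rw [ascentPairs_toggle hS, hT, empty_sdiff, union_empty, inter_eq_left]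
  refine fun q hq => mem_filter.2 ⟨hS hq, not_not.1 fun h => ?_⟩
  rw [← maxOther_mem_childrenF_snd_iff (hS hq)] at h
  exact notMem_empty q (hT ▸ mem_filter.2 ⟨hS hq, h⟩)

lemma ascentPairs_subset_oddPairs : ascentPairs n T ⊆ oddPairs n T := filter_subset _ _

lemma ascentPairs_toggle_ascentPairs : ascentPairs n (toggle n T (ascentPairs n T)) = ∅ := by
  rw [ascentPairs_toggle ascentPairs_subset_oddPairs, sdiff_self, bot_eq_empty, union_empty,
    ← disjoint_iff_inter_eq_empty, ascentPairs, descentPairs, disjoint_filter]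
  exact fun q hq => (maxOther_mem_childrenF_snd_iff hq).1

lemma sum_sum_powerset_toggle {M : Type*} [AddCommMonoid M] (f : ITree n → M) :
    ∑ T ∈ univ.filter (fun T : ITree n => ascoT n T = 0),
      ∑ S ∈ (oddPairs n T).powerset, f (toggle n T S) = ∑ T, f T := by
  rw [sum_sigma']
  refine sum_bij' (fun x _ => toggle n x.1 x.2)
    (fun T _ => ⟨toggle n T (ascentPairs n T), ascentPairs n T⟩) (fun _ _ => mem_univ _)
    (fun T _ => ?_) (fun x hx => ?_) (fun T _ => toggle_toggle ascentPairs_subset_oddPairs)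
    (fun _ _ => rfl)
  · simp only [mem_sigma, mem_filter, mem_univ, true_and, mem_powerset,
      ← ascentPairs_eq_empty_iff, oddPairs_toggle ascentPairs_subset_oddPairs]
    exact ⟨ascentPairs_toggle_ascentPairs, ascentPairs_subset_oddPairs⟩
  · simp only [mem_sigma, mem_filter, mem_univ, true_and, mem_powerset,
      ← ascentPairs_eq_empty_iff] at hx
    rw [ascentPairs_toggle_of_eq_empty hx.1 hx.2, toggle_toggle hx.2]

lemma sum_powerset_toggle_monomial {R : Type*} [CommSemiring R] (hT : ascoT n T = 0)
    (x c a b : R) :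
    ∑ S ∈ (oddPairs n T).powerset, x ^ singletonT n (toggle n T S) *
        c ^ evenpT n (toggle n T S) * a ^ desoT n (toggle n T S) * b ^ ascoT n (toggle n T S) =
      x ^ (n + 1 - 2 * (evenpT n T + desoT n T)) * c ^ evenpT n T * (a + b) ^ desoT n T := by
  have hsing := singletonT_add_two_mul_evenpT_add_desoT_add_ascoT (T := T)
  have hodd := card_oddPairs (T := T)
  rw [hT, add_zero] at hsing hodd
  rw [← hodd, add_comm a, ← sum_pow_mul_eq_add_pow, mul_sum]
  refine sum_congr rfl fun S hS => ?_
  rw [mem_powerset] at hS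
  have hasc : ascoT n (toggle n T S) = S.card := by
    rw [ascoT_eq_card_ascentPairs,
      ascentPairs_toggle_of_eq_empty (ascentPairs_eq_empty_iff.2 hT) hS]
  have hdes := card_oddPairs (T := toggle n T S)
  rw [oddPairs_toggle hS, hasc] at hdes
  have hdes' : desoT n (toggle n T S) = (oddPairs n T).card - S.card := by omega
  have hsing' : singletonT n T = n + 1 - 2 * (evenpT n T + (oddPairs n T).card) := by omega
  rw [singletonT_toggle hS, evenpT_toggle hS, hasc, hdes', hsing']
  ring

lemma sum_theta_nsmul {M : Type*} [AddCommMonoid M] (g : ℕ → ℕ → M) :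
    ∑ i ∈ range (n + 2), ∑ j ∈ range (n + 2), theta n i j • g i j =
      ∑ T ∈ univ.filter (fun T : ITree n => ascoT n T = 0), g (evenpT n T) (desoT n T) := by
  rw [← sum_product' (f := fun i j => theta n i j • g i j),
    ← sum_fiberwise_of_maps_to (g := fun T => (evenpT n T, desoT n T))
      (t := range (n + 2) ×ˢ range (n + 2))]
  · refine sum_congr rfl fun ij _ => ?_
    have hfiber : ∀ T ∈ (univ.filter fun T : ITree n => ascoT n T = 0).filter
        (fun T => (evenpT n T, desoT n T) = ij), g (evenpT n T) (desoT n T) = g ij.1 ij.2 :=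
      fun T hT => by rw [← (mem_filter.1 hT).2]
    rw [sum_congr rfl hfiber, sum_const, filter_filter, theta]
    congr 2
    refine filter_congr fun T _ => ?_
    rw [Prod.ext_iff]
    tauto
  · intro T _
    have := singletonT_add_two_mul_evenpT_add_desoT_add_ascoT (T := T)
    simp only [mem_product, mem_range]
    omega

end Sums

end IncreasingTree

/-- Here `x = X 0`, `a = X 1`, `b = X 2` and `c = X 3`. -/
theorem stmt18 (n : ℕ) :
    (∑ T : ITree n,
        X 0 ^ singletonT n T * X 3 ^ evenpT n T * X 1 ^ desoT n T *
          X 2 ^ ascoT n T : MvPolynomial (Fin 4) ℤ) =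
      ∑ i ∈ Finset.range (n + 2), ∑ j ∈ Finset.range (n + 2),
        theta n i j •
          (X 0 ^ (n + 1 - 2 * (i + j)) * X 3 ^ i * (X 1 + X 2) ^ j) := by
  rw [IncreasingTree.sum_theta_nsmul, ← IncreasingTree.sum_sum_powerset_toggle]
  exact sum_congr rfl fun T hT =>
    IncreasingTree.sum_powerset_toggle_monomial (mem_filter.1 hT).2 _ _ _ _
end
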